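/- arXiv:2011.05181 — 14 statements merged into one kernel-verified Lean document; each statement's English description precedes it below -/
import Mathlib

section
/- Fix an integer m ≥ 1 and let L = m^m − (m−1)^m. Define bag sizes a_k = (m−1)^{m−k} · m^{k−1} / L for k = 1, …, m. Then ∑_{k=1}^m a_k = 1, and for every speed vector s : Fin m → ℝ with s_i ≥ 0 for all i and ∑_{i=1}^m s_i = 1, there exists an assignment σ : Fin m → Fin m of bags to machines such that for every machine i, ∑_{k : σ(k) = i} a_k ≤ (m^m / L) · s_i. (In other words, the algorithm SAND is ρ(m)-robust for speed-robust scheduling with infinitesimal jobs, where ρ(m) = m^m/(m^m − (m−1)^m).) -/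
open Finset

lemma greedy_assign (m : ℕ) (hm : 1 ≤ m) (b : Fin m → ℝ)
    (hb : ∀ k : Fin m, b k = ((m : ℝ) - 1) ^ (m - 1 - (k : ℕ)) * (m : ℝ) ^ (k : ℕ)) :
    ∀ j : ℕ, j ≤ m → ∀ c : Fin m → ℝ, (∀ i, 0 ≤ c i) →
      ((m : ℝ) ^ j * ((m : ℝ) - 1) ^ (m - j) ≤ ∑ i, c i) →
      ∃ σ : Fin m → Fin m, ∀ i : Fin m,
        ∑ k ∈ univ.filter (fun k : Fin m => (k : ℕ) < j ∧ σ k = i), b k ≤ c i := by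
  have hm1 : (0 : ℝ) ≤ (m : ℝ) - 1 := by
    have : (1 : ℝ) ≤ (m : ℝ) := by exact_mod_cast hm
    linarith
  have hmpos : (0 : ℝ) < (m : ℝ) := by positivity
  intro j
  induction j with
  | zero =>
    intro _ c hc _
    refine ⟨fun _ => ⟨0, hm⟩, fun i => ?_⟩
    have : univ.filter (fun k : Fin m => (k : ℕ) < 0 ∧ (⟨0, hm⟩ : Fin m) = i) = ∅ := by
      apply Finset.filter_false_of_mem; intro k _; simp
    simp only [this, Finset.sum_empty]
    exact hc i
  | succ j ih =>
    intro hj c hc hsum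
    have hjm : j < m := hj
    set jf : Fin m := ⟨j, hjm⟩ with hjf
    have hbj : b jf = ((m : ℝ) - 1) ^ (m - 1 - j) * (m : ℝ) ^ j := hb jf
    have hbjnn : 0 ≤ b jf := by rw [hbj]; positivity
    -- find a machine with capacity at least b jf
    have hex : ∃ i₀ : Fin m, b jf ≤ c i₀ := by
      by_contra h
      push_neg at h
      have hne : (univ : Finset (Fin m)).Nonempty := by
        exact ⟨⟨0, hm⟩, mem_univ _⟩
      have hlt : ∑ i, c i < ∑ _i : Fin m, b jf :=
        Finset.sum_lt_sum_of_nonempty hne (fun i _ => h i)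
      have hcard : ∑ _i : Fin m, b jf = (m : ℝ) * b jf := by
        simp [Finset.sum_const, mul_comm]
      have hkey : (m : ℝ) ^ (j + 1) * ((m : ℝ) - 1) ^ (m - (j + 1)) = (m : ℝ) * b jf := by
        rw [hbj]
        have : m - (j + 1) = m - 1 - j := by omega
        rw [this]; ring
      rw [hcard] at hlt
      rw [hkey] at hsum
      linarith
    obtain ⟨i₀, hi₀⟩ := hex
    set c' : Fin m → ℝ := Function.update c i₀ (c i₀ - b jf) with hc'
    have hc'nn : ∀ i, 0 ≤ c' i := by
      intro i
      rcases eq_or_ne i i₀ with rfl | h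
      · simp [hc', Function.update_self]; linarith
      · simp [hc', Function.update_of_ne h]; exact hc i
    have hsum' : (m : ℝ) ^ j * ((m : ℝ) - 1) ^ (m - j) ≤ ∑ i, c' i := by
      have hupd : ∑ i, c' i = ∑ i, c i - b jf := by
        rw [hc', Finset.sum_update_of_mem (mem_univ i₀)]
        have : ∑ i ∈ univ \ {i₀}, c i = ∑ i, c i - c i₀ := by
          rw [Finset.sum_sdiff_eq_sub (by simp)]
          simp
        rw [this]; ring
      rw [hupd]
      have hkey : (m : ℝ) ^ (j + 1) * ((m : ℝ) - 1) ^ (m - (j + 1))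
          = (m : ℝ) * b jf := by
        rw [hbj]
        have : m - (j + 1) = m - 1 - j := by omega
        rw [this]; ring
      have hstep : (m : ℝ) ^ j * ((m : ℝ) - 1) ^ (m - j) = ((m : ℝ) - 1) * b jf := by
        rw [hbj]
        have h1 : m - j = (m - 1 - j) + 1 := by omega
        rw [h1, pow_succ]; ring
      rw [hstep]
      rw [hkey] at hsum
      linarith
    obtain ⟨σ, hσ⟩ := ih (le_of_lt hjm) c' hc'nn hsum'
    refine ⟨fun k => if k = jf then i₀ else σ k, fun i => ?_⟩
    have hsplit : univ.filter (fun k : Fin m => (k : ℕ) < j + 1 ∧ (if k = jf then i₀ else σ k) = i)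
        = (univ.filter (fun k : Fin m => (k : ℕ) < j ∧ σ k = i)) ∪
          (univ.filter (fun k : Fin m => k = jf ∧ i₀ = i)) := by
      ext k
      simp only [mem_filter, mem_union, mem_univ, true_and]
      constructor
      · rintro ⟨hk, hval⟩
        rcases eq_or_ne k jf with rfl | hne
        · right; simp only [if_pos rfl] at hval; exact ⟨rfl, hval⟩
        · left
          refine ⟨?_, ?_⟩
          · have : (k : ℕ) ≠ j := fun h => hne (Fin.ext h)
            omega
          · simpa [if_neg hne] using hval
      · rintro (⟨hk, hval⟩ | ⟨rfl, hval⟩)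
        · have hne : k ≠ jf := by
            intro h; subst h; simp [hjf] at hk
          exact ⟨by omega, by simpa [if_neg hne] using hval⟩
        · exact ⟨Nat.lt_succ_self j, by simpa using hval⟩
    have hdisj : Disjoint (univ.filter (fun k : Fin m => (k : ℕ) < j ∧ σ k = i))
        (univ.filter (fun k : Fin m => k = jf ∧ i₀ = i)) := by
      rw [Finset.disjoint_filter]
      rintro k _ ⟨hk, _⟩ ⟨rfl, _⟩
      simp [hjf] at hk
    rw [hsplit, Finset.sum_union hdisj]
    have h2 : ∑ k ∈ univ.filter (fun k : Fin m => k = jf ∧ i₀ = i), b k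
        = if i₀ = i then b jf else 0 := by
      rcases eq_or_ne i₀ i with h | h
      · subst h
        have : univ.filter (fun k : Fin m => k = jf ∧ i₀ = i₀) = {jf} := by
          ext k; simp
        rw [this]; simp
      · have : univ.filter (fun k : Fin m => k = jf ∧ i₀ = i) = ∅ := by
          apply Finset.filter_false_of_mem; intro k _; simp [h]
        rw [this]; simp [h]
    rw [h2]
    rcases eq_or_ne i₀ i with h | h
    · subst h
      have := hσ i₀
      simp only [hc', Function.update_self] at this
      rw [if_pos rfl]
      linarith
    · have := hσ i
      simp only [hc', Function.update_of_ne (Ne.symm h)] at this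
      simp only [if_neg h, add_zero]
      linarith

/-- SAND is ρ(m)-robust for speed-robust scheduling with infinitesimal jobs,
where ρ(m) = m^m/(m^m − (m−1)^m). Bag sizes a_k = (m−1)^{m−k}·m^{k−1}/L
(here 0-indexed: a_k = (m−1)^{m−1−k}·m^k / L). -/
theorem sand_is_rho_robust (m : ℕ) (hm : 1 ≤ m)
    (L : ℝ) (hL : L = (m : ℝ) ^ m - ((m : ℝ) - 1) ^ m)
    (a : Fin m → ℝ)
    (ha : ∀ k : Fin m, a k = ((m : ℝ) - 1) ^ (m - 1 - (k : ℕ)) * (m : ℝ) ^ (k : ℕ) / L) :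
    (∑ k, a k = 1) ∧
    ∀ s : Fin m → ℝ, (∀ i, 0 ≤ s i) → (∑ i, s i = 1) →
      ∃ σ : Fin m → Fin m, ∀ i : Fin m,
        ∑ k ∈ Finset.univ.filter (fun k => σ k = i), a k ≤ ((m : ℝ) ^ m / L) * s i := by
  have hm1 : (0 : ℝ) ≤ (m : ℝ) - 1 := by
    have : (1 : ℝ) ≤ (m : ℝ) := by exact_mod_cast hm
    linarith
  have hLpos : 0 < L := by
    rw [hL]
    have h1 : ((m : ℝ) - 1) ^ m < (m : ℝ) ^ m := by
      apply pow_lt_pow_left₀ (by linarith) hm1 (by omega)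
    linarith
  set b : Fin m → ℝ := fun k => ((m : ℝ) - 1) ^ (m - 1 - (k : ℕ)) * (m : ℝ) ^ (k : ℕ) with hbdef
  have hab : ∀ k, a k = b k / L := fun k => ha k
  have hbsum : ∑ k, b k = L := by
    rw [hL]
    have := Commute.geom_sum₂_mul (R := ℝ) (Commute.all (m : ℝ) ((m : ℝ) - 1)) m
    -- (∑ i in range m, x ^ i * y ^ (m - 1 - i)) * (x - y) = x ^ m - y ^ m
    rw [Fin.sum_univ_eq_sum_range (fun k => ((m : ℝ) - 1) ^ (m - 1 - k) * (m : ℝ) ^ k)]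
    have h2 : ∑ k ∈ Finset.range m, ((m : ℝ) - 1) ^ (m - 1 - k) * (m : ℝ) ^ k
        = ∑ k ∈ Finset.range m, (m : ℝ) ^ k * ((m : ℝ) - 1) ^ (m - 1 - k) := by
      apply Finset.sum_congr rfl; intros; ring
    rw [h2]
    have h3 : (m : ℝ) - ((m : ℝ) - 1) = 1 := by ring
    calc ∑ k ∈ Finset.range m, (m : ℝ) ^ k * ((m : ℝ) - 1) ^ (m - 1 - k)
        = (∑ k ∈ Finset.range m, (m : ℝ) ^ k * ((m : ℝ) - 1) ^ (m - 1 - k)) * ((m : ℝ) - ((m : ℝ) - 1)) := by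
          rw [h3, mul_one]
      _ = (m : ℝ) ^ m - ((m : ℝ) - 1) ^ m := this
  constructor
  · have h1 : ∑ k, a k = ∑ k, b k / L := Finset.sum_congr rfl (fun k _ => hab k)
    rw [h1, ← Finset.sum_div, hbsum, div_self (ne_of_gt hLpos)]
  · intro s hs hssum
    have key := greedy_assign m hm b (fun k => rfl) m le_rfl (fun i => (m : ℝ) ^ m * s i)
      (fun i => mul_nonneg (by positivity) (hs i))
      (by
        rw [← Finset.mul_sum, hssum, mul_one, Nat.sub_self, pow_zero, mul_one])
    obtain ⟨σ, hσ⟩ := key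
    refine ⟨σ, fun i => ?_⟩
    have heq : Finset.univ.filter (fun k : Fin m => σ k = i)
        = Finset.univ.filter (fun k : Fin m => (k : ℕ) < m ∧ σ k = i) := by
      ext k; simp [k.isLt]
    rw [heq]
    have hsum_ab : ∑ k ∈ Finset.univ.filter (fun k : Fin m => (k : ℕ) < m ∧ σ k = i), a k
        = (∑ k ∈ Finset.univ.filter (fun k : Fin m => (k : ℕ) < m ∧ σ k = i), b k) / L := by
      rw [Finset.sum_div]; exact Finset.sum_congr rfl (fun k _ => hab k)
    rw [hsum_ab]
    rw [div_le_iff₀ hLpos]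
    have := hσ i
    calc ∑ k ∈ Finset.univ.filter (fun k : Fin m => (k : ℕ) < m ∧ σ k = i), b k
        ≤ (m : ℝ) ^ m * s i := this
      _ = (m : ℝ) ^ m / L * s i * L := by field_simp
end

section
/- Fix an integer m ≥ 1 and let a : Fin m → ℝ be any bag sizes with a_k ≥ 0 for all k and ∑_{k=1}^m a_k = 1. Then there exists a speed vector s : Fin m → ℝ with s_i > 0 for all i and ∑_{i=1}^m s_i = 1 such that for every assignment σ : Fin m → Fin m there is a machine i with ∑_{k : σ(k) = i} a_k ≥ (m^m/(m^m − (m−1)^m)) · s_i. (No algorithm for speed-robust scheduling with infinitesimal jobs has robustness factor smaller than ρ(m) = m^m/(m^m − (m−1)^m).) -/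
open Finset

/-- Geometric sum for `c = (m-1)/m`. -/
lemma speedrobust_geom_sum (m : ℕ) (hm : 1 ≤ m) (n : ℕ) :
    ∑ j ∈ Finset.range n, (((m:ℝ)-1)/m)^j = m * (1 - (((m:ℝ)-1)/m)^n) := by
  have hm0 : ((m:ℝ)) ≠ 0 := by
    have : (0:ℝ) < m := by exact_mod_cast hm
    linarith
  have hmc : (m:ℝ) * (((m:ℝ)-1)/m) = (m:ℝ) - 1 := by field_simp
  induction n with
  | zero => simp
  | succ n ih =>
    rw [Finset.sum_range_succ, ih]
    have : (((m:ℝ)-1)/m)^(n+1) = (((m:ℝ)-1)/m)^n * (((m:ℝ)-1)/m) := by ring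
    rw [this]
    linear_combination ((((m:ℝ)-1)/m)^n) * hmc

/-- Key lemma: for monotone bag sizes summing to 1 there is an index `j` with
`ρ ≤ (suffix sum from j) + (m-1)·b j`. -/
lemma speedrobust_key (m : ℕ) (hm : 2 ≤ m) (b : Fin m → ℝ) (hmono : Monotone b)
    (hsum : ∑ i, b i = 1) :
    ∃ j : Fin m, (m:ℝ)^m / ((m:ℝ)^m - ((m:ℝ)-1)^m)
      ≤ (∑ i ∈ Finset.Ici j, b i) + ((m:ℝ)-1) * b j := by
  by_contra hcon
  push_neg at hcon
  have hm1 : 1 ≤ m := by omega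
  have hm0 : (0:ℝ) < m := by exact_mod_cast (by omega : 0 < m)
  have hm1' : (1:ℝ) ≤ (m:ℝ) - 1 := by
    have : (2:ℝ) ≤ (m:ℝ) := by exact_mod_cast hm
    linarith
  set c : ℝ := ((m:ℝ)-1)/m with hc
  have hc0 : 0 < c := by
    apply div_pos (by linarith) hm0
  have hmc : (m:ℝ) * c = (m:ℝ) - 1 := by
    rw [hc]; field_simp
  have hd : (0:ℝ) < (m:ℝ)^m - ((m:ℝ)-1)^m := by
    have h1 : ((m:ℝ)-1)^m < (m:ℝ)^m := by
      apply pow_lt_pow_left₀ (by linarith) (by linarith) (by omega)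
    linarith
  set ρ : ℝ := (m:ℝ)^m / ((m:ℝ)^m - ((m:ℝ)-1)^m) with hρ
  -- ρ * (m * (1 - c^m)) = m
  have hcm : c^m = ((m:ℝ)-1)^m / (m:ℝ)^m := by rw [hc, div_pow]
  have hmpow : (0:ℝ) < (m:ℝ)^m := by positivity
  have hρgeom : ρ * ((m:ℝ) * (1 - c^m)) = m := by
    rw [hρ, hcm]
    field_simp
  -- the Iic partial geometric sums
  have hIic : ∀ i : Fin m, ∑ j ∈ Finset.Iic i, c^(j:ℕ) = m * (1 - c^((i:ℕ)+1)) := by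
    intro i
    have h1 : Finset.Iic i = Finset.univ.filter (fun (j : Fin m) => (j:ℕ) ≤ (i:ℕ)) := by
      ext j
      simp only [Finset.mem_Iic, Finset.mem_filter, Finset.mem_univ, true_and, Fin.le_def]
    rw [h1, Finset.sum_filter]
    rw [Fin.sum_univ_eq_sum_range (fun n => if n ≤ (i:ℕ) then c^n else 0) m]
    rw [← Finset.sum_filter]
    have h2 : (Finset.range m).filter (fun n => n ≤ (i:ℕ)) = Finset.range ((i:ℕ)+1) := by
      ext n
      simp only [Finset.mem_filter, Finset.mem_range]
      have := i.isLt
      omega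
    rw [h2, speedrobust_geom_sum m hm1]
  -- swap the double sum
  have hswap : ∑ j : Fin m, ∑ i ∈ Finset.Ici j, c^(j:ℕ) * b i
      = ∑ i : Fin m, ∑ j ∈ Finset.Iic i, c^(j:ℕ) * b i := by
    apply Finset.sum_comm'
    intro x y
    simp [Finset.mem_Ici, Finset.mem_Iic]
  -- LHS equals m
  have hL : ∑ j : Fin m, c^(j:ℕ) * ((∑ i ∈ Finset.Ici j, b i) + ((m:ℝ)-1) * b j)
      = m := by
    have e1 : ∀ j : Fin m, c^(j:ℕ) * ((∑ i ∈ Finset.Ici j, b i) + ((m:ℝ)-1) * b j)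
        = (∑ i ∈ Finset.Ici j, c^(j:ℕ) * b i) + c^(j:ℕ) * (((m:ℝ)-1) * b j) := by
      intro j; rw [mul_add, Finset.mul_sum]
    rw [Finset.sum_congr rfl (fun j _ => e1 j), Finset.sum_add_distrib, hswap]
    have e2 : ∀ i : Fin m, ∑ j ∈ Finset.Iic i, c^(j:ℕ) * b i
        = (m * (1 - c^((i:ℕ)+1))) * b i := by
      intro i
      rw [← Finset.sum_mul, hIic i]
    rw [Finset.sum_congr rfl (fun i _ => e2 i)]
    rw [← Finset.sum_add_distrib]
    have e3 : ∀ i : Fin m, (m * (1 - c^((i:ℕ)+1))) * b i + c^(i:ℕ) * (((m:ℝ)-1) * b i)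
        = m * b i := by
      intro i
      have : c^((i:ℕ)+1) = c^(i:ℕ) * c := by ring
      rw [this]
      linear_combination (-(c^(i:ℕ) * b i)) * hmc
    rw [Finset.sum_congr rfl (fun i _ => e3 i), ← Finset.mul_sum, hsum, mul_one]
  -- strict inequality
  have hlt : ∑ j : Fin m, c^(j:ℕ) * ((∑ i ∈ Finset.Ici j, b i) + ((m:ℝ)-1) * b j)
      < ∑ j : Fin m, c^(j:ℕ) * ρ := by
    apply Finset.sum_lt_sum_of_nonempty
    · have : Nonempty (Fin m) := ⟨⟨0, by omega⟩⟩
      exact Finset.univ_nonempty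
    · intro j _
      exact mul_lt_mul_of_pos_left (hcon j) (pow_pos hc0 _)
  have hR : ∑ j : Fin m, c^(j:ℕ) * ρ = m := by
    rw [← Finset.sum_mul]
    rw [Fin.sum_univ_eq_sum_range (fun n => c^n) m]
    rw [speedrobust_geom_sum m hm1]
    linarith [hρgeom]
  rw [hL, hR] at hlt
  exact lt_irrefl _ hlt

/-- No algorithm for speed-robust scheduling with infinitesimal jobs has robustness
factor smaller than ρ(m) = m^m/(m^m − (m−1)^m). -/
theorem no_algorithm_beats_rho (m : ℕ) (hm : 1 ≤ m)
    (a : Fin m → ℝ) (ha : ∀ k, 0 ≤ a k) (hsum : ∑ k, a k = 1) :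
    ∃ s : Fin m → ℝ, (∀ i, 0 < s i) ∧ (∑ i, s i = 1) ∧
      ∀ σ : Fin m → Fin m, ∃ i : Fin m,
        ((m : ℝ) ^ m / ((m : ℝ) ^ m - ((m : ℝ) - 1) ^ m)) * s i ≤
          ∑ k ∈ Finset.univ.filter (fun k => σ k = i), a k := by
  have hm0 : (0:ℝ) < m := by exact_mod_cast hm
  have hd : (0:ℝ) < (m:ℝ)^m - ((m:ℝ)-1)^m := by
    have h1 : ((m:ℝ)-1)^m < (m:ℝ)^m := by
      have hm1R' : (1:ℝ) ≤ (m:ℝ) := by exact_mod_cast hm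
      apply pow_lt_pow_left₀ (by linarith) (by linarith) (by omega)
    linarith
  set ρ : ℝ := (m:ℝ)^m / ((m:ℝ)^m - ((m:ℝ)-1)^m) with hρ
  have hρpos : 0 < ρ := by positivity
  have hρ1 : 1 ≤ ρ := by
    rw [hρ, le_div_iff₀ hd]
    have hm1R' : (1:ℝ) ≤ (m:ℝ) := by exact_mod_cast hm
    have : (0:ℝ) ≤ ((m:ℝ)-1)^m := pow_nonneg (by linarith) m
    linarith
  by_cases hbig : ∃ k, ρ/m ≤ a k
  · -- uniform speeds
    obtain ⟨k0, hk0⟩ := hbig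
    refine ⟨fun _ => 1/m, fun i => by positivity, ?_, ?_⟩
    · rw [Finset.sum_const, Finset.card_univ, Fintype.card_fin]
      rw [nsmul_eq_mul]
      field_simp
    · intro σ
      refine ⟨σ k0, ?_⟩
      have h1 : a k0 ≤ ∑ k ∈ Finset.univ.filter (fun k => σ k = σ k0), a k := by
        apply Finset.single_le_sum (fun k _ => ha k)
        simp
      calc ρ * (1/m) = ρ/m := by ring
        _ ≤ a k0 := hk0
        _ ≤ _ := h1
  · push_neg at hbig
    have hm2 : 2 ≤ m := by
      by_contra hcon
      have hmeq : m = 1 := by omega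
      subst hmeq
      have h0 := hbig 0
      have h1 : ∑ k : Fin 1, a k = a 0 := by simp
      rw [h1] at hsum
      have hρeq : ρ = 1 := by
        rw [hρ]; norm_num
      rw [hρeq, hsum] at h0
      norm_num at h0
    have hρgt1 : 1 < ρ := by
      rw [hρ, lt_div_iff₀ hd]
      have : (0:ℝ) < ((m:ℝ)-1)^m := by
        apply pow_pos
        have : (2:ℝ) ≤ (m:ℝ) := by exact_mod_cast hm2
        linarith
      linarith
    set π := Tuple.sort a with hπ
    set b : Fin m → ℝ := a ∘ π with hb
    have hmono : Monotone b := Tuple.monotone_sort a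
    have hbsum : ∑ i, b i = 1 := by
      rw [hb]
      rw [show ∑ i, (a ∘ π) i = ∑ i, a (π i) from rfl]
      rw [Equiv.sum_comp π a]
      exact hsum
    obtain ⟨j, hj⟩ := speedrobust_key m hm2 b hmono hbsum
    rw [← hρ] at hj
    set y : ℝ := b j with hy
    have hynn : ∀ i : Fin m, 0 ≤ b i := fun i => ha (π i)
    have hyltρm : y < ρ/m := hbig (π j)
    have hS_le : ∑ i ∈ Finset.Ici j, b i ≤ 1 := by
      rw [← hbsum]
      apply Finset.sum_le_sum_of_subset_of_nonneg (Finset.subset_univ _)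
      intro i _ _
      exact hynn i
    have hypos : 0 < y := by
      by_contra hcon
      push_neg at hcon
      have : ((m:ℝ)-1) * y ≤ 0 := by
        apply mul_nonpos_of_nonneg_of_nonpos (by linarith [(show (2:ℝ) ≤ m by exact_mod_cast hm2)]) hcon
      linarith [hj, hS_le]
    have hm1R : (1:ℝ) ≤ (m:ℝ) - 1 := by
      have : (2:ℝ) ≤ (m:ℝ) := by exact_mod_cast hm2
      linarith
    set i0 : Fin m := ⟨0, by omega⟩ with hi0
    have hZpos : 0 < ρ - ((m:ℝ)-1)*y := by
      have h1 : ((m:ℝ)-1)*y < ((m:ℝ)-1)*(ρ/m) := by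
        apply mul_lt_mul_of_pos_left hyltρm (by linarith)
      have h2 : ((m:ℝ)-1)*(ρ/m) < ρ := by
        rw [div_eq_mul_inv]
        have : ((m:ℝ)-1) * (ρ * (m:ℝ)⁻¹) = ρ * (((m:ℝ)-1)/m) := by ring
        rw [this]
        have hfrac : ((m:ℝ)-1)/m < 1 := by
          rw [div_lt_one hm0]; linarith
        nlinarith
      linarith
    refine ⟨fun i => if i = i0 then (ρ - ((m:ℝ)-1)*y)/ρ else y/ρ, ?_, ?_, ?_⟩
    · intro i
      dsimp only
      by_cases h : i = i0
      · rw [if_pos h]; positivity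
      · rw [if_neg h]; positivity
    · dsimp only
      rw [← Finset.add_sum_erase _ _ (Finset.mem_univ i0)]
      rw [if_pos rfl]
      have h1 : ∑ i ∈ Finset.univ.erase i0, (if i = i0 then (ρ - ((m:ℝ)-1)*y)/ρ else y/ρ)
          = ∑ i ∈ Finset.univ.erase i0, y/ρ := by
        apply Finset.sum_congr rfl
        intro i hi
        rw [if_neg (Finset.ne_of_mem_erase hi)]
      rw [h1, Finset.sum_const, Finset.card_erase_of_mem (Finset.mem_univ i0),
        Finset.card_univ, Fintype.card_fin]
      have hcast : ((m - 1 : ℕ) : ℝ) = (m:ℝ) - 1 := by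
        have : (1:ℕ) ≤ m := hm
        push_cast [this]
        ring
      rw [nsmul_eq_mul, hcast]
      field_simp
      ring
    · intro σ
      by_cases hex : ∃ i, i ≠ i0 ∧ y ≤ ∑ k ∈ Finset.univ.filter (fun k => σ k = i), a k
      · obtain ⟨i, hi, hle⟩ := hex
        refine ⟨i, ?_⟩
        dsimp only
        rw [if_neg hi]
        rw [mul_div_assoc'] at *
        calc ρ * y / ρ = y := by field_simp
          _ ≤ _ := hle
      · push_neg at hex
        refine ⟨i0, ?_⟩
        dsimp only
        rw [if_pos rfl]
        have hload : ∑ i ∈ Finset.Ici j, b i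
            ≤ ∑ k ∈ Finset.univ.filter (fun k => σ k = i0), a k := by
          have himg : ∑ i ∈ Finset.Ici j, b i = ∑ k ∈ (Finset.Ici j).image π, a k := by
            rw [Finset.sum_image (fun x _ x' _ h => π.injective h)]
            rfl
          rw [himg]
          apply Finset.sum_le_sum_of_subset_of_nonneg
          · intro k hk
            simp only [Finset.mem_image] at hk
            obtain ⟨i, hi, rfl⟩ := hk
            simp only [Finset.mem_filter, Finset.mem_univ, true_and]
            by_contra hne
            have hky : y ≤ a (π i) := hmono (Finset.mem_Ici.mp hi)
            have hge : a (π i) ≤ ∑ k ∈ Finset.univ.filter (fun k => σ k = σ (π i)), a k := by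
              apply Finset.single_le_sum (fun k _ => ha k)
              simp
            have hlt := hex (σ (π i)) hne
            linarith [le_trans hky hge]
          · intro k _ _
            exact ha k
        have hcalc : ρ * ((ρ - ((m:ℝ)-1)*y)/ρ) = ρ - ((m:ℝ)-1)*y := by
          field_simp
        rw [hcalc]
        have : ρ - ((m:ℝ)-1)*y ≤ ∑ i ∈ Finset.Ici j, b i := by linarith [hj]
        linarith [hload]
end

section
/- Fix an integer m ≥ 1 and bag sizes a : Fin m → ℝ with a_k ≥ 0 for all k and ∑_k a_k = 1. For a speed vector s : Fin m → ℝ with s_i ≥ 0, define the makespan of an assignment σ : Fin m → Fin m as T(σ,s) = max_i (∑_{k : σ(k)=i} a_k) / s_i, computed in the extended nonnegative reals with the convention c/0 = ∞ for c > 0 and 0/0 = 0, and let f(s) be the minimum of T(σ,s) over all σ. Suppose s* satisfies s*_i ≥ 0 for all i, ∑_i s*_i = 1, and f(s) ≤ f(s*) for every s with s_i ≥ 0 and ∑_i s_i = 1 (i.e., s* is a worst-case speed configuration). Then s*_i > 0 for all i, f(s*) is finite, and for every machine i there exists an assignment σ with T(σ,s*) = f(s*) such that the load of machine i equals f(s*)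 · s*_i while the load of every machine j ≠ i is strictly less than f(s*) · s*_j (only machine i determines the makespan). -/
set_option maxHeartbeats 1000000


open scoped ENNReal

/-- For a worst-case speed configuration s*, all speeds are positive, the optimal
makespan is finite, and for every machine i there is an optimal assignment in which
only machine i determines the makespan. -/
theorem worst_case_speeds_full_assignment (m : ℕ) (hm : 1 ≤ m)
    (a : Fin m → ℝ) (ha : ∀ k, 0 ≤ a k) (hsum : ∑ k, a k = 1)
    (load : (Fin m → Fin m) → Fin m → ℝ)
    (hload : ∀ σ i, load σ i = ∑ k ∈ Finset.univ.filter (fun k => σ k = i), a k)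
    (T : (Fin m → Fin m) → (Fin m → ℝ) → ℝ≥0∞)
    (hT : ∀ σ s, T σ s = ⨆ i : Fin m, ENNReal.ofReal (load σ i) / ENNReal.ofReal (s i))
    (f : (Fin m → ℝ) → ℝ≥0∞)
    (hf : ∀ s, f s = ⨅ σ : Fin m → Fin m, T σ s)
    (sstar : Fin m → ℝ) (hs0 : ∀ i, 0 ≤ sstar i) (hs1 : ∑ i, sstar i = 1)
    (hmax : ∀ s : Fin m → ℝ, (∀ i, 0 ≤ s i) → (∑ i, s i = 1) → f s ≤ f sstar) :
    (∀ i, 0 < sstar i) ∧ f sstar ≠ ⊤ ∧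
    ∀ i : Fin m, ∃ σ : Fin m → Fin m, T σ sstar = f sstar ∧
      load σ i = (f sstar).toReal * sstar i ∧
      ∀ j : Fin m, j ≠ i → load σ j < (f sstar).toReal * sstar j := by
  haveI : NeZero m := ⟨by omega⟩
  -- basic facts about loads
  have hload_nonneg : ∀ σ j, 0 ≤ load σ j := by
    intro σ j; rw [hload]; exact Finset.sum_nonneg fun k _ => ha k
  have hload_sum : ∀ σ, ∑ j, load σ j = 1 := by
    intro σ
    calc ∑ j, load σ j
        = ∑ j, ∑ k ∈ Finset.univ.filter (fun k => σ k = j), a k := by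
          exact Finset.sum_congr rfl fun j _ => hload σ j
      _ = ∑ k, a k := Finset.sum_fiberwise _ _ _
      _ = 1 := hsum
  -- an optimal assignment always exists
  have hopt : ∀ s : Fin m → ℝ, ∃ σ, T σ s = f s := by
    intro s
    obtain ⟨σ₀, hσ₀⟩ := Finite.exists_min (fun σ => T σ s)
    exact ⟨σ₀, le_antisymm ((hf s) ▸ le_iInf hσ₀) ((hf s) ▸ iInf_le _ σ₀)⟩
  -- lower bound: f s ≥ 1/m for any speed distribution
  have hf_lb : ∀ s : Fin m → ℝ, (∀ i, 0 ≤ s i) → (∑ i, s i = 1) →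
      ENNReal.ofReal ((m : ℝ)⁻¹) ≤ f s := by
    intro s hs hsum1
    rw [hf]
    refine le_iInf fun σ => ?_
    obtain ⟨j, _, hj⟩ := Finset.exists_le_of_sum_le (Finset.univ_nonempty)
      (by
        rw [hload_sum σ, Finset.sum_const, Finset.card_univ, Fintype.card_fin,
          nsmul_eq_mul]
        rw [mul_inv_cancel₀ (by positivity : (m:ℝ) ≠ 0)]
        : ∑ _j : Fin m, (m : ℝ)⁻¹ ≤ ∑ j, load σ j)
    have hsj : s j ≤ 1 := by
      rw [← hsum1]
      exact Finset.single_le_sum (fun i _ => hs i) (Finset.mem_univ j)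
    rw [hT]
    refine le_trans ?_ (le_iSup _ j)
    calc ENNReal.ofReal ((m : ℝ)⁻¹)
        = ENNReal.ofReal ((m : ℝ)⁻¹) / 1 := (div_one _).symm
      _ ≤ ENNReal.ofReal (load σ j) / ENNReal.ofReal (s j) :=
          ENNReal.div_le_div (ENNReal.ofReal_le_ofReal hj)
            (by simpa using ENNReal.ofReal_le_ofReal hsj)
  -- finiteness of f sstar
  have hex_pos : ∃ j, 0 < sstar j := by
    by_contra h
    push_neg at h
    have : ∑ i, sstar i = 0 :=
      Finset.sum_eq_zero fun i _ => le_antisymm (h i) (hs0 i)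
    rw [hs1] at this; norm_num at this
  have ht_top : f sstar ≠ ⊤ := by
    obtain ⟨j, hj⟩ := hex_pos
    have hTc : T (fun _ => j) sstar ≤ 1 / ENNReal.ofReal (sstar j) := by
      rw [hT]
      refine iSup_le fun i => ?_
      by_cases hij : i = j
      · subst hij
        refine ENNReal.div_le_div ?_ le_rfl
        rw [hload]
        exact ENNReal.ofReal_le_one.2 (by
          rw [← hsum]
          exact Finset.sum_le_sum_of_subset_of_nonneg (Finset.filter_subset _ _)
            fun k _ _ => ha k)
      · have : load (fun _ => j) i = 0 := by
          rw [hload]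
          rw [Finset.filter_false_of_mem (fun k _ => fun h => hij h.symm)]
          · simp
        rw [this]
        simp
    have hfin : 1 / ENNReal.ofReal (sstar j) < ⊤ :=
      ENNReal.div_lt_top (by simp) (by simp [ENNReal.ofReal_eq_zero, not_le, hj])
    have : f sstar < ⊤ := lt_of_le_of_lt (le_trans ((hf sstar) ▸ iInf_le _ _) hTc) hfin
    exact this.ne
  set t' : ℝ := (f sstar).toReal with ht'def
  have ht_lb : ENNReal.ofReal ((m : ℝ)⁻¹) ≤ f sstar := hf_lb sstar hs0 hs1
  have ht_ne0 : f sstar ≠ 0 := by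
    intro h0
    rw [h0] at ht_lb
    simp [ENNReal.ofReal_eq_zero, not_le] at ht_lb
    have : (0:ℝ) < (m:ℝ)⁻¹ := by positivity
    linarith
  have ht'pos : 0 < t' := ENNReal.toReal_pos ht_ne0 ht_top
  have htt' : ENNReal.ofReal t' = f sstar := ENNReal.ofReal_toReal ht_top
  -- extraction lemma: from T σ s ≤ ofReal c get real load bounds
  have hE : ∀ (σ : Fin m → Fin m) (s : Fin m → ℝ) (c : ℝ) (j : Fin m), 0 ≤ c → 0 < s j →
      T σ s ≤ ENNReal.ofReal c → load σ j ≤ c * s j := by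
    intro σ s c j hc hsj hTs
    have h1 : ENNReal.ofReal (load σ j) / ENNReal.ofReal (s j) ≤ ENNReal.ofReal c := by
      rw [hT] at hTs
      exact le_trans
        (le_iSup (fun i => ENNReal.ofReal (load σ i) / ENNReal.ofReal (s i)) j) hTs
    rw [← ENNReal.ofReal_div_of_pos hsj] at h1
    have h2 : load σ j / s j ≤ c := (ENNReal.ofReal_le_ofReal_iff hc).1 h1
    calc load σ j = (load σ j / s j) * s j := by field_simp
      _ ≤ c * s j := by nlinarith
  -- reverse lemma
  have hF : ∀ (σ : Fin m → Fin m) (s : Fin m → ℝ) (c : ℝ), (∀ j, 0 < s j) →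
      (∀ j, load σ j ≤ c * s j) → T σ s ≤ ENNReal.ofReal c := by
    intro σ s c hs hb
    rw [hT]
    refine iSup_le fun j => ?_
    rw [← ENNReal.ofReal_div_of_pos (hs j)]
    exact ENNReal.ofReal_le_ofReal ((div_le_iff₀ (hs j)).2 (by linarith [hb j]))
  -- Step 2: all speeds positive
  have hpos : ∀ i, 0 < sstar i := by
    intro i
    rcases (hs0 i).lt_or_eq with h | h
    · exact h
    exfalso
    -- h : 0 = sstar i
    classical
    set A : Finset (Fin m → Fin m) :=
      Finset.univ.filter (fun σ => 0 < load σ i) with hA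
    have hconst_load : load (fun _ => i) i = 1 := by
      rw [hload]
      simp [hsum]
    have hconst : (fun _ => i) ∈ A := by
      rw [hA, Finset.mem_filter]
      exact ⟨Finset.mem_univ _, by rw [hconst_load]; norm_num⟩
    have hAne : A.Nonempty := ⟨_, hconst⟩
    set L : ℝ := A.inf' hAne (fun σ => load σ i) with hL
    have hLpos : 0 < L := by
      rw [hL, Finset.lt_inf'_iff]
      intro σ hσ
      exact (Finset.mem_filter.1 hσ).2
    set ε : ℝ := min (1/2) (L / (2 * (t' + 1))) with hε
    have hεpos : 0 < ε := by
      apply lt_min (by norm_num)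
      positivity
    have hεlt1 : ε < 1 := lt_of_le_of_lt (min_le_left _ _) (by norm_num)
    have hεL : t' * ε < L := by
      have h1 : ε ≤ L / (2 * (t' + 1)) := min_le_right _ _
      have h2 : ε * (2 * (t' + 1)) ≤ L := (le_div_iff₀ (by positivity)).1 h1
      nlinarith
    set s' : Fin m → ℝ := fun j => if j = i then ε else (1 - ε) * sstar j with hs'
    have hs'nonneg : ∀ j, 0 ≤ s' j := by
      intro j
      rw [hs']
      dsimp only
      split
      · linarith
      · have := hs0 j; nlinarith
    have hs'sum : ∑ j, s' j = 1 := by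
      rw [← Finset.add_sum_erase _ _ (Finset.mem_univ i)]
      have h1 : s' i = ε := by rw [hs']; simp
      have h2 : ∑ j ∈ Finset.univ.erase i, s' j
          = (1 - ε) * ∑ j ∈ Finset.univ.erase i, sstar j := by
        rw [Finset.mul_sum]
        refine Finset.sum_congr rfl fun j hj => ?_
        rw [hs']
        simp [Finset.ne_of_mem_erase hj]
      have h3 : ∑ j ∈ Finset.univ.erase i, sstar j = 1 := by
        rw [Finset.sum_erase_eq_sub (Finset.mem_univ i), hs1, ← h]
        ring
      rw [h1, h2, h3]
      ring
    obtain ⟨σ₀, hσ₀⟩ := hopt s'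
    have hfs' : T σ₀ s' ≤ ENNReal.ofReal t' := by
      rw [hσ₀, htt']
      exact hmax s' hs'nonneg hs'sum
    rcases (hload_nonneg σ₀ i).lt_or_eq with hposl | hzero
    · -- load σ₀ i > 0
      have hmem : σ₀ ∈ A := by
        rw [hA, Finset.mem_filter]; exact ⟨Finset.mem_univ _, hposl⟩
      have hLle : L ≤ load σ₀ i := Finset.inf'_le _ hmem
      have hcomp : ENNReal.ofReal (load σ₀ i) / ENNReal.ofReal (s' i) ≤ T σ₀ s' := by
        rw [hT]
        exact le_iSup (fun j => ENNReal.ofReal (load σ₀ j) / ENNReal.ofReal (s' j)) i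
      have hsi : s' i = ε := by rw [hs']; simp
      have hgt : ENNReal.ofReal t' < ENNReal.ofReal (load σ₀ i) / ENNReal.ofReal (s' i) := by
        rw [hsi, ← ENNReal.ofReal_div_of_pos hεpos]
        apply ENNReal.ofReal_lt_ofReal_iff (by positivity) |>.2
        rw [lt_div_iff₀ hεpos]
        nlinarith
      exact absurd (le_trans hcomp hfs') (not_le.2 hgt)
    · -- load σ₀ i = 0
      have htle : ENNReal.ofReal t' ≤ T σ₀ sstar := by
        rw [htt', hf]
        exact iInf_le _ σ₀
      obtain ⟨j₀, hj₀⟩ := Finite.exists_max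
        (fun j => ENNReal.ofReal (load σ₀ j) / ENNReal.ofReal (sstar j))
      have hj₀ge : ENNReal.ofReal t' ≤ ENNReal.ofReal (load σ₀ j₀) / ENNReal.ofReal (sstar j₀) := by
        refine le_trans htle ?_
        rw [hT]
        exact iSup_le hj₀
      have hj₀i : j₀ ≠ i := by
        intro hji
        rw [hji, ← hzero] at hj₀ge
        simp only [ENNReal.ofReal_zero, ENNReal.zero_div] at hj₀ge
        have : ENNReal.ofReal t' = 0 := le_antisymm hj₀ge zero_le
        rw [ENNReal.ofReal_eq_zero] at this
        linarith
      have hloadj₀pos : 0 < load σ₀ j₀ := by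
        rcases (hload_nonneg σ₀ j₀).lt_or_eq with h' | h'
        · exact h'
        · exfalso
          rw [← h'] at hj₀ge
          simp only [ENNReal.ofReal_zero, ENNReal.zero_div] at hj₀ge
          have : ENNReal.ofReal t' = 0 := le_antisymm hj₀ge zero_le
          rw [ENNReal.ofReal_eq_zero] at this
          linarith
      have hcomp' : ENNReal.ofReal (load σ₀ j₀) / ENNReal.ofReal (s' j₀) ≤ ENNReal.ofReal t' := by
        refine le_trans ?_ hfs'
        rw [hT]
        exact le_iSup (fun j => ENNReal.ofReal (load σ₀ j) / ENNReal.ofReal (s' j)) j₀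
      have hs'j₀ : s' j₀ = (1 - ε) * sstar j₀ := by rw [hs']; simp [hj₀i]
      rcases (hs0 j₀).lt_or_eq with hsj₀ | hsj₀
      · -- sstar j₀ > 0 : real arithmetic
        have h1 : t' ≤ load σ₀ j₀ / sstar j₀ := by
          rw [← ENNReal.ofReal_div_of_pos hsj₀] at hj₀ge
          exact (ENNReal.ofReal_le_ofReal_iff (by positivity)).1 hj₀ge
        have hs'j₀pos : 0 < s' j₀ := by rw [hs'j₀]; nlinarith
        have h2 : load σ₀ j₀ / s' j₀ ≤ t' := by
          rw [← ENNReal.ofReal_div_of_pos hs'j₀pos] at hcomp'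
          exact (ENNReal.ofReal_le_ofReal_iff (le_of_lt ht'pos)).1 hcomp'
        have h3 : load σ₀ j₀ / s' j₀ = (load σ₀ j₀ / sstar j₀) / (1 - ε) := by
          rw [hs'j₀]
          field_simp
        rw [h3] at h2
        have h4 : t' < (load σ₀ j₀ / sstar j₀) / (1 - ε) := by
          have h5 : t' ≤ load σ₀ j₀ / sstar j₀ := h1
          rw [lt_div_iff₀ (by linarith)]
          nlinarith
        linarith
      · -- sstar j₀ = 0, load positive: infinite component
        have hs'j₀0 : s' j₀ = 0 := by rw [hs'j₀, ← hsj₀]; ring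
        have : ENNReal.ofReal (load σ₀ j₀) / ENNReal.ofReal (s' j₀) = ⊤ := by
          rw [hs'j₀0]
          simp only [ENNReal.ofReal_zero]
          rw [ENNReal.div_zero]
          rw [ne_eq, ENNReal.ofReal_eq_zero, not_le]
          exact hloadj₀pos
        rw [this] at hcomp'
        exact absurd hcomp' (by simp [ENNReal.ofReal_lt_top.ne])
  -- Step 3/4: main structural result
  refine ⟨hpos, ht_top, fun i => ?_⟩
  classical
  -- minimum speed
  have hune : (Finset.univ : Finset (Fin m)).Nonempty := Finset.univ_nonempty
  set ε₀ : ℝ := Finset.univ.inf' hune sstar with hε₀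
  have hε₀pos : 0 < ε₀ := by
    rw [hε₀, Finset.lt_inf'_iff]
    intro j _
    exact hpos j
  have hε₀le : ∀ j, ε₀ ≤ sstar j := fun j => Finset.inf'_le _ (Finset.mem_univ j)
  -- gap γ
  set B : Finset (Fin m → Fin m) :=
    Finset.univ.filter (fun σ => t' * sstar i < load σ i) with hB
  set γ : ℝ := if hb : B.Nonempty then B.inf' hb (fun σ => load σ i - t' * sstar i) else 1
    with hγ
  have hγpos : 0 < γ := by
    rw [hγ]
    split
    · rename_i hb
      rw [Finset.lt_inf'_iff]
      intro σ hσ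
      have := (Finset.mem_filter.1 hσ).2
      linarith
    · norm_num
  have hγprop : ∀ σ : Fin m → Fin m, load σ i < t' * sstar i + γ → load σ i ≤ t' * sstar i := by
    intro σ hlt
    by_contra hgt
    push_neg at hgt
    have hmem : σ ∈ B := by rw [hB, Finset.mem_filter]; exact ⟨Finset.mem_univ _, hgt⟩
    have hb : B.Nonempty := ⟨σ, hmem⟩
    have : γ ≤ load σ i - t' * sstar i := by
      rw [hγ, dif_pos hb]
      exact Finset.inf'_le _ hmem
    linarith
  set δ : ℝ := min (ε₀ / 2) (γ / (m * (t' + 1))) with hδ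
  have hmpos : (0:ℝ) < m := by exact_mod_cast Nat.pos_of_ne_zero (NeZero.ne m)
  have hδpos : 0 < δ := lt_min (by linarith) (by positivity)
  have hδlt : δ < ε₀ := lt_of_le_of_lt (min_le_left _ _) (by linarith)
  have hδγ : t' * ((m:ℝ) - 1) * δ < γ := by
    have h1 : δ ≤ γ / (m * (t' + 1)) := min_le_right _ _
    have hm1 : (1:ℝ) ≤ (m:ℝ) := by exact_mod_cast hm
    have h2 : δ * ((m:ℝ) * (t' + 1)) ≤ γ := (le_div_iff₀ (by positivity)).1 h1
    nlinarith
  set s' : Fin m → ℝ := fun j => if j = i then sstar i + ((m:ℝ) - 1) * δ else sstar j - δ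
    with hs'
  have hm1 : (1:ℝ) ≤ (m:ℝ) := by exact_mod_cast hm
  have hs'pos : ∀ j, 0 < s' j := by
    intro j
    rw [hs']
    dsimp only
    split
    · have := hpos i
      nlinarith
    · have := hε₀le j
      linarith
  have hs'sum : ∑ j, s' j = 1 := by
    rw [← Finset.add_sum_erase _ _ (Finset.mem_univ i)]
    have h1 : s' i = sstar i + ((m:ℝ) - 1) * δ := by rw [hs']; simp
    have h2 : ∑ j ∈ Finset.univ.erase i, s' j
        = (∑ j ∈ Finset.univ.erase i, sstar j) - ((m:ℝ) - 1) * δ := by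
      have : ∀ j ∈ Finset.univ.erase i, s' j = sstar j - δ := by
        intro j hj
        rw [hs']
        simp [Finset.ne_of_mem_erase hj]
      rw [Finset.sum_congr rfl this, Finset.sum_sub_distrib, Finset.sum_const,
        Finset.card_erase_of_mem (Finset.mem_univ i), Finset.card_univ, Fintype.card_fin,
        nsmul_eq_mul]
      have : ((m - 1 : ℕ) : ℝ) = (m:ℝ) - 1 := by
        rw [Nat.cast_sub hm]; norm_num
      rw [this]
    have h3 : ∑ j ∈ Finset.univ.erase i, sstar j = 1 - sstar i := by
      rw [Finset.sum_erase_eq_sub (Finset.mem_univ i), hs1]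
    rw [h1, h2, h3]
    ring
  obtain ⟨σ₀, hσ₀⟩ := hopt s'
  have hfs' : T σ₀ s' ≤ ENNReal.ofReal t' := by
    rw [hσ₀, htt']
    exact hmax s' (fun j => (hs'pos j).le) hs'sum
  have hb : ∀ j, load σ₀ j ≤ t' * s' j :=
    fun j => hE σ₀ s' t' j ht'pos.le (hs'pos j) hfs'
  have hi : load σ₀ i ≤ t' * sstar i := by
    apply hγprop
    have h1 : load σ₀ i ≤ t' * (sstar i + ((m:ℝ) - 1) * δ) := by
      have := hb i
      rw [hs'] at this
      simpa using this
    nlinarith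
  have hj : ∀ j, j ≠ i → load σ₀ j < t' * sstar j := by
    intro j hji
    have h1 : load σ₀ j ≤ t' * (sstar j - δ) := by
      have := hb j
      rw [hs'] at this
      simpa [hji] using this
    nlinarith
  have hall : ∀ j, load σ₀ j ≤ t' * sstar j := by
    intro j
    by_cases hji : j = i
    · rw [hji]; exact hi
    · exact (hj j hji).le
  have hTle : T σ₀ sstar ≤ ENNReal.ofReal t' := hF σ₀ sstar t' hpos hall
  have hTge : ENNReal.ofReal t' ≤ T σ₀ sstar := by
    rw [htt', hf]
    exact iInf_le _ σ₀
  have hTeq : T σ₀ sstar = f sstar := by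
    rw [← htt']
    exact le_antisymm hTle hTge
  have heq : load σ₀ i = t' * sstar i := by
    by_contra hne
    have hlt : load σ₀ i < t' * sstar i := lt_of_le_of_ne hi hne
    have hstrict : ∀ j, load σ₀ j < t' * sstar j := by
      intro j
      by_cases hji : j = i
      · rw [hji]; exact hlt
      · exact hj j hji
    have hTlt : T σ₀ sstar < ENNReal.ofReal t' := by
      obtain ⟨j₀, hj₀⟩ := Finite.exists_max
        (fun j => ENNReal.ofReal (load σ₀ j) / ENNReal.ofReal (sstar j))
      rw [hT]
      refine lt_of_le_of_lt (iSup_le hj₀) ?_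
      rw [← ENNReal.ofReal_div_of_pos (hpos j₀)]
      apply (ENNReal.ofReal_lt_ofReal_iff ht'pos).2
      rw [div_lt_iff₀ (hpos j₀)]
      exact hstrict j₀
    rw [hTeq, ← htt'] at hTlt
    exact absurd hTlt (lt_irrefl _)
  exact ⟨σ₀, hTeq, heq, hj⟩
end

section
/- Fix an integer m ≥ 1 and let μ be a probability mass function on vectors a : Fin m → ℝ such that every a in the support of μ satisfies a_k ≥ 0 for all k and ∑_{k=1}^m a_k = m. For a natural number t < m, let g_t(a) denote the minimum over assignments σ : Fin m → Fin (m−t) of max_i ∑_{k : σ(k)=i} a_k. Then there exists an integer t with 0 ≤ 2t ≤ m such that the expected makespan ∑'_{a} μ(a) · g_t(a) is at least ρ01(m) · m/(m−t). (Even randomized algorithms against an oblivious adversary cannot beat the robustness factor ρ01(m) for speed-robust scheduling with infinitesimal jobs and speeds in {0,1}.) -/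
/-- Key combinatorial lemma: for any assignment `σ` of the `m` bags to `n = m - t`
machines, the makespan `g` satisfies `(n - t) * β + t * g ≥ m`, where `β` is an upper
bound on the bag sizes (with `β ≥ 1`, `β ≤ g`). -/
private lemma key_bound_rho01 {m n t : ℕ} (hmnt : m = n + t) (ht : 1 ≤ t) (htn : t ≤ n)
    (a : Fin m → ℝ) (ha : ∀ k, 0 ≤ a k) (hsum : ∑ k, a k = (m : ℝ))
    (β : ℝ) (hβ : ∀ k, a k ≤ β) (hβ1 : 1 ≤ β)
    (σ : Fin m → Fin n) (g : ℝ)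
    (hgL : ∀ i, (∑ k ∈ Finset.univ.filter (fun k => σ k = i), a k) ≤ g)
    (hβg : β ≤ g) :
    (m : ℝ) ≤ ((n : ℝ) - t) * β + t * g := by
  classical
  set c : Fin n → ℕ := fun i => (Finset.univ.filter (fun k => σ k = i)).card with hc
  set A := Finset.univ.filter (fun i : Fin n => c i = 1) with hA
  set Q := Finset.univ.filter (fun i : Fin n => 2 ≤ c i) with hQ
  have hdisj : Disjoint A Q := by
    simp only [hA, hQ, Finset.disjoint_left, Finset.mem_filter]
    rintro i ⟨_, h1⟩ ⟨_, h2⟩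
    omega
  have hsumL : ∑ i, (∑ k ∈ Finset.univ.filter (fun k => σ k = i), a k) = (m : ℝ) := by
    rw [Finset.sum_fiberwise_of_maps_to (fun k _ => Finset.mem_univ (σ k)) a]
    exact hsum
  have hsumc : ∑ i, c i = m := by
    have := Finset.card_eq_sum_card_fiberwise
      (f := σ) (s := Finset.univ) (t := Finset.univ) (fun k _ => Finset.mem_univ (σ k))
    simpa using this.symm
  -- `A ∪ Q` carries all the mass
  have hcover : ∑ i ∈ A ∪ Q, (∑ k ∈ Finset.univ.filter (fun k => σ k = i), a k)
      = ∑ i, (∑ k ∈ Finset.univ.filter (fun k => σ k = i), a k) := by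
    apply Finset.sum_subset (Finset.subset_univ _)
    intro i _ hi
    simp only [hA, hQ, Finset.mem_union, Finset.mem_filter, Finset.mem_univ, true_and] at hi
    push_neg at hi
    have hci : c i = 0 := by omega
    have : (Finset.univ.filter (fun k => σ k = i)) = ∅ := Finset.card_eq_zero.mp hci
    rw [this, Finset.sum_empty]
  have hAsum : ∑ i ∈ A, (∑ k ∈ Finset.univ.filter (fun k => σ k = i), a k)
      ≤ A.card • β := by
    apply Finset.sum_le_card_nsmul
    intro i hi
    have hci : c i = 1 := (Finset.mem_filter.mp hi).2
    obtain ⟨k, hk⟩ := Finset.card_eq_one.mp hci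
    rw [hk, Finset.sum_singleton]
    exact hβ k
  have hQsum : ∑ i ∈ Q, (∑ k ∈ Finset.univ.filter (fun k => σ k = i), a k)
      ≤ Q.card • g := by
    apply Finset.sum_le_card_nsmul
    intro i _
    exact hgL i
  have hmain : (m : ℝ) ≤ (A.card : ℝ) * β + (Q.card : ℝ) * g := by
    have := hcover.trans hsumL
    rw [Finset.sum_union hdisj] at this
    have h1 : (m : ℝ) ≤ A.card • β + Q.card • g := by
      rw [← this]; exact add_le_add hAsum hQsum
    simpa [nsmul_eq_mul] using h1
  -- counting facts
  have hsq : Q.card + A.card ≤ n := by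
    have h1 := Finset.card_le_univ (A ∪ Q)
    rw [Finset.card_union_of_disjoint hdisj] at h1
    simp only [Fintype.card_fin] at h1
    omega
  have h2q : A.card + 2 * Q.card ≤ m := by
    have h1 : ∑ i ∈ A ∪ Q, c i ≤ m := by
      rw [← hsumc]
      exact Finset.sum_le_sum_of_subset (Finset.subset_univ _)
    rw [Finset.sum_union hdisj] at h1
    have hAc : ∑ i ∈ A, c i = A.card := by
      rw [Finset.sum_congr rfl (fun i hi => (Finset.mem_filter.mp hi).2)]
      rw [Finset.sum_const, smul_eq_mul, mul_one]
    have hQc : Q.card • 2 ≤ ∑ i ∈ Q, c i :=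
      Finset.card_nsmul_le_sum Q c 2 (fun i hi => (Finset.mem_filter.mp hi).2)
    simp only [smul_eq_mul] at hQc
    omega
  have hq1 : 1 ≤ Q.card := by
    by_contra hq
    have hQ0 : Q = ∅ := Finset.card_eq_zero.mp (by omega)
    have hle1 : ∀ i, c i ≤ 1 := by
      intro i
      by_contra h2
      have : i ∈ Q := by
        rw [hQ]
        exact Finset.mem_filter.mpr ⟨Finset.mem_univ i, by omega⟩
      rw [hQ0] at this
      exact absurd this (Finset.notMem_empty i)
    have : ∑ i, c i ≤ ∑ _i : Fin n, 1 := Finset.sum_le_sum (fun i _ => hle1 i)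
    simp only [Finset.sum_const, Finset.card_univ, Fintype.card_fin, smul_eq_mul, mul_one] at this
    omega
  -- pass to the reals
  have hS0 : (0 : ℝ) ≤ (A.card : ℝ) := Nat.cast_nonneg _
  have hq1' : (1 : ℝ) ≤ (Q.card : ℝ) := by exact_mod_cast hq1
  have hsq' : (Q.card : ℝ) + (A.card : ℝ) ≤ (n : ℝ) := by exact_mod_cast hsq
  have h2q' : (A.card : ℝ) + 2 * (Q.card : ℝ) ≤ (m : ℝ) := by exact_mod_cast h2q
  have hMeq : (m : ℝ) = (n : ℝ) + (t : ℝ) := by exact_mod_cast hmnt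
  have hT1 : (1 : ℝ) ≤ (t : ℝ) := by exact_mod_cast ht
  have hTN : (t : ℝ) ≤ (n : ℝ) := by exact_mod_cast htn
  have hgr1 : (1 : ℝ) ≤ g := le_trans hβ1 hβg
  set S : ℝ := (A.card : ℝ) with hSdef
  set Qr : ℝ := (Q.card : ℝ) with hQrdef
  set M : ℝ := (m : ℝ) with hMdef
  set N : ℝ := (n : ℝ) with hNdef
  set T : ℝ := (t : ℝ) with hTdef
  rcases le_or_gt M (N * β) with hcase | hcase
  · have h1 : T * β ≤ T * g := mul_le_mul_of_nonneg_left hβg (by linarith)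
    linarith
  · rcases le_or_gt N (S + T) with hcase2 | hcase2
    · -- many singleton machines
      have hNS : 1 ≤ N - S := by linarith
      have h1 : M - S * β ≤ (N - S) * g := by
        have := mul_le_mul_of_nonneg_right (show Qr ≤ N - S by linarith)
          (show (0:ℝ) ≤ g by linarith)
        linarith
      have h2 : 0 ≤ (S + T - N) * (M - N * β) := mul_nonneg (by linarith) (by linarith)
      have e1 : T * (M - S * β) ≤ T * ((N - S) * g) :=
        mul_le_mul_of_nonneg_left h1 (by linarith)
      have hid : ((N - T) * β + T * g) * (N - S) - M * (N - S) =
          (T * ((N - S) * g) - T * (M - S * β)) + (S + T - N) * (M - N * β) := by ring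
      have h3 : M * (N - S) ≤ (((N - T) * β + T * g)) * (N - S) := by linarith
      exact le_of_mul_le_mul_right h3 (by linarith)
    · -- few singleton machines
      have hMS : 2 ≤ M - S := by linarith
      have h1 : 2 * (M - S * β) ≤ (M - S) * g := by
        have := mul_le_mul_of_nonneg_right (show 2 * Qr ≤ M - S by linarith)
          (show (0:ℝ) ≤ g by linarith)
        linarith [this]
      have h2 : 0 ≤ M * ((N - T - S) * (β - 1)) :=
        mul_nonneg (by linarith) (mul_nonneg (by linarith) (by linarith))
      have e1 : T * (2 * (M - S * β)) ≤ T * ((M - S) * g) :=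
        mul_le_mul_of_nonneg_left h1 (by linarith)
      have hid : ((N - T) * β + T * g) * (M - S) - M * (M - S) =
          (T * ((M - S) * g) - T * (2 * (M - S * β))) + M * ((N - T - S) * (β - 1)) := by
        rw [hMeq]; ring
      have h3 : M * (M - S) ≤ (((N - T) * β + T * g)) * (M - S) := by linarith
      exact le_of_mul_le_mul_right h3 (by linarith)

/-- Even randomized algorithms against an oblivious adversary cannot beat the
robustness factor ρ01(m) for speed-robust scheduling with infinitesimal jobs and
speeds in {0,1}. -/
theorem randomized_lower_bound_rho01 (m : ℕ) (hm : 1 ≤ m)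
    (μ : PMF (Fin m → ℝ))
    (hsupp : ∀ a ∈ μ.support, (∀ k, 0 ≤ a k) ∧ ∑ k, a k = (m : ℝ))
    (g : ℕ → (Fin m → ℝ) → ℝ)
    (hg : ∀ t : ℕ, t < m → ∀ a : Fin m → ℝ,
      IsLeast {x : ℝ | ∃ σ : Fin m → Fin (m - t),
        x = ⨆ i : Fin (m - t), ∑ k ∈ Finset.univ.filter (fun k => σ k = i), a k} (g t a))
    (ρ : ℝ)
    (hρ : IsGreatest {x : ℝ | ∃ t : ℕ, 2 * t ≤ m ∧
        x = (m : ℝ) * ((m : ℝ) - (t : ℝ)) /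
          ((m : ℝ) ^ 2 - 2 * (m : ℝ) * (t : ℝ) + 2 * (t : ℝ) ^ 2)} ρ) :
    ∃ t : ℕ, 2 * t ≤ m ∧
      ρ * (m : ℝ) / ((m : ℝ) - (t : ℝ)) ≤ ∑' a : Fin m → ℝ, (μ a).toReal * g t a := by
  classical
  have hM0 : ((m : ℝ)) ≠ 0 := Nat.cast_ne_zero.mpr (by omega)
  have hM1 : (1 : ℝ) ≤ (m : ℝ) := by exact_mod_cast hm
  -- basic properties of `g t a` for `a` with nonnegative entries summing to `m`
  -- a maximal bag exists
  have hmax : ∀ a : Fin m → ℝ, ∃ k₀ : Fin m, ∀ k, a k ≤ a k₀ := by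
    intro a
    obtain ⟨k₀, _, h⟩ := Finset.exists_max_image Finset.univ a ⟨⟨0, hm⟩, Finset.mem_univ _⟩
    exact ⟨k₀, fun k => h k (Finset.mem_univ k)⟩
  -- every bag size is a lower bound for `g t a`
  have hβle : ∀ (t' : ℕ), t' < m → ∀ (a : Fin m → ℝ), (∀ k, 0 ≤ a k) →
      ∀ k₀ : Fin m, a k₀ ≤ g t' a := by
    intro t' ht' a ha k₀
    obtain ⟨⟨σ₁, hσ₁⟩, -⟩ := hg t' ht' a
    have h1 : a k₀ ≤ ∑ k ∈ Finset.univ.filter (fun k => σ₁ k = σ₁ k₀), a k :=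
      Finset.single_le_sum (fun k _ => ha k) (by simp)
    have hb : BddAbove (Set.range
        (fun i : Fin (m - t') => ∑ k ∈ Finset.univ.filter (fun k => σ₁ k = i), a k)) :=
      (Set.finite_range _).bddAbove
    calc a k₀ ≤ ∑ k ∈ Finset.univ.filter (fun k => σ₁ k = σ₁ k₀), a k := h1
      _ ≤ ⨆ i : Fin (m - t'), ∑ k ∈ Finset.univ.filter (fun k => σ₁ k = i), a k :=
        le_ciSup hb (σ₁ k₀)
      _ = g t' a := hσ₁.symm
  -- the max bag is at least 1
  have hβ1 : ∀ (a : Fin m → ℝ), (∑ k, a k = (m : ℝ)) →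
      ∀ k₀ : Fin m, (∀ k, a k ≤ a k₀) → 1 ≤ a k₀ := by
    intro a hsa k₀ hk₀
    have h1 : ∑ k, a k ≤ (Finset.univ : Finset (Fin m)).card • a k₀ :=
      Finset.sum_le_card_nsmul _ _ _ (fun k _ => hk₀ k)
    rw [hsa] at h1
    simp only [Finset.card_univ, Fintype.card_fin, nsmul_eq_mul] at h1
    nlinarith
  -- `g t a ≥ 1` on the support
  have hg1 : ∀ (t' : ℕ), t' < m → ∀ (a : Fin m → ℝ), (∀ k, 0 ≤ a k) →
      (∑ k, a k = (m : ℝ)) → 1 ≤ g t' a := by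
    intro t' ht' a ha hsa
    obtain ⟨k₀, hk₀⟩ := hmax a
    exact le_trans (hβ1 a hsa k₀ hk₀) (hβle t' ht' a ha k₀)
  -- `g t a ≤ m` on the support
  have hgub : ∀ (t' : ℕ), t' < m → ∀ (a : Fin m → ℝ), (∀ k, 0 ≤ a k) →
      (∑ k, a k = (m : ℝ)) → g t' a ≤ (m : ℝ) := by
    intro t' ht' a ha hsa
    obtain ⟨-, hlb⟩ := hg t' ht' a
    have hne : Nonempty (Fin (m - t')) := ⟨⟨0, by omega⟩⟩
    set i₀ : Fin (m - t') := ⟨0, by omega⟩ with hi₀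
    have hmem : (⨆ i : Fin (m - t'),
        ∑ k ∈ Finset.univ.filter (fun k => (fun _ : Fin m => i₀) k = i), a k) ∈
        {x : ℝ | ∃ σ : Fin m → Fin (m - t'),
          x = ⨆ i : Fin (m - t'), ∑ k ∈ Finset.univ.filter (fun k => σ k = i), a k} := by
      exact ⟨fun _ => i₀, rfl⟩
    refine le_trans (hlb hmem) (ciSup_le fun i => ?_)
    calc ∑ k ∈ Finset.univ.filter (fun k => (fun _ : Fin m => i₀) k = i), a k
        ≤ ∑ k, a k :=
          Finset.sum_le_sum_of_subset_of_nonneg (Finset.subset_univ _) (fun k _ _ => ha k)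
      _ = (m : ℝ) := hsa
  -- summability facts
  have hwsum : Summable (fun a : Fin m → ℝ => (μ a).toReal) :=
    ENNReal.summable_toReal (by rw [μ.tsum_coe]; exact ENNReal.one_ne_top)
  have hwt : ∑' a : Fin m → ℝ, (μ a).toReal = 1 := by
    have h := ENNReal.tsum_toReal_eq (fun a : Fin m → ℝ => PMF.apply_ne_top μ a)
    rw [μ.tsum_coe] at h
    simpa using h.symm
  have hsummg : ∀ (t' : ℕ), t' < m → Summable (fun a : Fin m → ℝ => (μ a).toReal * g t' a) := by
    intro t' ht'
    apply Summable.of_nonneg_of_le (g := fun a : Fin m → ℝ => (μ a).toReal * g t' a)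
      ?_ ?_ (hwsum.mul_right (m : ℝ))
    · intro a
      by_cases hμa : μ a = 0
      · simp [hμa]
      · obtain ⟨ha, hsa⟩ := hsupp a ((PMF.mem_support_iff μ a).mpr hμa)
        exact mul_nonneg ENNReal.toReal_nonneg
          (le_trans zero_le_one (hg1 t' ht' a ha hsa))
    · intro a
      by_cases hμa : μ a = 0
      · simp [hμa]
      · obtain ⟨ha, hsa⟩ := hsupp a ((PMF.mem_support_iff μ a).mpr hμa)
        exact mul_le_mul_of_nonneg_left (hgub t' ht' a ha hsa) ENNReal.toReal_nonneg
  -- main argument by contradiction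
  by_contra hcon
  push_neg at hcon
  obtain ⟨⟨t₀, ht₀m, hρeq⟩, -⟩ := hρ
  rcases Nat.eq_zero_or_pos t₀ with ht₀0 | ht₀pos
  · -- case t₀ = 0 : ρ = 1
    subst ht₀0
    have hρ1 : ρ = 1 := by
      rw [hρeq]
      push_cast
      field_simp
      ring
    have hE0 := hcon 0 (by omega)
    rw [Nat.cast_zero, sub_zero, hρ1, one_mul, div_self hM0] at hE0
    have hlow : (1 : ℝ) ≤ ∑' a : Fin m → ℝ, (μ a).toReal * g 0 a := by
      rw [← hwt]
      apply Summable.tsum_le_tsum ?_ hwsum (hsummg 0 (by omega))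
      intro a
      by_cases hμa : μ a = 0
      · simp [hμa]
      · obtain ⟨ha, hsa⟩ := hsupp a ((PMF.mem_support_iff μ a).mpr hμa)
        have h1 := hg1 0 (by omega) a ha hsa
        nlinarith [ENNReal.toReal_nonneg (a := μ a)]
    linarith
  · -- case t₀ ≥ 1
    have ht₀m' : t₀ < m := by omega
    have hcast : ((m - t₀ : ℕ) : ℝ) = (m : ℝ) - (t₀ : ℝ) := by
      push_cast [Nat.cast_sub ht₀m'.le]
      ring
    have hT1 : (1 : ℝ) ≤ (t₀ : ℝ) := by exact_mod_cast ht₀pos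
    have h2T : 2 * (t₀ : ℝ) ≤ (m : ℝ) := by exact_mod_cast ht₀m
    -- pointwise key inequality
    have hpt : ∀ a : Fin m → ℝ, (∀ k, 0 ≤ a k) → (∑ k, a k = (m : ℝ)) →
        (m : ℝ) ≤ ((m : ℝ) - 2 * (t₀ : ℝ)) * g 0 a + (t₀ : ℝ) * g t₀ a := by
      intro a ha hsa
      obtain ⟨k₀, hk₀⟩ := hmax a
      have hβ1' : 1 ≤ a k₀ := hβ1 a hsa k₀ hk₀
      obtain ⟨⟨σ₁, hσ₁⟩, -⟩ := hg t₀ ht₀m' a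
      have hb : BddAbove (Set.range
          (fun i : Fin (m - t₀) => ∑ k ∈ Finset.univ.filter (fun k => σ₁ k = i), a k)) :=
        (Set.finite_range _).bddAbove
      have hgL : ∀ i : Fin (m - t₀),
          (∑ k ∈ Finset.univ.filter (fun k => σ₁ k = i), a k) ≤ g t₀ a := by
        intro i
        rw [hσ₁]
        exact le_ciSup hb i
      have hβg : a k₀ ≤ g t₀ a := hβle t₀ ht₀m' a ha k₀
      have hkey := key_bound_rho01 (m := m) (n := m - t₀) (t := t₀)
        (by omega) ht₀pos (by omega) a ha hsa (a k₀) hk₀ hβ1' σ₁ (g t₀ a) hgL hβg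
      rw [hcast] at hkey
      have hβg0 : a k₀ ≤ g 0 a := hβle 0 (by omega) a ha k₀
      have hcoef : (0 : ℝ) ≤ (m : ℝ) - 2 * (t₀ : ℝ) := by linarith
      have := mul_le_mul_of_nonneg_left hβg0 hcoef
      nlinarith
    -- expected value chain
    have hs0 := hsummg 0 (by omega)
    have hst := hsummg t₀ ht₀m'
    have hFs : Summable (fun a : Fin m → ℝ =>
        ((m : ℝ) - 2 * (t₀ : ℝ)) * ((μ a).toReal * g 0 a) +
        (t₀ : ℝ) * ((μ a).toReal * g t₀ a)) :=
      (hs0.mul_left _).add (hst.mul_left _)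
    have hlow : (m : ℝ) ≤ ∑' a : Fin m → ℝ,
        (((m : ℝ) - 2 * (t₀ : ℝ)) * ((μ a).toReal * g 0 a) +
        (t₀ : ℝ) * ((μ a).toReal * g t₀ a)) := by
      have h1 : (m : ℝ) = ∑' a : Fin m → ℝ, (μ a).toReal * (m : ℝ) := by
        rw [tsum_mul_right, hwt, one_mul]
      refine h1.le.trans (Summable.tsum_le_tsum ?_ (hwsum.mul_right _) hFs)
      intro a
      by_cases hμa : μ a = 0
      · simp [hμa]
      · obtain ⟨ha, hsa⟩ := hsupp a ((PMF.mem_support_iff μ a).mpr hμa)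
        have hptw := hpt a ha hsa
        have hw : (0 : ℝ) ≤ (μ a).toReal := ENNReal.toReal_nonneg
        calc (μ a).toReal * (m : ℝ)
            ≤ (μ a).toReal * (((m : ℝ) - 2 * (t₀ : ℝ)) * g 0 a + (t₀ : ℝ) * g t₀ a) :=
              mul_le_mul_of_nonneg_left hptw hw
          _ = ((m : ℝ) - 2 * (t₀ : ℝ)) * ((μ a).toReal * g 0 a) +
              (t₀ : ℝ) * ((μ a).toReal * g t₀ a) := by ring
    have hEq : ∑' a : Fin m → ℝ,
        (((m : ℝ) - 2 * (t₀ : ℝ)) * ((μ a).toReal * g 0 a) +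
        (t₀ : ℝ) * ((μ a).toReal * g t₀ a)) =
        ((m : ℝ) - 2 * (t₀ : ℝ)) * (∑' a : Fin m → ℝ, (μ a).toReal * g 0 a) +
        (t₀ : ℝ) * (∑' a : Fin m → ℝ, (μ a).toReal * g t₀ a) := by
      rw [Summable.tsum_add (hs0.mul_left _) (hst.mul_left _), tsum_mul_left, tsum_mul_left]
    have hE0 := hcon 0 (by omega)
    rw [Nat.cast_zero, sub_zero, mul_div_assoc, div_self hM0, mul_one] at hE0
    have hEt := hcon t₀ ht₀m
    have hMT1 : (1 : ℝ) ≤ (m : ℝ) - (t₀ : ℝ) := by linarith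
    have hD : (0 : ℝ) < (m : ℝ) ^ 2 - 2 * (m : ℝ) * (t₀ : ℝ) + 2 * (t₀ : ℝ) ^ 2 := by
      nlinarith [sq_nonneg ((m : ℝ) - (t₀ : ℝ))]
    have hfinal : ((m : ℝ) - 2 * (t₀ : ℝ)) * ρ +
        (t₀ : ℝ) * (ρ * (m : ℝ) / ((m : ℝ) - (t₀ : ℝ))) = (m : ℝ) := by
      have hne1 : (m : ℝ) - (t₀ : ℝ) ≠ 0 := by linarith
      have hne2 : (m : ℝ) ^ 2 - 2 * (m : ℝ) * (t₀ : ℝ) + 2 * (t₀ : ℝ) ^ 2 ≠ 0 := ne_of_gt hD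
      rw [hρeq]
      field_simp
      linear_combination mul_inv_cancel₀ hne2
    have hlt : ((m : ℝ) - 2 * (t₀ : ℝ)) * (∑' a : Fin m → ℝ, (μ a).toReal * g 0 a) +
        (t₀ : ℝ) * (∑' a : Fin m → ℝ, (μ a).toReal * g t₀ a) < (m : ℝ) := by
      rw [← hfinal]
      have hc1 : (0 : ℝ) ≤ (m : ℝ) - 2 * (t₀ : ℝ) := by linarith
      have h1 := mul_le_mul_of_nonneg_left hE0.le hc1
      have h2 := mul_lt_mul_of_pos_left hEt (show (0 : ℝ) < (t₀ : ℝ) by linarith)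
      linarith
    linarith [hEq ▸ hlow]
end

section
/- For all integers m ≥ 1 and t with 0 ≤ 2t ≤ m, the inequality m(m−t)/(m² − 2mt + 2t²) ≤ (1+√2)/2 holds (note that the denominator m² − 2mt + 2t² = (m−t)² + t² is positive). Consequently ρ01(m) ≤ (1+√2)/2 for every m ≥ 1. -/
/-- For all integers m ≥ 1 and t with 0 ≤ 2t ≤ m, the denominator m² − 2mt + 2t² is
positive and m(m−t)/(m² − 2mt + 2t²) ≤ (1+√2)/2; hence ρ01(m) ≤ (1+√2)/2. -/
theorem rho01_le (m t : ℕ) (hm : 1 ≤ m) (ht : 2 * t ≤ m) :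
    0 < (m : ℝ) ^ 2 - 2 * (m : ℝ) * (t : ℝ) + 2 * (t : ℝ) ^ 2 ∧
    (m : ℝ) * ((m : ℝ) - (t : ℝ)) /
        ((m : ℝ) ^ 2 - 2 * (m : ℝ) * (t : ℝ) + 2 * (t : ℝ) ^ 2) ≤
      (1 + Real.sqrt 2) / 2 := by
  have hT : 0 ≤ (t : ℝ) := Nat.cast_nonneg t
  have h2t : 2 * (t : ℝ) ≤ (m : ℝ) := by exact_mod_cast ht
  have hm1 : 1 ≤ (m : ℝ) := by exact_mod_cast hm
  have hD : 0 < (m : ℝ) ^ 2 - 2 * (m : ℝ) * (t : ℝ) + 2 * (t : ℝ) ^ 2 := by nlinarith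
  refine ⟨hD, ?_⟩
  rw [div_le_div_iff₀ hD (by norm_num : (0:ℝ) < 2)]
  have hs : Real.sqrt 2 ^ 2 = 2 := Real.sq_sqrt (by norm_num)
  have hsn : 0 ≤ Real.sqrt 2 := Real.sqrt_nonneg 2
  have hs1 : 1 ≤ Real.sqrt 2 := by nlinarith
  nlinarith [sq_nonneg ((m : ℝ) - (t : ℝ) - (Real.sqrt 2 + 1) * (t : ℝ)),
    mul_nonneg (sub_nonneg.2 hs1) (sq_nonneg ((m : ℝ) - (t : ℝ) - (Real.sqrt 2 + 1) * (t : ℝ)))]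
end

section
/- Fix an integer m ≥ 1, let ρ̄ = (1+√2)/2, and define bag sizes a_i = min(1/2 + ρ̄·(2i−1)/(2m), ρ̄) for i = 1, …, m. Then ∑_{i=1}^m a_i ≥ m, and for every natural number t with t < m there exists an assignment σ : Fin m → Fin (m−t) with max_i ∑_{k : σ(k)=i} a_k ≤ ρ̄ · m/(m−t). (The algorithm SAND01, obtained by sampling the profile function f̄(x) = min(1/2 + ρ̄·x, ρ̄), is (1+√2)/2-robust for speed-robust scheduling with speeds in {0,1} and infinitesimal jobs.) -/
open Finset

private lemma sum_odds (ρ m : ℝ) (s : ℕ) :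
    ∑ k ∈ Finset.range s, (1/2 + ρ*(2*(k:ℝ)+1)/(2*m)) = (s:ℝ)/2 + ρ*(s:ℝ)^2/(2*m) := by
  induction s with
  | zero => simp
  | succ n ih =>
    rw [Finset.sum_range_succ, ih]
    push_cast
    ring

private lemma ineqT {ρ q n m : ℝ} (hρ : 0 ≤ ρ) (hn : 0 < n) (hqn : q*n ≤ m) :
    q*ρ ≤ ρ*m/n := by
  rw [le_div_iff₀ hn]
  nlinarith

private lemma ineqO {st ρ q n r m : ℝ} (hst : st^2 = 2) (hst1 : 1.41 ≤ st) (hst2 : st ≤ 1.42)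
    (hρ : ρ = (1+st)/2) (hq : q = 1 ∨ 3 ≤ q) (hr1 : 1 ≤ r) (hrn : r + 1 ≤ n)
    (hm : m = q*n + r) :
    ((q+1)/2)*(1 + ρ*((q+1)*r)/m) ≤ ρ*m/n := by
  have hn1 : (2:ℝ) ≤ n := by linarith
  have hq1 : (1:ℝ) ≤ q := by rcases hq with h|h <;> linarith
  have hm0 : (0:ℝ) < m := by nlinarith
  have hρ1 : (1:ℝ) ≤ ρ := by rw [hρ]; linarith
  have key : ((q+1)/2)*(1 + ρ*((q+1)*r)/m) = ((q+1)*(m + ρ*((q+1)*r)))/(2*m) := by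
    field_simp
  rw [key, div_le_div_iff₀ (by linarith) (by linarith)]
  rcases hq with h1 | h3
  · subst h1
    have hr' : r = m - n := by linarith
    have hkey : ρ*m*(2*m) - (1+1)*(m + ρ*((1+1)*r))*n = 2*ρ*(m-st*n)^2 := by
      rw [hρ, hr']
      linear_combination (2*m*n-(1+st)*n^2)*hst
    nlinarith [mul_nonneg (by linarith : (0:ℝ) ≤ 2*ρ) (sq_nonneg (m-st*n))]
  · have key2 : ρ*m*(2*m) - (q+1)*(m + ρ*((q+1)*r))*n
        = (ρ-1)*(n*(q+1))^2 + (n-r)*(n*(ρ*(q-1)^2+(q+1)) - 2*ρ*(n+r)) := by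
      rw [hm]; ring
    have hq4 : (4:ℝ) ≤ (q-1)^2 := by nlinarith
    have f1 : (0:ℝ) ≤ n*(ρ*(q-1)^2+(q+1)) - 2*ρ*(n+r) := by
      nlinarith [mul_nonneg (by linarith : (0:ℝ) ≤ n) (by nlinarith : (0:ℝ) ≤ ρ*(q-1)^2 - 4*ρ)]
    nlinarith [key2, mul_nonneg (by linarith : (0:ℝ) ≤ n - r) f1,
      mul_nonneg (by linarith : (0:ℝ) ≤ ρ - 1) (sq_nonneg (n*(q+1)))]

private lemma ineqE {st ρ q n r m : ℝ} (hst : st^2 = 2) (hst1 : 1.41 ≤ st) (hst2 : st ≤ 1.42)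
    (hρ : ρ = (1+st)/2) (hq : q = 2 ∨ 4 ≤ q) (hr1 : 1 ≤ r) (hrn : r + 1 ≤ n)
    (hm : m = q*n + r) :
    (q/2)*(1 + ρ*(q*r)/m) + ρ ≤ ρ*m/n := by
  have hn1 : (2:ℝ) ≤ n := by linarith
  have hq1 : (2:ℝ) ≤ q := by rcases hq with h|h <;> linarith
  have hm0 : (0:ℝ) < m := by nlinarith
  have hρ1 : (1:ℝ) ≤ ρ := by rw [hρ]; linarith
  have hρ2 : ρ ≤ 1.21 := by rw [hρ]; linarith
  rw [← sub_nonneg]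
  have key : ρ*m/n - ((q/2)*(1 + ρ*(q*r)/m) + ρ)
      = (2*ρ*m^2 - q*(m+ρ*(q*r))*n - 2*ρ*m*n)/(2*m*n) := by
    field_simp
    ring
  rw [key]
  apply div_nonneg _ (by positivity)
  rcases hq with h2 | h4
  · subst h2
    have key2 : 2*ρ*m^2 - 2*(m+ρ*(2*r))*n - 2*ρ*m*n
        = (4*ρ-4)*n^2 + (2*ρ-2)*r*n + 2*ρ*r^2 := by
      rw [hm]; ring
    nlinarith [mul_nonneg (by linarith : (0:ℝ) ≤ r) (by linarith : (0:ℝ) ≤ n)]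
  · have key2 : 2*ρ*m^2 - q*(m+ρ*(q*r))*n - 2*ρ*m*n
        = n^2*q*((ρ-1)*q + 2*ρ-1) + (n-r)*(n*(ρ*q^2 + q + 2*ρ - 4*ρ*q) - 2*ρ*(n+r)) := by
      rw [hm]; ring
    have f1 : (0:ℝ) ≤ n*(ρ*q^2 + q + 2*ρ - 4*ρ*q) - 2*ρ*(n+r) := by
      nlinarith [mul_nonneg (by linarith : (0:ℝ) ≤ n)
        (by nlinarith : (0:ℝ) ≤ ρ*q^2 + q - 4*ρ*q - 2*ρ)]
    nlinarith [key2, mul_nonneg (by linarith : (0:ℝ) ≤ n - r) f1,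
      mul_nonneg (mul_nonneg (by positivity : (0:ℝ) ≤ n^2) (by linarith : (0:ℝ) ≤ q))
        (by nlinarith : (0:ℝ) ≤ (ρ-1)*q + 2*ρ-1)]

set_option maxHeartbeats 4000000 in
/-- The algorithm SAND01, sampling the profile function f̄(x) = min(1/2 + ρ̄·x, ρ̄)
with ρ̄ = (1+√2)/2, i.e. a_i = min(1/2 + ρ̄·(2i−1)/(2m), ρ̄) for i = 1,…,m
(0-indexed: a_i = min(1/2 + ρ̄·(2i+1)/(2m), ρ̄)), is ρ̄-robust for speed-robust
scheduling with speeds in {0,1} and infinitesimal jobs. -/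
theorem sand01_is_robust (m : ℕ) (hm : 1 ≤ m) (ρ : ℝ) (hρ : ρ = (1 + Real.sqrt 2) / 2)
    (a : Fin m → ℝ)
    (ha : ∀ i : Fin m, a i = min (1 / 2 + ρ * (2 * (i : ℕ) + 1) / (2 * m)) ρ) :
    (m : ℝ) ≤ ∑ i, a i ∧
    ∀ t : ℕ, t < m → ∃ σ : Fin m → Fin (m - t),
      ∀ i : Fin (m - t),
        ∑ k ∈ Finset.univ.filter (fun k => σ k = i), a k ≤
          ρ * (m : ℝ) / ((m : ℝ) - (t : ℝ)) := by
  obtain ⟨st, hstdef⟩ : ∃ st, st = Real.sqrt 2 := ⟨_, rfl⟩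
  rw [← hstdef] at hρ
  have hs2 : st ^ 2 = 2 := by rw [hstdef]; exact Real.sq_sqrt (by norm_num)
  have hst0 : 0 ≤ st := by rw [hstdef]; exact Real.sqrt_nonneg 2
  have hst1 : 1.41 ≤ st := by nlinarith
  have hst2 : st ≤ 1.42 := by nlinarith
  have hρ0 : (0:ℝ) < ρ := by rw [hρ]; linarith
  have hρ1 : (1:ℝ) < ρ := by rw [hρ]; linarith
  have hmR : (1:ℝ) ≤ m := by exact_mod_cast hm
  have hm0 : (0:ℝ) < m := by linarith
  obtain ⟨b, hbdef⟩ : ∃ b : ℕ → ℝ, b = fun k : ℕ => min (1/2 + ρ*(2*(k:ℝ)+1)/(2*m)) ρ := ⟨_, rfl⟩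
  have hab : ∀ i : Fin m, a i = b (i : ℕ) := by
    intro i; rw [ha i, hbdef]
  have hb0 : ∀ k, 0 ≤ b k := by
    intro k
    rw [hbdef]
    apply le_min _ hρ0.le
    have : (0:ℝ) ≤ ρ*(2*(k:ℝ)+1)/(2*m) := by
      apply div_nonneg (mul_nonneg hρ0.le (by positivity)) (by positivity)
    linarith
  have hbρ : ∀ k, b k ≤ ρ := by intro k; rw [hbdef]; exact min_le_right _ _
  have hbL : ∀ k : ℕ, b k ≤ 1/2 + ρ*(2*(k:ℝ)+1)/(2*m) := by
    intro k; rw [hbdef]; exact min_le_left _ _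
  constructor
  · -- Part 1 : total size at least m
    set x : ℝ := (m:ℝ)*(2-st) + 1/2 with hxdef
    have hx0 : (0:ℝ) ≤ x := by rw [hxdef]; nlinarith
    set sN : ℕ := min m (Nat.floor x) with hsNdef
    have hsm : sN ≤ m := min_le_left _ _
    have hlow : ∀ k : ℕ, k < sN → 2*(k:ℝ)+1 ≤ 2*m*(2-st) := by
      intro k hk
      have h1 : ((k:ℝ)+1) ≤ x := by
        rcases le_or_gt (Nat.floor x) m with h | h
        · have hk2 : k + 1 ≤ Nat.floor x := by omega
          exact le_trans (by exact_mod_cast hk2) (Nat.floor_le hx0)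
        · have hk2 : (k:ℝ)+1 ≤ m := by exact_mod_cast (by omega : k + 1 ≤ m)
          have h3 : (m:ℝ) ≤ (Nat.floor x : ℝ) := by exact_mod_cast h.le
          linarith [Nat.floor_le hx0]
      rw [hxdef] at h1; linarith
    have hhigh : ∀ k : ℕ, sN ≤ k → k < m → 2*m*(2-st) ≤ 2*(k:ℝ)+1 := by
      intro k h1 h2
      have hfl : Nat.floor x ≤ k := by omega
      have h3 : x < (k:ℝ)+1 := by
        have h4 : (Nat.floor x : ℝ) ≤ k := by exact_mod_cast hfl
        linarith [Nat.lt_floor_add_one x]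
      rw [hxdef] at h3; linarith
    have hmin1 : ∀ k : ℕ, k < sN → b k = 1/2 + ρ*(2*(k:ℝ)+1)/(2*m) := by
      intro k hk
      rw [hbdef]
      apply min_eq_left
      have h2 := hlow k hk
      have hmst : (m:ℝ)*st^2 = 2*m := by rw [hs2]; ring
      have h3 : ρ*(2*(k:ℝ)+1)/(2*m) ≤ ρ - 1/2 := by
        rw [div_le_iff₀ (by positivity : (0:ℝ) < 2*m), hρ]
        nlinarith [mul_le_mul_of_nonneg_left h2 (by linarith : (0:ℝ) ≤ (1+st)/2)]
      linarith
    have hmin2 : ∀ k : ℕ, sN ≤ k → k < m → b k = ρ := by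
      intro k hk hkm
      rw [hbdef]
      apply min_eq_right
      have h2 := hhigh k hk hkm
      have hmst : (m:ℝ)*st^2 = 2*m := by rw [hs2]; ring
      have h3 : ρ - 1/2 ≤ ρ*(2*(k:ℝ)+1)/(2*m) := by
        rw [le_div_iff₀ (by positivity : (0:ℝ) < 2*m), hρ]
        nlinarith [mul_le_mul_of_nonneg_left h2 (by linarith : (0:ℝ) ≤ (1+st)/2)]
      linarith
    have hstep : ∑ i : Fin m, a i = ∑ k ∈ Finset.range m, b k := by
      rw [← Fin.sum_univ_eq_sum_range]
      exact Finset.sum_congr rfl fun i _ => hab i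
    rw [hstep, Finset.range_eq_Ico, ← Finset.sum_Ico_consecutive _ (Nat.zero_le sN) hsm]
    have e1 : ∑ k ∈ Finset.Ico 0 sN, b k = (sN:ℝ)/2 + ρ*(sN:ℝ)^2/(2*m) := by
      rw [← Finset.range_eq_Ico]
      rw [Finset.sum_congr rfl (fun k hk => hmin1 k (Finset.mem_range.mp hk))]
      exact sum_odds ρ m sN
    have e2 : ∑ k ∈ Finset.Ico sN m, b k = ((m:ℝ) - sN)*ρ := by
      rw [Finset.sum_congr rfl (fun k hk => hmin2 k (Finset.mem_Ico.mp hk).1 (Finset.mem_Ico.mp hk).2)]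
      rw [Finset.sum_const, Nat.card_Ico, nsmul_eq_mul]
      congr 1
      push_cast [Nat.cast_sub hsm]
      ring
    rw [e1, e2]
    have hKEY : ((sN:ℝ)/2 + ρ*(sN:ℝ)^2/(2*m) + ((m:ℝ)-sN)*ρ - m)*(2*m)
        = ρ*((sN:ℝ) - (2-st)*m)^2 := by
      have hmne : (m:ℝ) ≠ 0 := ne_of_gt hm0
      have hc : ρ*(sN:ℝ)^2/(2*m)*(2*m) = ρ*(sN:ℝ)^2 := div_mul_cancel₀ _ (by positivity)
      have hexp : ((sN:ℝ)/2 + ρ*(sN:ℝ)^2/(2*m) + ((m:ℝ)-sN)*ρ - m)*(2*m)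
          = (sN:ℝ)*m + ρ*(sN:ℝ)^2 + 2*(m:ℝ)^2*ρ - 2*(m:ℝ)*sN*ρ - 2*(m:ℝ)^2 := by
        linear_combination hc
      rw [hexp, hρ]
      linear_combination (-((m:ℝ)*(sN:ℝ)) - (st-3)/2*(m:ℝ)^2)*hs2
    have hSQ : 0 ≤ ((sN:ℝ)/2 + ρ*(sN:ℝ)^2/(2*m) + ((m:ℝ)-sN)*ρ - m)*(2*m) := by
      rw [hKEY]; exact mul_nonneg hρ0.le (sq_nonneg _)
    have hd := (mul_nonneg_iff_of_pos_right (by positivity : (0:ℝ) < 2*m)).mp hSQ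
    linarith
  · intro t ht
    obtain ⟨n, hndef⟩ : ∃ n, n = m - t := ⟨_, rfl⟩
    rw [← hndef]
    have hn1 : 1 ≤ n := by omega
    have hnm : n ≤ m := by omega
    have hn0R : (0:ℝ) < n := by exact_mod_cast hn1
    have hnt : (m:ℝ) - t = (n:ℝ) := by
      rw [hndef]
      push_cast [Nat.cast_sub (le_of_lt ht)]
      ring
    obtain ⟨q, hqdef⟩ : ∃ q, q = m / n := ⟨_, rfl⟩
    obtain ⟨r, hrdef⟩ : ∃ r, r = m % n := ⟨_, rfl⟩
    have hr : r < n := by rw [hrdef]; exact Nat.mod_lt _ (by omega)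
    have hmqr : m = n*q + r := by rw [hqdef, hrdef]; exact (Nat.div_add_mod m n).symm
    have hq1 : 1 ≤ q := by rw [hqdef]; exact (Nat.one_le_div_iff (by omega)).mpr hnm
    obtain ⟨p, hpdef⟩ : ∃ p, p = (q+1)/2 := ⟨_, rfl⟩
    have hp1 : 1 ≤ p := by omega
    have h2p : 2*p = q ∨ 2*p = q+1 := by omega
    obtain ⟨B, hBdef⟩ : ∃ B, B = p*r := ⟨_, rfl⟩
    obtain ⟨P, hPdef⟩ : ∃ P, P = 2*B := ⟨_, rfl⟩
    obtain ⟨R1, hR1def⟩ : ∃ R1, R1 = r*(q+1) := ⟨_, rfl⟩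
    have hR1e : R1 = q*r + r := by rw [hR1def]; ring
    have hPlow : q*r ≤ P := by
      calc q*r ≤ (2*p)*r := Nat.mul_le_mul_right r (by omega)
        _ = P := by rw [hPdef, hBdef]; ring
    have hPhigh : P ≤ R1 := by
      calc P = (2*p)*r := by rw [hPdef, hBdef]; ring
        _ ≤ (q+1)*r := Nat.mul_le_mul_right r (by omega)
        _ = R1 := by rw [hR1def]; ring
    have hqr_le : q*r ≤ q*n := Nat.mul_le_mul_left q (le_of_lt hr)
    have hcomm2 : q*n = n*q := Nat.mul_comm _ _
    have hR1m : R1 ≤ m := by omega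
    have hq0 : 0 < q := hq1
    have htopsum : R1 + (n - r)*q = m := by
      have hsm' : (n - r)*q = n*q - r*q := Nat.sub_mul n r q
      have h9 : r*q ≤ n*q := Nat.mul_le_mul_right q (le_of_lt hr)
      have hcomm1 : q*r = r*q := Nat.mul_comm _ _
      omega
    have hrpos : 0 < P → 0 < r := by
      intro hP0
      rcases Nat.eq_zero_or_pos r with h0 | h0
      · exfalso
        have hB0 : B = 0 := by rw [hBdef, h0, Nat.mul_zero]
        omega
      · exact h0
    obtain ⟨σfun, hC1, hC2, hC3⟩ :
        ∃ σfun : Fin m → Fin n,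
          (∀ k : Fin m, (k:ℕ) < P → (σfun k : ℕ) = (min (k:ℕ) (P - 1 - (k:ℕ))) % r) ∧
          (∀ k : Fin m, ¬(k:ℕ) < P → (k:ℕ) < R1 → (σfun k : ℕ) = (k:ℕ) - P) ∧
          (∀ k : Fin m, ¬(k:ℕ) < P → ¬(k:ℕ) < R1 → (σfun k : ℕ) = r + ((k:ℕ) - R1)/q) := by
      refine ⟨fun k => if h1 : (k:ℕ) < P then ⟨(min (k:ℕ) (P - 1 - (k:ℕ))) % r,
          lt_trans (Nat.mod_lt _ (hrpos (by omega))) hr⟩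
        else if h2 : (k:ℕ) < R1 then ⟨(k:ℕ) - P, by omega⟩
        else ⟨r + ((k:ℕ) - R1)/q, by
            have hdiv : ((k:ℕ) - R1)/q < n - r := by
              rw [Nat.div_lt_iff_lt_mul hq0]
              have hk := k.isLt
              omega
            omega⟩, ?_, ?_, ?_⟩
      · intro k h1; simp only [dif_pos h1]
      · intro k h1 h2; simp only [dif_neg h1, dif_pos h2]
      · intro k h1 h2; simp only [dif_neg h1, dif_neg h2]
    refine ⟨σfun, ?_⟩
    intro i
    rw [hnt]
    obtain ⟨Fv, hFv⟩ : ∃ Fv, Fv = (Finset.univ.filter (fun k => σfun k = i)).image Fin.val :=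
      ⟨_, rfl⟩
    have hFb : ∑ x ∈ Fv, b x = ∑ k ∈ Finset.univ.filter (fun k => σfun k = i), a k := by
      rw [hFv, Finset.sum_image (by intro x _ y _ h; exact Fin.val_injective h)]
      exact Finset.sum_congr rfl fun k _ => (hab k).symm
    rw [← hFb]
    by_cases hi : (i:ℕ) < r
    · -- small-bag machines
      have hr0 : 0 < r := by omega
      obtain ⟨p', hp'⟩ : ∃ p', p = p' + 1 := ⟨p - 1, by omega⟩
      have hBe : B = p'*r + r := by rw [hBdef, hp']; ring
      have hple : ∀ j, j < p → j*r + (i:ℕ) < B := by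
        intro j hj
        have h5 : j*r ≤ p'*r := Nat.mul_le_mul_right r (by omega)
        omega
      obtain ⟨N1, hN1⟩ : ∃ N1, N1 = (Finset.range p).image (fun j => j*r + (i:ℕ)) := ⟨_, rfl⟩
      obtain ⟨N2, hN2⟩ : ∃ N2, N2 = (Finset.range p).image (fun j => P - 1 - (j*r + (i:ℕ))) :=
        ⟨_, rfl⟩
      obtain ⟨N3, hN3⟩ : ∃ N3 : Finset ℕ, N3 = (if 2*p = q then {P + (i:ℕ)} else ∅) := ⟨_, rfl⟩
      have hmemN1 : ∀ x ∈ N1, ∃ j, j < p ∧ x = j*r + (i:ℕ) := by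
        intro x hx; rw [hN1] at hx
        simp only [Finset.mem_image, Finset.mem_range] at hx
        obtain ⟨j, hj, hje⟩ := hx; exact ⟨j, hj, hje.symm⟩
      have hmemN2 : ∀ x ∈ N2, ∃ j, j < p ∧ x = P - 1 - (j*r + (i:ℕ)) := by
        intro x hx; rw [hN2] at hx
        simp only [Finset.mem_image, Finset.mem_range] at hx
        obtain ⟨j, hj, hje⟩ := hx; exact ⟨j, hj, hje.symm⟩
      have hsub : Fv ⊆ N1 ∪ N2 ∪ N3 := by
        rw [hFv]
        intro x hx
        simp only [Finset.mem_image, Finset.mem_filter, Finset.mem_univ, true_and] at hx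
        obtain ⟨k, hσk, rfl⟩ := hx
        by_cases h1 : (k:ℕ) < P
        · have hv := hC1 k h1
          rw [hσk] at hv
          by_cases hkB : (k:ℕ) < B
          · have hmineq : min (k:ℕ) (P - 1 - (k:ℕ)) = (k:ℕ) := min_eq_left (by omega)
            rw [hmineq] at hv
            have hdm := Nat.div_add_mod (k:ℕ) r
            have hjlt : (k:ℕ)/r < p := by
              rw [Nat.div_lt_iff_lt_mul hr0, ← hBdef]
              exact hkB
            refine Finset.mem_union_left _ (Finset.mem_union_left _ ?_)
            rw [hN1]
            simp only [Finset.mem_image, Finset.mem_range]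
            refine ⟨(k:ℕ)/r, hjlt, ?_⟩
            obtain ⟨c, hc⟩ : ∃ c, c = r*((k:ℕ)/r) := ⟨_, rfl⟩
            rw [← hc] at hdm
            have hcm : ((k:ℕ)/r)*r = c := by rw [hc]; ring
            rw [hcm]
            omega
          · have hky := le_of_not_gt hkB
            have hmineq : min (k:ℕ) (P - 1 - (k:ℕ)) = P - 1 - (k:ℕ) := min_eq_right (by omega)
            rw [hmineq] at hv
            have hdm := Nat.div_add_mod (P - 1 - (k:ℕ)) r
            have hylt : P - 1 - (k:ℕ) < B := by omega
            have hjlt : (P - 1 - (k:ℕ))/r < p := by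
              rw [Nat.div_lt_iff_lt_mul hr0, ← hBdef]
              exact hylt
            refine Finset.mem_union_left _ (Finset.mem_union_right _ ?_)
            rw [hN2]
            simp only [Finset.mem_image, Finset.mem_range]
            refine ⟨(P - 1 - (k:ℕ))/r, hjlt, ?_⟩
            obtain ⟨c, hc⟩ : ∃ c, c = r*((P - 1 - (k:ℕ))/r) := ⟨_, rfl⟩
            rw [← hc] at hdm
            have hcm : ((P - 1 - (k:ℕ))/r)*r = c := by rw [hc]; ring
            rw [hcm]
            omega
        · by_cases h2 : (k:ℕ) < R1
          · have hv := hC2 k h1 h2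
            rw [hσk] at hv
            have hq_even : 2*p = q := by
              rcases h2p with h | h
              · exact h
              · exfalso
                have hPR : P = R1 := by rw [hPdef, hBdef, hR1def, ← h]; ring
                omega
            refine Finset.mem_union_right _ ?_
            rw [hN3, if_pos hq_even]
            simp only [Finset.mem_singleton]
            omega
          · have hv := hC3 k h1 h2
            rw [hσk] at hv
            exfalso
            obtain ⟨o, ho⟩ : ∃ o, o = ((k:ℕ) - R1)/q := ⟨_, rfl⟩
            rw [← ho] at hv
            omega
      have hd12 : Disjoint N1 N2 := by
        rw [Finset.disjoint_left]
        intro x hx1 hx2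
        obtain ⟨j1, hj1, he1⟩ := hmemN1 x hx1
        obtain ⟨j2, hj2, he2⟩ := hmemN2 x hx2
        have b1 := hple j1 hj1
        have b2 := hple j2 hj2
        omega
      have hd123 : Disjoint (N1 ∪ N2) N3 := by
        rw [Finset.disjoint_left]
        intro x hx hx3
        have hx3' : x = P + (i:ℕ) := by
          rw [hN3] at hx3
          split_ifs at hx3 with h
          · simpa using hx3
          · simp at hx3
        rcases Finset.mem_union.mp hx with h | h
        · obtain ⟨j, hj, he⟩ := hmemN1 x h
          have := hple j hj
          omega
        · obtain ⟨j, hj, he⟩ := hmemN2 x h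
          have := hple j hj
          omega
      have hsum1 : ∑ x ∈ N1, b x = ∑ j ∈ Finset.range p, b (j*r + (i:ℕ)) := by
        rw [hN1]
        apply Finset.sum_image
        intro j1 _ j2 _ he
        have h9 : j1*r = j2*r := by simp only at he; omega
        exact Nat.eq_of_mul_eq_mul_right hr0 h9
      have hsum2 : ∑ x ∈ N2, b x = ∑ j ∈ Finset.range p, b (P - 1 - (j*r + (i:ℕ))) := by
        rw [hN2]
        apply Finset.sum_image
        intro j1 hj1 j2 hj2 he
        have b1 := hple j1 (Finset.mem_range.mp hj1)
        have b2 := hple j2 (Finset.mem_range.mp hj2)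
        have h9 : j1*r = j2*r := by simp only at he; omega
        exact Nat.eq_of_mul_eq_mul_right hr0 h9
      have hsum3 : ∑ x ∈ N3, b x ≤ (if 2*p = q then ρ else 0) := by
        rw [hN3]
        split_ifs
        · rw [Finset.sum_singleton]; exact hbρ _
        · simp
      have hpair : ∀ j ∈ Finset.range p,
          b (j*r + (i:ℕ)) + b (P - 1 - (j*r + (i:ℕ))) ≤ 1 + ρ*(P:ℝ)/m := by
        intro j hj
        have hw := hple j (Finset.mem_range.mp hj)
        have hxy : (j*r + (i:ℕ)) + (P - 1 - (j*r + (i:ℕ))) + 1 = P := by omega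
        have hcast : ((j*r + (i:ℕ) : ℕ):ℝ) + ((P - 1 - (j*r + (i:ℕ)) : ℕ):ℝ) + 1 = (P:ℝ) := by
          exact_mod_cast congrArg (fun z : ℕ => (z:ℝ)) hxy
        have h1 := hbL (j*r + (i:ℕ))
        have h2 := hbL (P - 1 - (j*r + (i:ℕ)))
        have heq : (1/2 + ρ*(2*((j*r + (i:ℕ) : ℕ):ℝ)+1)/(2*m))
            + (1/2 + ρ*(2*((P - 1 - (j*r + (i:ℕ)) : ℕ):ℝ)+1)/(2*m)) = 1 + ρ*(P:ℝ)/m := by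
          linear_combination (ρ/(m:ℝ)) * hcast
        linarith
      have htotal : ∑ x ∈ Fv, b x ≤ (p:ℝ)*(1 + ρ*(P:ℝ)/m) + (if 2*p = q then ρ else 0) := by
        have hstep1 : ∑ x ∈ Fv, b x ≤ ∑ x ∈ N1 ∪ N2 ∪ N3, b x :=
          Finset.sum_le_sum_of_subset_of_nonneg hsub (fun x _ _ => hb0 x)
        have hstep2 : ∑ x ∈ N1 ∪ N2 ∪ N3, b x = ∑ x ∈ N1, b x + ∑ x ∈ N2, b x + ∑ x ∈ N3, b x := by
          rw [Finset.sum_union hd123, Finset.sum_union hd12]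
        have hstep3 : ∑ x ∈ N1, b x + ∑ x ∈ N2, b x ≤ (p:ℝ)*(1 + ρ*(P:ℝ)/m) := by
          rw [hsum1, hsum2, ← Finset.sum_add_distrib]
          calc ∑ j ∈ Finset.range p, (b (j*r + (i:ℕ)) + b (P - 1 - (j*r + (i:ℕ))))
              ≤ ∑ _j ∈ Finset.range p, (1 + ρ*(P:ℝ)/m) := Finset.sum_le_sum hpair
            _ = (p:ℝ)*(1 + ρ*(P:ℝ)/m) := by
                rw [Finset.sum_const, Finset.card_range, nsmul_eq_mul]
        linarith [hsum3]
      refine le_trans htotal ?_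
      have hmcast : (m:ℝ) = (q:ℝ)*(n:ℝ) + (r:ℝ) := by rw [hmqr]; push_cast; ring
      have hr1R : (1:ℝ) ≤ (r:ℝ) := by exact_mod_cast hr0
      have hrnR : (r:ℝ) + 1 ≤ (n:ℝ) := by exact_mod_cast hr
      rcases h2p with hqe | hqo
      · have hq24 : q = 2 ∨ 4 ≤ q := by omega
        have hPe : (P:ℝ) = (q:ℝ)*(r:ℝ) := by
          have h9 : P = q*r := by rw [hPdef, hBdef, ← hqe]; ring
          rw [h9]; push_cast; ring
        have hpe : (p:ℝ) = (q:ℝ)/2 := by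
          have h9 : (2:ℝ)*(p:ℝ) = (q:ℝ) := by exact_mod_cast hqe
          linarith
        rw [if_pos hqe, hPe, hpe]
        refine ineqE hs2 hst1 hst2 hρ ?_ hr1R hrnR (by linarith)
        rcases hq24 with h | h
        · exact Or.inl (by exact_mod_cast h)
        · exact Or.inr (by exact_mod_cast h)
      · have hq13 : q = 1 ∨ 3 ≤ q := by omega
        have hne : ¬ 2*p = q := by omega
        have hPo : (P:ℝ) = ((q:ℝ)+1)*(r:ℝ) := by
          have h9 : P = (q+1)*r := by rw [hPdef, hBdef, ← hqo]; ring
          rw [h9]; push_cast; ring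
        have hpo : (p:ℝ) = ((q:ℝ)+1)/2 := by
          have h9 : (2:ℝ)*(p:ℝ) = (q:ℝ)+1 := by exact_mod_cast hqo
          linarith
        rw [if_neg hne, hPo, hpo, add_zero]
        refine ineqO hs2 hst1 hst2 hρ ?_ hr1R hrnR (by linarith)
        rcases hq13 with h | h
        · exact Or.inl (by exact_mod_cast h)
        · exact Or.inr (by exact_mod_cast h)
    · -- big-bag machines: at most q bags, each at most ρ
      have hsub : Fv ⊆ Finset.Ico (R1 + q*((i:ℕ) - r)) (R1 + q*((i:ℕ) - r) + q) := by
        rw [hFv]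
        intro x hx
        simp only [Finset.mem_image, Finset.mem_filter, Finset.mem_univ, true_and] at hx
        obtain ⟨k, hσk, rfl⟩ := hx
        by_cases h1 : (k:ℕ) < P
        · exfalso
          have hv := hC1 k h1
          rw [hσk] at hv
          have hr0 : 0 < r := hrpos (by omega)
          have := Nat.mod_lt (min (k:ℕ) (P - 1 - (k:ℕ))) hr0
          omega
        · by_cases h2 : (k:ℕ) < R1
          · exfalso
            have hv := hC2 k h1 h2
            rw [hσk] at hv
            omega
          · have hv := hC3 k h1 h2
            rw [hσk] at hv
            have hd := Nat.div_add_mod ((k:ℕ) - R1) q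
            have hmo : ((k:ℕ) - R1) % q < q := Nat.mod_lt _ hq0
            have hj : (i:ℕ) - r = ((k:ℕ) - R1)/q := by omega
            rw [Finset.mem_Ico, hj]
            obtain ⟨c, hc⟩ : ∃ c, c = q*(((k:ℕ) - R1)/q) := ⟨_, rfl⟩
            rw [← hc] at hd ⊢
            omega
      have hqρ : ∑ x ∈ Fv, b x ≤ (q:ℝ)*ρ := by
        have hstep1 : ∑ x ∈ Fv, b x
            ≤ ∑ x ∈ Finset.Ico (R1 + q*((i:ℕ) - r)) (R1 + q*((i:ℕ) - r) + q), b x :=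
          Finset.sum_le_sum_of_subset_of_nonneg hsub (fun x _ _ => hb0 x)
        have hstep2 : ∑ x ∈ Finset.Ico (R1 + q*((i:ℕ) - r)) (R1 + q*((i:ℕ) - r) + q), b x
            ≤ ∑ _x ∈ Finset.Ico (R1 + q*((i:ℕ) - r)) (R1 + q*((i:ℕ) - r) + q), ρ :=
          Finset.sum_le_sum (fun x _ => hbρ x)
        have hstep3 : ∑ _x ∈ Finset.Ico (R1 + q*((i:ℕ) - r)) (R1 + q*((i:ℕ) - r) + q), ρ
            = (q:ℝ)*ρ := by
          rw [Finset.sum_const, Nat.card_Ico, nsmul_eq_mul]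
          congr 1
          rw [show R1 + q*((i:ℕ) - r) + q - (R1 + q*((i:ℕ) - r)) = q from by omega]
        linarith
      refine le_trans hqρ (ineqT hρ0.le hn0R ?_)
      have h9 : q*n ≤ m := by omega
      exact_mod_cast h9
end

section
/- For every integer k ≥ 1, set m = k² + 1 and consider the instance with k² jobs of processing time 1 and one job of processing time k on m machines. Consider the bag sizes b : Fin m → ℝ consisting of k+1 bags of size k (k bags each holding k unit jobs and one bag holding the size-k job) and m−k−1 bags of size 0; the maximum bag size k is the minimum possible over all partitions into m bags. Let the speeds s : Fin m → ℝ assign speed 1 to k² machines and speed k to one machine. Then the individual jobs can be scheduled on these machines so that the total processing time on each machine i is at most s_i (optimal makespan 1), yet for every assignment σ : Fin m → Fin m of the bags to the machines there exists a machine i with ∑_{j : σ(j)=i} b_j ≥ k · s_i, so the makespan is at least k. (Algorithms that minimize the size of the largest bag may not have a constant robustness factor.) -/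
/-- Algorithms that minimize the size of the largest bag may not have a constant
robustness factor: with m = k²+1 machines, k² unit jobs and one job of size k,
the bag sizes (k+1 bags of size k, rest 0) minimize the largest bag, yet against
speeds (k² machines of speed 1, one of speed k) the optimal makespan is 1 while
every bag assignment has makespan at least k. -/
theorem min_max_bag_not_robust (k : ℕ) (hk : 1 ≤ k)
    (p : Fin (k ^ 2 + 1) → ℝ)
    (hp : ∀ j : Fin (k ^ 2 + 1), p j = if (j : ℕ) < k ^ 2 then 1 else (k : ℝ))
    (b : Fin (k ^ 2 + 1) → ℝ)
    (hb : ∀ i : Fin (k ^ 2 + 1), b i = if (i : ℕ) < k + 1 then (k : ℝ) else 0)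
    (s : Fin (k ^ 2 + 1) → ℝ)
    (hs : ∀ i : Fin (k ^ 2 + 1), s i = if (i : ℕ) < k ^ 2 then 1 else (k : ℝ)) :
    -- every partition of the jobs into m bags has a bag of size at least k
    (∀ bag : Fin (k ^ 2 + 1) → Fin (k ^ 2 + 1), ∃ i : Fin (k ^ 2 + 1),
      (k : ℝ) ≤ ∑ j ∈ Finset.univ.filter (fun j => bag j = i), p j) ∧
    -- the individual jobs can be scheduled with makespan 1
    (∃ τ : Fin (k ^ 2 + 1) → Fin (k ^ 2 + 1), ∀ i : Fin (k ^ 2 + 1),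
      ∑ j ∈ Finset.univ.filter (fun j => τ j = i), p j ≤ s i) ∧
    -- but every assignment of the bags suffers makespan at least k
    (∀ σ : Fin (k ^ 2 + 1) → Fin (k ^ 2 + 1), ∃ i : Fin (k ^ 2 + 1),
      (k : ℝ) * s i ≤ ∑ j ∈ Finset.univ.filter (fun j => σ j = i), b j) := by

  have hk2 : k + 1 ≤ k ^ 2 + 1 := by nlinarith
  have hpnn : ∀ j, 0 ≤ p j := by
    intro j; rw [hp]; split <;> positivity
  have hbnn : ∀ j, 0 ≤ b j := by
    intro j; rw [hb]; split <;> positivity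
  set J : Fin (k ^ 2 + 1) := ⟨k ^ 2, lt_add_one _⟩ with hJ
  refine ⟨?_, ?_, ?_⟩
  · intro bag
    refine ⟨bag J, ?_⟩
    have hmem : J ∈ Finset.univ.filter (fun j => bag j = bag J) := by simp
    calc (k : ℝ) = p J := by rw [hp]; simp [hJ]
      _ ≤ _ := Finset.single_le_sum (fun j _ => hpnn j) hmem
  · refine ⟨id, fun i => ?_⟩
    have hfi : Finset.univ.filter (fun j => id j = i) = {i} := by
      ext j; simp
    rw [hfi, Finset.sum_singleton, hp, hs]
  · intro σ
    by_cases h : ∃ j : Fin (k ^ 2 + 1), (j : ℕ) < k + 1 ∧ ((σ j : ℕ) < k ^ 2)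
    · obtain ⟨j, hj1, hj2⟩ := h
      refine ⟨σ j, ?_⟩
      have hsj : (k : ℝ) * s (σ j) = k := by rw [hs]; simp [hj2]
      rw [hsj]
      calc (k : ℝ) = b j := by rw [hb]; simp [hj1]
        _ ≤ _ := Finset.single_le_sum (fun j _ => hbnn j) (by simp)
    · push_neg at h
      refine ⟨J, ?_⟩
      have hsJ : s J = k := by rw [hs]; simp [hJ]
      rw [hsJ]
      have hsub : Finset.univ.filter (fun j : Fin (k ^ 2 + 1) => (j : ℕ) < k + 1)
          ⊆ Finset.univ.filter (fun j => σ j = J) := by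
        intro j hj
        simp only [Finset.mem_filter, Finset.mem_univ, true_and] at hj ⊢
        have h1 := h j hj
        have h2 : (σ j : ℕ) < k ^ 2 + 1 := (σ j).isLt
        apply Fin.ext
        show (σ j : ℕ) = k ^ 2
        omega
      have hcard : (Finset.univ.filter (fun j : Fin (k ^ 2 + 1) => (j : ℕ) < k + 1)).card
          = k + 1 := by
        have heq : Finset.univ.filter (fun j : Fin (k ^ 2 + 1) => (j : ℕ) < k + 1)
            = Finset.map (Fin.castLEEmb hk2) Finset.univ := by
          ext j
          simp only [Finset.mem_filter, Finset.mem_univ, true_and, Finset.mem_map]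
          constructor
          · intro hj
            exact ⟨⟨j, hj⟩, Fin.ext rfl⟩
          · rintro ⟨x, -, rfl⟩
            simpa using x.isLt
        rw [heq, Finset.card_map, Finset.card_univ, Fintype.card_fin]
      have hsum : ∑ j ∈ Finset.univ.filter (fun j : Fin (k ^ 2 + 1) => (j : ℕ) < k + 1), b j
          = ((k : ℝ) + 1) * k := by
        have hbv : ∀ j ∈ Finset.univ.filter (fun j : Fin (k ^ 2 + 1) => (j : ℕ) < k + 1),
            b j = (k : ℝ) := by
          intro j hj
          rw [hb]
          simp only [Finset.mem_filter] at hj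
          simp [hj.2]
        rw [Finset.sum_congr rfl hbv, Finset.sum_const, hcard]
        push_cast; ring
      calc (k : ℝ) * k ≤ ((k : ℝ) + 1) * k := by nlinarith [Nat.cast_nonneg (α := ℝ) k]
        _ = _ := hsum.symm
        _ ≤ _ := Finset.sum_le_sum_of_subset_of_nonneg hsub (fun j _ _ => hbnn j)
end

section
/- For every integer m ≥ 1, consider m(2m−1) unit-size jobs grouped into m bags each of exactly 2m−1 jobs (a balanced bag partition), and the speeds s : Fin m → ℝ given by s_1 = m and s_i = 2m for i = 2, …, m. Then the individual unit jobs can be scheduled so that machine i receives at most s_i jobs (optimal makespan 1), yet for every assignment σ : Fin m → Fin m of the bags to the machines there exists a machine i whose load ∑_{k : σ(k)=i} (2m−1) is at least (2 − 1/m) · s_i. (No balanced algorithm for speed-robust scheduling can obtain a better robustness factor than 2 − 1/m.) -/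
/-- No balanced algorithm for speed-robust scheduling can obtain a better robustness
factor than 2 − 1/m: with m(2m−1) unit jobs in m bags of size 2m−1 each, and speeds
s_1 = m, s_i = 2m otherwise, the optimal makespan is 1 but every bag assignment has a
machine with load at least (2 − 1/m)·s_i. -/
theorem balanced_lower_bound (m : ℕ) (hm : 1 ≤ m) (s : Fin m → ℝ)
    (hs : ∀ i : Fin m, s i = if (i : ℕ) = 0 then (m : ℝ) else 2 * (m : ℝ)) :
    (∃ M : Fin m → ℕ, (∑ i, M i) = m * (2 * m - 1) ∧ ∀ i, (M i : ℝ) ≤ s i) ∧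
    ∀ σ : Fin m → Fin m, ∃ i : Fin m,
      (2 - 1 / (m : ℝ)) * s i ≤
        ∑ k ∈ Finset.univ.filter (fun k => σ k = i), (2 * (m : ℝ) - 1) := by
  have hm0 : (m : ℝ) ≠ 0 := by positivity
  have hm1 : (1 : ℝ) ≤ (m : ℝ) := by exact_mod_cast hm
  obtain ⟨i0, hi0⟩ : ∃ i : Fin m, (i : ℕ) = 0 := ⟨⟨0, hm⟩, rfl⟩
  constructor
  · refine ⟨fun i => if (i : ℕ) = 0 then m else 2 * m, ?_, ?_⟩
    · have h1 : (Finset.univ : Finset (Fin m)) = insert i0 (Finset.univ.erase i0) := by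
        simp [Finset.insert_erase]
      rw [h1, Finset.sum_insert (Finset.notMem_erase _ _)]
      have h2 : ∀ i ∈ Finset.univ.erase i0,
          (if (i : ℕ) = 0 then m else 2 * m) = 2 * m := by
        intro i hi
        have hne : i ≠ i0 := Finset.ne_of_mem_erase hi
        have : (i : ℕ) ≠ 0 := fun h => hne (Fin.ext (by rw [h, hi0]))
        simp [this]
      rw [Finset.sum_congr rfl h2, Finset.sum_const, Finset.card_erase_of_mem (by simp),
        Finset.card_univ, Fintype.card_fin, if_pos hi0, smul_eq_mul]
      obtain ⟨k, rfl⟩ := Nat.exists_eq_add_of_le hm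
      have e1 : 1 + k - 1 = k := by omega
      have e2 : 2 * (1 + k) - 1 = 2 * k + 1 := by omega
      rw [e1, e2]; ring
    · intro i
      rw [hs i]
      by_cases h : (i : ℕ) = 0 <;> simp [h]
  · intro σ
    by_cases h : ∃ k, (σ k : ℕ) = 0
    · obtain ⟨k, hk⟩ := h
      refine ⟨σ k, ?_⟩
      rw [hs (σ k), if_pos hk, Finset.sum_const, nsmul_eq_mul]
      have hcard : 1 ≤ (Finset.univ.filter (fun j => σ j = σ k)).card :=
        Finset.card_pos.mpr ⟨k, by simp⟩
      have hcard' : (1 : ℝ) ≤ ((Finset.univ.filter (fun j => σ j = σ k)).card : ℝ) := by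
        exact_mod_cast hcard
      have key : (2 - 1 / (m : ℝ)) * m = 2 * m - 1 := by field_simp
      rw [key]
      nlinarith
    · push_neg at h
      have hmaps : ∀ k ∈ (Finset.univ : Finset (Fin m)), σ k ∈ Finset.univ.erase i0 := by
        intro k _
        refine Finset.mem_erase.mpr ⟨fun heq => h k (by rw [heq, hi0]), Finset.mem_univ _⟩
      have hlt : (Finset.univ.erase i0).card * 1 < (Finset.univ : Finset (Fin m)).card := by
        rw [Finset.card_erase_of_mem (Finset.mem_univ _), Finset.card_univ, Fintype.card_fin]
        omega
      obtain ⟨i, hmem, hi⟩ := Finset.exists_lt_card_fiber_of_mul_lt_card_of_maps_to hmaps hlt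
      refine ⟨i, ?_⟩
      have hiz : (i : ℕ) ≠ 0 := by
        intro hz
        exact Finset.ne_of_mem_erase hmem (Fin.ext (by rw [hz, hi0]))
      rw [hs i, if_neg hiz, Finset.sum_const, nsmul_eq_mul]
      have hcard' : (2 : ℝ) ≤ ((Finset.univ.filter (fun k => σ k = i)).card : ℝ) := by
        exact_mod_cast hi
      have key : (2 - 1 / (m : ℝ)) * (2 * m) = 2 * (2 * m - 1) := by field_simp
      rw [key]
      nlinarith
end

section
/- Let m ≥ 1 and let p : Fin n → ℝ be job processing times with p_j ≥ 0 for all j and p nonincreasing (p_j ≥ p_{j'} whenever j ≤ j'). Let bag : Fin n → Fin m be an LPT bag assignment, i.e., for every job j and every bag index i, ∑_{j' < j, bag(j') = bag(j)} p_{j'} ≤ ∑_{j' < j, bag(j') = i} p_{j'} (each job is placed into a bag of currently smallest total size). Then for every speed vector s : Fin m → ℝ with s_i ≥ 0, every real C ≥ 0, and every job schedule τ : Fin n → Fin m satisfying ∑_{j : τ(j)=i} p_j ≤ C · s_i for all i, there exists an assignment σ : Fin m → Fin m of the bags to the machines such that ∑_{j : σ(bag(j)) = i} p_j ≤ (2 −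 1/m) · C · s_i for all machines i. (LPT is (2−1/m)-robust for speed-robust scheduling.) -/
open Finset

namespace LptRobust

variable {m n : ℕ}

/-- Total processing time of bag `k`. -/
noncomputable def B (p : Fin n → ℝ) (bag : Fin n → Fin m) (k : Fin m) : ℝ :=
  ∑ j ∈ univ.filter (fun j => bag j = k), p j

lemma B_nonneg (p : Fin n → ℝ) (hp : ∀ j, 0 ≤ p j) (bag : Fin n → Fin m) (k : Fin m) :
    0 ≤ B p bag k := sum_nonneg fun j _ => hp j

lemma sum_B (p : Fin n → ℝ) (bag : Fin n → Fin m) :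
    ∑ k, B p bag k = ∑ j, p j := by
  classical
  unfold B
  rw [Finset.sum_fiberwise_eq_sum_filter univ univ bag p]
  simp

/-- Key facts about the last (i.e. smallest) job of a nonempty bag `k` built by LPT. -/
lemma lastfact (p : Fin n → ℝ) (hp : ∀ j, 0 ≤ p j)
    (hmono : ∀ j j' : Fin n, j ≤ j' → p j' ≤ p j)
    (bag : Fin n → Fin m)
    (hlpt : ∀ j : Fin n, ∀ i : Fin m,
      ∑ j' ∈ Finset.univ.filter (fun j' => j' < j ∧ bag j' = bag j), p j' ≤
        ∑ j' ∈ Finset.univ.filter (fun j' => j' < j ∧ bag j' = i), p j')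
    (k : Fin m) (hne : (univ.filter (fun j => bag j = k)).Nonempty) :
    ∃ jk, bag jk = k ∧ (∀ j', bag j' = k → p jk ≤ p j')
      ∧ (∀ i, B p bag k ≤ B p bag i + p jk)
      ∧ p jk ≤ B p bag k
      ∧ (∀ j', bag j' = k → j' ≠ jk → p jk + p jk ≤ B p bag k) := by
  classical
  set F := univ.filter (fun j => bag j = k) with hF
  set jk := F.max' hne with hjk
  have hjkF : jk ∈ F := F.max'_mem hne
  have hbagjk : bag jk = k := (mem_filter.mp hjkF).2
  have hminp : ∀ j', bag j' = k → p jk ≤ p j' := by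
    intro j' hj'
    exact hmono j' jk (F.le_max' j' (mem_filter.mpr ⟨mem_univ _, hj'⟩))
  have hsplitF : F = insert jk (univ.filter (fun j' => j' < jk ∧ bag j' = k)) := by
    ext x
    simp only [hF, mem_insert, mem_filter, mem_univ, true_and]
    constructor
    · intro hx
      rcases lt_or_eq_of_le (F.le_max' x (mem_filter.mpr ⟨mem_univ _, hx⟩)) with h1 | h1
      · exact Or.inr ⟨h1, hx⟩
      · exact Or.inl h1
    · rintro (rfl | ⟨_, hx⟩)
      · exact hbagjk
      · exact hx
  have hBsplit : B p bag k
      = p jk + ∑ j' ∈ univ.filter (fun j' => j' < jk ∧ bag j' = k), p j' := by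
    rw [show B p bag k = ∑ j ∈ F, p j from rfl, hsplitF, sum_insert (by simp)]
  refine ⟨jk, hbagjk, hminp, ?_, ?_, ?_⟩
  · intro i
    have h1 := hlpt jk i
    rw [hbagjk] at h1
    have h2 : ∑ j' ∈ univ.filter (fun j' => j' < jk ∧ bag j' = i), p j' ≤ B p bag i := by
      apply sum_le_sum_of_subset_of_nonneg
      · intro x hx
        simp only [mem_filter, mem_univ, true_and] at hx ⊢
        exact hx.2
      · intro x _ _; exact hp x
    linarith [hBsplit, h1, h2]
  · have h0 : 0 ≤ ∑ j' ∈ univ.filter (fun j' => j' < jk ∧ bag j' = k), p j' :=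
      sum_nonneg fun x _ => hp x
    linarith [hBsplit]
  · intro j' hj' hne'
    have hsub : ({j', jk} : Finset (Fin n)) ⊆ F := by
      intro x hx
      rcases mem_insert.mp hx with rfl | hx
      · exact mem_filter.mpr ⟨mem_univ _, hj'⟩
      · rw [mem_singleton.mp hx]; exact hjkF
    have hps : p j' + p jk ≤ B p bag k := by
      calc p j' + p jk = ∑ x ∈ ({j', jk} : Finset (Fin n)), p x := (sum_pair hne').symm
        _ ≤ ∑ x ∈ F, p x := sum_le_sum_of_subset_of_nonneg hsub fun x _ _ => hp x
        _ = B p bag k := rfl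
    have := hminp j' hj'
    linarith

set_option maxHeartbeats 2000000 in
/-- The core step: if a partial assignment of the bags in `A` satisfies the load
bounds and `k₀` is a largest unassigned bag, then `k₀` fits on some machine. -/
lemma fit (hm : 1 ≤ m)
    (p : Fin n → ℝ) (hp : ∀ j, 0 ≤ p j)
    (hmono : ∀ j j' : Fin n, j ≤ j' → p j' ≤ p j)
    (bag : Fin n → Fin m)
    (hlpt : ∀ j : Fin n, ∀ i : Fin m,
      ∑ j' ∈ Finset.univ.filter (fun j' => j' < j ∧ bag j' = bag j), p j' ≤
        ∑ j' ∈ Finset.univ.filter (fun j' => j' < j ∧ bag j' = i), p j')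
    (c : Fin m → ℝ)
    (τ : Fin n → Fin m)
    (hτ : ∀ i, ∑ j ∈ univ.filter (fun j => τ j = i), p j ≤ c i)
    (A : Finset (Fin m)) (k₀ : Fin m) (hk₀ : k₀ ∉ A)
    (f : Fin m → Fin m)
    (hload : ∀ i, ∑ k ∈ A.filter (fun k => f k = i), B p bag k ≤ (2 - 1/(m:ℝ)) * c i)
    (hmax : ∀ l ∈ A, B p bag k₀ ≤ B p bag l) :
    ∃ i₀, (∑ k ∈ A.filter (fun k => f k = i₀), B p bag k) + B p bag k₀
      ≤ (2 - 1/(m:ℝ)) * c i₀ := by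
  classical
  by_contra hcon
  push_neg at hcon
  set M : ℝ := (m : ℝ) with hMdef
  have hM1 : (1:ℝ) ≤ M := by rw [hMdef]; exact_mod_cast hm
  have hM0 : (0:ℝ) < M := by linarith
  set ρ : ℝ := 2 - 1/M with hρdef
  have hMρ : M * ρ = 2*M - 1 := by
    rw [hρdef]; field_simp
  have hρ1 : 1 ≤ ρ := by
    rw [hρdef]
    have h1 : 1/M ≤ 1 := by rw [div_le_one hM0]; exact hM1
    linarith
  have hρ2 : ρ ≤ 2 := by
    rw [hρdef]
    have : 0 < 1/M := by positivity
    linarith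
  have hρ0 : (0:ℝ) < ρ := by linarith
  clear_value M ρ
  set S := ∑ k ∈ A, B p bag k with hSdef
  set K := B p bag k₀ with hKdef
  clear_value S K
  have hKpos : 0 < K := by
    have h1 := hcon ⟨0, hm⟩
    have h2 := hload ⟨0, hm⟩
    linarith
  have hLS : ∑ i, (∑ k ∈ A.filter (fun k => f k = i), B p bag k) = S := by
    rw [Finset.sum_fiberwise_eq_sum_filter A univ f (B p bag)]
    rw [filter_true_of_mem (fun x _ => mem_univ (f x))]
    exact hSdef.symm
  have hkey : ρ * (∑ i, c i) < S + M * K := by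
    have hne : (univ : Finset (Fin m)).Nonempty := ⟨⟨0, hm⟩, mem_univ _⟩
    have h1 : ∑ i, (ρ * c i)
        < ∑ i, ((∑ k ∈ A.filter (fun k => f k = i), B p bag k) + K) :=
      sum_lt_sum_of_nonempty hne fun i _ => hcon i
    calc ρ * ∑ i, c i = ∑ i, ρ * c i := by rw [mul_sum]
      _ < ∑ i, ((∑ k ∈ A.filter (fun k => f k = i), B p bag k) + K) := h1
      _ = S + M * K := by
          rw [sum_add_distrib, hLS, sum_const, card_univ, Fintype.card_fin,
            nsmul_eq_mul, hMdef]
  have hTc : ∑ j, p j ≤ ∑ i, c i := by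
    have h1 : ∑ i, ∑ j ∈ univ.filter (fun j => τ j = i), p j = ∑ j, p j := by
      rw [Finset.sum_fiberwise_eq_sum_filter univ univ τ p]
      simp
    calc ∑ j, p j = ∑ i, ∑ j ∈ univ.filter (fun j => τ j = i), p j := h1.symm
      _ ≤ ∑ i, c i := sum_le_sum fun i _ => hτ i
  have hfibne : (univ.filter (fun j => bag j = k₀)).Nonempty := by
    by_contra hemp
    rw [not_nonempty_iff_eq_empty] at hemp
    have hK0 : K = 0 := by
      rw [hKdef, show B p bag k₀ = ∑ j ∈ univ.filter (fun j => bag j = k₀), p j from rfl,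
        hemp, sum_empty]
    linarith
  obtain ⟨j, hbagj, hminj, hlej, hjK, hpairj⟩ := lastfact p hp hmono bag hlpt k₀ hfibne
  rw [← hKdef] at hlej hjK hpairj
  have hq0 : 0 ≤ p j := hp j
  have hqK : p j ≤ K := hjK
  set As := insert k₀ A with hAs
  set R := Asᶜ with hR
  have hAcard : As.card = A.card + 1 := card_insert_of_notMem hk₀
  have hcards : As.card + R.card = m := by
    rw [hR, Finset.card_add_card_compl, Fintype.card_fin]
  set a' : ℝ := (A.card : ℝ) with ha'def
  set r' : ℝ := (R.card : ℝ) with hr'def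
  have hMar : M = a' + 1 + r' := by
    rw [hMdef, ha'def, hr'def]
    rw [hAcard] at hcards
    exact_mod_cast (by omega : m = (A.card + 1) + R.card)
  have haK : a' * K ≤ S := by
    have h1 := Finset.card_nsmul_le_sum A (B p bag) K (fun l hl => hmax l hl)
    rw [nsmul_eq_mul, ← hSdef] at h1
    exact h1
  have ha'0 : (0:ℝ) ≤ a' := by rw [ha'def]; positivity
  clear_value a' r'
  have hSsplit : S + K + ∑ k ∈ R, B p bag k = ∑ j', p j' := by
    have h0 : ∑ k ∈ As, B p bag k = K + S := by
      rw [hAs, sum_insert hk₀, ← hKdef, ← hSdef]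
    have h1 := Finset.sum_add_sum_compl As (B p bag)
    rw [← hR, sum_B] at h1
    linarith [h0, h1]
  have hTlow : ∀ x : ℝ, (∀ k ∈ R, K - x ≤ B p bag k) →
      S + K + r' * (K - x) ≤ ∑ i, c i := by
    intro x hx
    have h1 : r' * (K - x) ≤ ∑ k ∈ R, B p bag k := by
      have h2 := Finset.card_nsmul_le_sum R (B p bag) (K - x) hx
      rw [nsmul_eq_mul, ← hr'def] at h2
      exact h2
    linarith [hSsplit, hTc]
  rcases Nat.eq_zero_or_pos R.card with hr0 | hrpos
  · -- no unassigned bags besides k₀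
    have hr0' : r' = 0 := by rw [hr'def, hr0]; simp
    have hRnn : 0 ≤ ∑ k ∈ R, B p bag k := sum_nonneg fun k _ => B_nonneg p hp bag k
    have hSK : S + K ≤ ∑ i, c i := by linarith [hSsplit, hTc]
    have h2 : ρ * (S + K) < S + M * K :=
      lt_of_le_of_lt (mul_le_mul_of_nonneg_left hSK (by linarith)) hkey
    have h3 : (2*M - 1) * (S + K) < M * S + M^2 * K := by
      calc (2*M - 1) * (S + K) = M * (ρ * (S + K)) := by rw [← hMρ]; ring
        _ < M * (S + M * K) := by
            exact mul_lt_mul_of_pos_left h2 hM0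
        _ = M * S + M^2 * K := by ring
    have hMa : M = a' + 1 := by rw [hMar, hr0']; ring
    have hint : a' * (a' * K) ≤ a' * S :=
      mul_le_mul_of_nonneg_left haK ha'0
    rw [hMa] at h3
    nlinarith [h3, hKpos, hint, haK]
  · -- there are other unassigned bags
    have hr1 : (1:ℝ) ≤ r' := by rw [hr'def]; exact_mod_cast hrpos
    have chain : ∀ x : ℝ, 0 ≤ x → S + K + r' * (K - x) ≤ ∑ i, c i → K < ρ * x := by
      intro x hx0 hxT
      have h2 : ρ * (S + K + r' * (K - x)) < S + M * K :=
        lt_of_le_of_lt (mul_le_mul_of_nonneg_left hxT (by linarith)) hkey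
      have h3 : (2*M - 1) * (S + K + r' * (K - x)) < M * S + M^2 * K := by
        calc (2*M - 1) * (S + K + r' * (K - x)) = M * (ρ * (S + K + r' * (K - x))) := by
              rw [← hMρ]; ring
          _ < M * (S + M * K) := mul_lt_mul_of_pos_left h2 hM0
          _ = M * S + M^2 * K := by ring
      have haK2 : (M - 1) * (a' * K) ≤ (M - 1) * S :=
        mul_le_mul_of_nonneg_left haK (by linarith)
      have ha' : a' = M - 1 - r' := by rw [hMar]; ring
      rw [ha'] at haK2
      -- From h3 and haK2 : r' * ((2M-1) * x) > r' * (M * K)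
      have h4 : r' * (M * K) < r' * ((2*M - 1) * x) := by nlinarith [h3, haK2]
      have h5 : M * K < (2*M - 1) * x := by
        rcases lt_or_ge (M * K) ((2*M-1) * x) with h | h
        · exact h
        · exfalso
          have h6 : r' * ((2*M-1)*x) ≤ r' * (M*K) :=
            mul_le_mul_of_nonneg_left h (by linarith)
          linarith
      have h7 : M * K < M * (ρ * x) := by
        calc M * K < (2*M - 1) * x := h5
          _ = M * ρ * x := by rw [hMρ]
          _ = M * (ρ * x) := by ring
      exact lt_of_mul_lt_mul_left h7 hM0.le
    have hKρq : K < ρ * p j := by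
      apply chain (p j) hq0
      apply hTlow
      intro k _
      linarith [hlej k]
    have hqpos : 0 < p j := by
      by_contra h'
      push_neg at h'
      have : ρ * p j ≤ ρ * 0 := mul_le_mul_of_nonneg_left h' (by linarith)
      simp at this
      linarith
    have hsingle : ∀ j', bag j' = k₀ → j' = j := by
      intro j' hj'
      by_contra hne'
      have h2q := hpairj j' hj' hne'
      have h3 : ρ * p j ≤ 2 * p j := by
        nlinarith [mul_nonneg (by linarith : (0:ℝ) ≤ 2 - ρ) hq0]
      linarith
    have hKq : K = p j := by
      have h1 : (univ.filter (fun j' => bag j' = k₀)) = {j} := by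
        ext x
        simp only [mem_filter, mem_univ, true_and, mem_singleton]
        exact ⟨fun hx => hsingle x hx, fun hx => hx ▸ hbagj⟩
      rw [hKdef, show B p bag k₀ = ∑ j' ∈ univ.filter (fun j' => bag j' = k₀), p j' from rfl,
        h1, sum_singleton]
    have hbigA : ∀ j' : Fin n, bag j' ∈ As → K < ρ * p j' := by
      intro j' hj'
      rcases mem_insert.mp hj' with h' | h'
      · have := hsingle j' h'
        rw [this]
        exact hKρq
      · obtain ⟨jl, hbjl, hminl, hlel, hjlB, _⟩ :=
          lastfact p hp hmono bag hlpt (bag j') ⟨j', mem_filter.mpr ⟨mem_univ _, rfl⟩⟩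
        have hKl : K < ρ * p jl := by
          apply chain (p jl) (hp jl)
          apply hTlow
          intro k _
          have h1 : B p bag (bag j') ≤ B p bag k + p jl := hlel k
          have h2 : K ≤ B p bag (bag j') := hmax _ h'
          linarith
        have h1 : p jl ≤ p j' := hminl j' rfl
        have h2 : ρ * p jl ≤ ρ * p j' := mul_le_mul_of_nonneg_left h1 (by linarith)
        linarith
    set M' := univ.filter (fun i => K < ρ * c i) with hM'def
    have hjc : ∀ j', p j' ≤ c (τ j') := by
      intro j'
      have h1 : p j' ≤ ∑ x ∈ univ.filter (fun x => τ x = τ j'), p x :=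
        single_le_sum (f := p) (fun x _ => hp x) (mem_filter.mpr ⟨mem_univ _, rfl⟩)
      exact le_trans h1 (hτ (τ j'))
    have hmass : S + K ≤ ∑ i ∈ M', c i := by
      have e1 : S + K = ∑ k ∈ As, B p bag k := by
        rw [hAs, sum_insert hk₀, ← hKdef, ← hSdef]; ring
      have e2 : ∑ k ∈ As, B p bag k = ∑ j' ∈ univ.filter (fun j' => bag j' ∈ As), p j' := by
        rw [← Finset.sum_fiberwise_eq_sum_filter univ As bag p]
        rfl
      have e3 : ∑ j' ∈ univ.filter (fun j' => bag j' ∈ As), p j'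
          ≤ ∑ j' ∈ univ.filter (fun j' => K < ρ * p j'), p j' := by
        apply sum_le_sum_of_subset_of_nonneg
        · intro x hx
          rw [mem_filter] at hx ⊢
          exact ⟨mem_univ _, hbigA x hx.2⟩
        · exact fun x _ _ => hp x
      have e4 : ∀ j' ∈ univ.filter (fun j' => K < ρ * p j'), τ j' ∈ M' := by
        intro j' hj'
        rw [mem_filter] at hj'
        rw [hM'def, mem_filter]
        exact ⟨mem_univ _,
          lt_of_lt_of_le hj'.2 (mul_le_mul_of_nonneg_left (hjc j') (by linarith))⟩
      have e5 : ∑ j' ∈ univ.filter (fun j' => K < ρ * p j'), p j'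
          = ∑ i ∈ M', ∑ j' ∈ (univ.filter (fun j' => K < ρ * p j')).filter
              (fun j' => τ j' = i), p j' := by
        rw [Finset.sum_fiberwise_eq_sum_filter (univ.filter (fun j' => K < ρ * p j')) M' τ p]
        rw [filter_true_of_mem e4]
      have e6 : ∀ i ∈ M', ∑ j' ∈ (univ.filter (fun j' => K < ρ * p j')).filter
          (fun j' => τ j' = i), p j' ≤ c i := by
        intro i _
        refine le_trans (sum_le_sum_of_subset_of_nonneg ?_ fun x _ _ => hp x) (hτ i)
        intro x hx
        rw [mem_filter] at hx ⊢
        exact ⟨mem_univ _, hx.2⟩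
      calc S + K = ∑ k ∈ As, B p bag k := e1
        _ = ∑ j' ∈ univ.filter (fun j' => bag j' ∈ As), p j' := e2
        _ ≤ ∑ j' ∈ univ.filter (fun j' => K < ρ * p j'), p j' := e3
        _ = ∑ i ∈ M', ∑ j' ∈ (univ.filter (fun j' => K < ρ * p j')).filter
              (fun j' => τ j' = i), p j' := e5
        _ ≤ ∑ i ∈ M', c i := sum_le_sum e6
    have hM'cardA : M'.card ≤ A.card := by
      have hex : ∀ i ∈ M', ∃ k, k ∈ A ∧ f k = i := by
        intro i hi
        by_contra hno
        push_neg at hno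
        have hemp : A.filter (fun k => f k = i) = ∅ := by
          rw [filter_eq_empty_iff]
          exact fun k hk => hno k hk
        have h1 := hcon i
        rw [hemp, sum_empty] at h1
        rw [hM'def, mem_filter] at hi
        linarith [hi.2]
      have hex' : ∀ i : Fin m, ∃ k, i ∈ M' → k ∈ A ∧ f k = i := by
        intro i
        by_cases hi : i ∈ M'
        · obtain ⟨k, hk⟩ := hex i hi
          exact ⟨k, fun _ => hk⟩
        · exact ⟨k₀, fun h => absurd h hi⟩
      choose gg hgg using hex'
      refine card_le_card_of_injOn gg (fun i hi => (hgg i hi).1) ?_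
      intro x hx y hy hxy
      have h1 := (hgg x (Finset.mem_coe.mp hx)).2
      have h2 := (hgg y (Finset.mem_coe.mp hy)).2
      rw [← h1, ← h2, hxy]
    have hM'load : ∑ i ∈ M', ∑ k ∈ A.filter (fun k => f k = i), B p bag k ≤ S := by
      rw [Finset.sum_fiberwise_eq_sum_filter A M' f (B p bag)]
      calc ∑ k ∈ A.filter (fun k => f k ∈ M'), B p bag k
          ≤ ∑ k ∈ A, B p bag k := sum_le_sum_of_subset_of_nonneg (filter_subset _ _)
            (fun k _ _ => B_nonneg p hp bag k)
        _ = S := hSdef.symm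
    have hm4 : ρ * (∑ i ∈ M', c i) - (M'.card : ℝ) * K ≤ S := by
      have h1 : ∀ i ∈ M', ρ * c i - K ≤ ∑ k ∈ A.filter (fun k => f k = i), B p bag k :=
        fun i _ => by linarith [hcon i]
      have h2 := sum_le_sum h1
      rw [sum_sub_distrib, ← mul_sum, sum_const, nsmul_eq_mul] at h2
      linarith [hM'load]
    have hacard : a' ≤ M - 1 := by
      have h1 : As.card ≤ m := by
        have := card_le_card (subset_univ As)
        rwa [card_univ, Fintype.card_fin] at this
      rw [hAcard] at h1
      rw [ha'def, hMdef]
      have : (A.card : ℝ) + 1 ≤ (m : ℝ) := by exact_mod_cast h1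
      linarith
    have hMcK : (M'.card : ℝ) * K ≤ a' * K := by
      apply mul_le_mul_of_nonneg_right _ hKpos.le
      rw [ha'def]
      exact_mod_cast hM'cardA
    have hfin : ρ * (S + K) - a' * K ≤ S := by
      have h1 : ρ * (S + K) ≤ ρ * ∑ i ∈ M', c i :=
        mul_le_mul_of_nonneg_left hmass (by linarith)
      linarith [hm4, hMcK]
    have hMfin : (2*M - 1) * (S + K) - M * (a' * K) ≤ M * S := by
      calc (2*M - 1) * (S + K) - M * (a' * K) = M * (ρ * (S + K) - a' * K) := by
            rw [← hMρ]; ring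
        _ ≤ M * S := mul_le_mul_of_nonneg_left hfin hM0.le
    have hint2 : (M - 1) * (a' * K) ≤ (M - 1) * S :=
      mul_le_mul_of_nonneg_left haK (by linarith)
    have hint3 : a' * K ≤ (M - 1) * K := mul_le_mul_of_nonneg_right hacard hKpos.le
    nlinarith [hMfin, hint2, hint3, mul_pos hM0 hKpos]

set_option maxHeartbeats 1000000 in
/-- Iteratively assign all the bags, largest first. -/
lemma pack (hm : 1 ≤ m)
    (p : Fin n → ℝ) (hp : ∀ j, 0 ≤ p j)
    (hmono : ∀ j j' : Fin n, j ≤ j' → p j' ≤ p j)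
    (bag : Fin n → Fin m)
    (hlpt : ∀ j : Fin n, ∀ i : Fin m,
      ∑ j' ∈ Finset.univ.filter (fun j' => j' < j ∧ bag j' = bag j), p j' ≤
        ∑ j' ∈ Finset.univ.filter (fun j' => j' < j ∧ bag j' = i), p j')
    (c : Fin m → ℝ)
    (τ : Fin n → Fin m)
    (hτ : ∀ i, ∑ j ∈ univ.filter (fun j => τ j = i), p j ≤ c i) :
    ∀ N : ℕ, ∀ s : Finset (Fin m), s.card ≤ N →
      (∀ k ∈ s, ∀ l, l ∉ s → B p bag k ≤ B p bag l) →
      ∀ f : Fin m → Fin m,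
        (∀ i, ∑ k ∈ sᶜ.filter (fun k => f k = i), B p bag k ≤ (2 - 1/(m:ℝ)) * c i) →
        ∃ g : Fin m → Fin m,
          ∀ i, ∑ k ∈ univ.filter (fun k => g k = i), B p bag k ≤ (2 - 1/(m:ℝ)) * c i := by
  classical
  intro N
  induction N with
  | zero =>
    intro s hs _ f hf
    have hse : s = ∅ := card_eq_zero.mp (Nat.le_zero.mp hs)
    refine ⟨f, fun i => ?_⟩
    have := hf i
    rwa [hse, compl_empty] at this
  | succ N ih =>
    intro s hs hord f hf
    rcases s.eq_empty_or_nonempty with rfl | hsne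
    · refine ⟨f, fun i => ?_⟩
      have := hf i
      rwa [compl_empty] at this
    · obtain ⟨k₀, hk₀s, hk₀max⟩ := s.exists_max_image (B p bag) hsne
      obtain ⟨i₀, hi₀⟩ := fit hm p hp hmono bag hlpt c τ hτ sᶜ k₀
        (by simp [hk₀s]) f hf
        (fun l hl => hord k₀ hk₀s l (mem_compl.mp hl))
      have hcompl : (s.erase k₀)ᶜ = insert k₀ sᶜ := Finset.compl_erase
      have hsame : ∀ i, (sᶜ.filter (fun k => Function.update f k₀ i₀ k = i))
          = sᶜ.filter (fun k => f k = i) := by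
        intro i
        apply filter_congr
        intro k hk
        have hkne : k ≠ k₀ := fun h => (mem_compl.mp hk) (h ▸ hk₀s)
        rw [Function.update_of_ne hkne]
      apply ih (s.erase k₀) ?_ ?_ (Function.update f k₀ i₀) ?_
      · have h1 : 1 ≤ s.card := card_pos.mpr hsne
        rw [card_erase_of_mem hk₀s]
        omega
      · intro k hk l hl
        have hks : k ∈ s := mem_of_mem_erase hk
        by_cases hls : l ∈ s
        · have : l = k₀ := by
            by_contra hlne
            exact hl (mem_erase.mpr ⟨hlne, hls⟩)
          rw [this]
          exact hk₀max k hks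
        · exact hord k hks l hls
      · intro i
        rw [hcompl, filter_insert]
        by_cases hik : Function.update f k₀ i₀ k₀ = i
        · rw [if_pos hik]
          have hii₀ : i = i₀ := by
            rw [Function.update_self] at hik
            exact hik.symm
          have hk₀nc : k₀ ∉ sᶜ.filter (fun k => Function.update f k₀ i₀ k = i) := by
            simp [hk₀s]
          rw [sum_insert hk₀nc, hsame i, hii₀]
          linarith [hi₀]
        · rw [if_neg hik, hsame i]
          exact hf i

end LptRobust

/-- LPT is (2 − 1/m)-robust for speed-robust scheduling: if jobs in nonincreasing
order are placed each into a currently smallest bag, then whenever the jobs can be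
scheduled individually with makespan C for speeds s, the bags can be assigned to
the machines with makespan at most (2 − 1/m)·C. -/
theorem lpt_robust (m n : ℕ) (hm : 1 ≤ m)
    (p : Fin n → ℝ) (hp : ∀ j, 0 ≤ p j)
    (hmono : ∀ j j' : Fin n, j ≤ j' → p j' ≤ p j)
    (bag : Fin n → Fin m)
    (hlpt : ∀ j : Fin n, ∀ i : Fin m,
      ∑ j' ∈ Finset.univ.filter (fun j' => j' < j ∧ bag j' = bag j), p j' ≤
        ∑ j' ∈ Finset.univ.filter (fun j' => j' < j ∧ bag j' = i), p j')
    (s : Fin m → ℝ) (hs : ∀ i, 0 ≤ s i) (C : ℝ) (hC : 0 ≤ C)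
    (τ : Fin n → Fin m)
    (hτ : ∀ i : Fin m, ∑ j ∈ Finset.univ.filter (fun j => τ j = i), p j ≤ C * s i) :
    ∃ σ : Fin m → Fin m, ∀ i : Fin m,
      ∑ j ∈ Finset.univ.filter (fun j => σ (bag j) = i), p j ≤
        (2 - 1 / (m : ℝ)) * C * s i := by
  classical
  open Finset in
  have hρ0 : (0:ℝ) ≤ 2 - 1/(m:ℝ) := by
    have hM1 : (1:ℝ) ≤ (m:ℝ) := by exact_mod_cast hm
    have h1 : 1/(m:ℝ) ≤ 1 := by
      rw [div_le_one (by linarith)]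
      exact hM1
    linarith
  obtain ⟨g, hg⟩ := LptRobust.pack hm p hp hmono bag hlpt (fun i => C * s i) τ hτ
    m Finset.univ (by rw [Finset.card_univ, Fintype.card_fin])
    (fun k _ l hl => absurd (Finset.mem_univ l) hl) (fun k => k)
    (fun i => by
      rw [Finset.compl_univ, Finset.filter_empty, Finset.sum_empty]
      exact mul_nonneg hρ0 (mul_nonneg hC (hs i)))
  refine ⟨g, fun i => ?_⟩
  have h1 : ∑ j ∈ Finset.univ.filter (fun j => g (bag j) = i), p j
      = ∑ k ∈ Finset.univ.filter (fun k => g k = i), LptRobust.B p bag k := by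
    have e : Finset.univ.filter (fun j => g (bag j) = i)
        = Finset.univ.filter (fun j => bag j ∈ Finset.univ.filter (fun k => g k = i)) := by
      ext x; simp
    rw [e, ← Finset.sum_fiberwise_eq_sum_filter Finset.univ
      (Finset.univ.filter (fun k => g k = i)) bag p]
    rfl
  rw [h1, mul_assoc]
  exact hg i
end

section
/- Let m ≥ 1 and n ≥ 1 be integers and let a : Fin m → ℝ satisfy a_i ≥ 0 for all i and ∑_{i=1}^m a_i = n. Then: (1) there exists x : Fin m → ℕ with ∑_{i=1}^m x_i = n and (x_i : ℝ) ≤ (1 + m/n) · a_i for all i (all n unit-size jobs fit into the bags scaled by the factor 1 + m/n = 1 + 1/λ where λ = n/m); and (2) if moreover ρ ≥ 0 is such that for every s : Fin m → ℝ with s_i ≥ 0 and ∑_i s_i = n there exists σ : Fin m → Fin m with ∑_{k : σ(k)=i} a_k ≤ ρ · s_i for all i, then for every such s there exists σ : Fin m → Fin m with ∑_{k : σ(k)=i} x_k ≤ (1 + m/n) · ρ · s_i for all i. (The algorithm SAND-to-BRICKS is (1 + 1/λ)·ρ(m)-robust for n unit-size jobs.) -/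
lemma exists_le_of_le_sum {ι : Type*} [DecidableEq ι] (s : Finset ι) (f : ι → ℕ) :
    ∀ n : ℕ, n ≤ ∑ i ∈ s, f i →
      ∃ x : ι → ℕ, (∀ i, x i ≤ f i) ∧ ∑ i ∈ s, x i = n := by
  induction s using Finset.induction_on with
  | empty =>
      intro n hn
      simp only [Finset.sum_empty, Nat.le_zero] at hn
      exact ⟨fun _ => 0, fun _ => Nat.zero_le _, by simp [hn]⟩
  | insert i s' hi ih =>
      intro n hn
      rw [Finset.sum_insert hi] at hn
      obtain ⟨x, hx, hxs⟩ := ih (n - min n (f i)) (by omega)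
      refine ⟨Function.update x i (min n (f i)), ?_, ?_⟩
      · intro j
        by_cases hj : j = i
        · subst hj; simp only [Function.update_self]; omega
        · simpa [Function.update_of_ne hj] using hx j
      · rw [Finset.sum_insert hi, Function.update_self]
        have he : ∑ j ∈ s', Function.update x i (min n (f i)) j = ∑ j ∈ s', x j :=
          Finset.sum_congr rfl fun j hj =>
            Function.update_of_ne (by rintro rfl; exact hi hj) _ _
        rw [he, hxs]; omega

/-- SAND-to-BRICKS: given fractional bag sizes a with total n, (1) all n unit jobs fit
into the bags scaled by 1 + m/n, and (2) if a is ρ-robust then the resulting integer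
bags are (1 + m/n)·ρ-robust. -/
theorem sand_to_bricks (m n : ℕ) (hm : 1 ≤ m) (hn : 1 ≤ n)
    (a : Fin m → ℝ) (ha : ∀ i, 0 ≤ a i) (hsum : ∑ i, a i = (n : ℝ)) :
    ∃ x : Fin m → ℕ, (∑ i, x i) = n ∧
      (∀ i, (x i : ℝ) ≤ (1 + (m : ℝ) / (n : ℝ)) * a i) ∧
      ∀ ρ : ℝ, 0 ≤ ρ →
        (∀ s : Fin m → ℝ, (∀ i, 0 ≤ s i) → (∑ i, s i = (n : ℝ)) →
          ∃ σ : Fin m → Fin m, ∀ i : Fin m,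
            ∑ k ∈ Finset.univ.filter (fun k => σ k = i), a k ≤ ρ * s i) →
        ∀ s : Fin m → ℝ, (∀ i, 0 ≤ s i) → (∑ i, s i = (n : ℝ)) →
          ∃ σ : Fin m → Fin m, ∀ i : Fin m,
            ∑ k ∈ Finset.univ.filter (fun k => σ k = i), (x k : ℝ) ≤
              (1 + (m : ℝ) / (n : ℝ)) * ρ * s i := by
  have hn' : (0 : ℝ) < n := by exact_mod_cast hn
  set c : ℝ := 1 + (m : ℝ) / (n : ℝ) with hc
  have hc0 : 0 ≤ c := by positivity
  set y : Fin m → ℝ := fun i => c * a i with hy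
  have hy0 : ∀ i, 0 ≤ y i := fun i => mul_nonneg hc0 (ha i)
  have hysum : ∑ i, y i = (n : ℝ) + m := by
    rw [hy]
    rw [← Finset.mul_sum, hsum, hc]
    field_simp
  -- n ≤ ∑ ⌊y i⌋₊
  have hfloor : n ≤ ∑ i, ⌊y i⌋₊ := by
    have h1 : (n : ℝ) + m ≤ ∑ i : Fin m, ((⌊y i⌋₊ : ℝ) + 1) := by
      rw [← hysum]
      exact Finset.sum_le_sum fun i _ => (Nat.lt_floor_add_one (y i)).le
    rw [Finset.sum_add_distrib] at h1
    have h2 : (n : ℝ) ≤ ∑ i : Fin m, (⌊y i⌋₊ : ℝ) := by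
      simpa [Finset.card_univ] using h1
    exact_mod_cast h2
  obtain ⟨x, hxle, hxsum⟩ := exists_le_of_le_sum Finset.univ (fun i => ⌊y i⌋₊) n hfloor
  have hxy : ∀ i, (x i : ℝ) ≤ c * a i := by
    intro i
    calc (x i : ℝ) ≤ (⌊y i⌋₊ : ℝ) := by exact_mod_cast hxle i
      _ ≤ y i := Nat.floor_le (hy0 i)
  refine ⟨x, hxsum, hxy, ?_⟩
  intro ρ hρ hrob s hs hssum
  obtain ⟨σ, hσ⟩ := hrob s hs hssum
  refine ⟨σ, fun i => ?_⟩
  calc ∑ k ∈ Finset.univ.filter (fun k => σ k = i), (x k : ℝ)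
      ≤ ∑ k ∈ Finset.univ.filter (fun k => σ k = i), c * a k :=
        Finset.sum_le_sum fun k _ => hxy k
    _ = c * ∑ k ∈ Finset.univ.filter (fun k => σ k = i), a k := by rw [Finset.mul_sum]
    _ ≤ c * (ρ * s i) := mul_le_mul_of_nonneg_left (hσ i) hc0
    _ = c * ρ * s i := by ring
end

section
/- Let m ≥ 1, q ≥ 1 and n be integers with (2q−1)·m ≤ n ≤ (2q+1)·m. Then there exists x : Fin m → ℕ with ∑_{k=1}^m x_k = n, with x_k ∈ {2q−1, 2q, 2q+1} for every k and at most one index k with x_k = 2q, such that for every integer speed vector s : Fin m → ℕ with ∑_{i=1}^m s_i = n there exists an assignment σ : Fin m → Fin m with ∑_{k : σ(k)=i} x_k ≤ (2 − 1/(q+1)) · s_i for all machines i. (The algorithm ODDALGO is (2 − 1/(q+1))-robust for speed-robust scheduling with n unit-size jobs when the average load λ = n/m lies in [2q−1, 2q+1].) -/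
open Finset

def greedyAcc (f : ℕ → ℕ) (T : ℕ) : ℕ → ℕ
  | 0 => 0
  | i + 1 => greedyAcc f T i + min (f i) (T - greedyAcc f T i)

lemma greedyAcc_le (f : ℕ → ℕ) (T : ℕ) : ∀ i, greedyAcc f T i ≤ T
  | 0 => Nat.zero_le T
  | i + 1 => by
      have := greedyAcc_le f T i
      simp only [greedyAcc]
      omega

lemma greedyAcc_mono (f : ℕ → ℕ) (T : ℕ) : Monotone (greedyAcc f T) :=
  monotone_nat_of_le_succ fun _ => Nat.le_add_right _ _

lemma greedyAcc_eq_sum_min (f : ℕ → ℕ) (T : ℕ) :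
    ∀ j, greedyAcc f T j = ∑ i ∈ Finset.range j, min (f i) (T - greedyAcc f T i)
  | 0 => rfl
  | j + 1 => by
      rw [Finset.sum_range_succ, ← greedyAcc_eq_sum_min f T j]
      rfl

lemma greedyAcc_eq_sum_of_lt (f : ℕ → ℕ) (T : ℕ) {j : ℕ} (h : greedyAcc f T j < T) :
    greedyAcc f T j = ∑ i ∈ Finset.range j, f i := by
  induction j with
  | zero => rfl
  | succ j ih =>
    have hj : greedyAcc f T j ≤ greedyAcc f T (j + 1) := greedyAcc_mono f T (Nat.le_succ j)
    have hlt : greedyAcc f T j < T := lt_of_le_of_lt hj h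
    have hTj : greedyAcc f T (j + 1) = greedyAcc f T j + min (f j) (T - greedyAcc f T j) := rfl
    have hmin : min (f j) (T - greedyAcc f T j) = f j := by omega
    rw [Finset.sum_range_succ, ← ih hlt, hTj, hmin]

noncomputable def machineOf (f : ℕ → ℕ) (T k : ℕ) : ℕ := sInf {i | k < greedyAcc f T (i + 1)}

lemma machineOf_mem (f : ℕ → ℕ) (T : ℕ) {k j : ℕ} (h : k < greedyAcc f T j) :
    k < greedyAcc f T (machineOf f T k + 1) := by
  have hj : j ≠ 0 := by
    rintro rfl
    have : greedyAcc f T 0 = 0 := rfl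
    omega
  have hne : {i | k < greedyAcc f T (i + 1)}.Nonempty := by
    refine ⟨j - 1, ?_⟩
    have h2 : greedyAcc f T j ≤ greedyAcc f T (j - 1 + 1) := greedyAcc_mono f T (by omega)
    exact lt_of_lt_of_le h h2
  exact Nat.sInf_mem hne

lemma machineOf_lt (f : ℕ → ℕ) (T : ℕ) {k j : ℕ} (h : k < greedyAcc f T j) :
    machineOf f T k < j := by
  have hj : j ≠ 0 := by
    rintro rfl
    have : greedyAcc f T 0 = 0 := rfl
    omega
  have hmem : j - 1 ∈ {i | k < greedyAcc f T (i + 1)} := by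
    have h2 : greedyAcc f T j ≤ greedyAcc f T (j - 1 + 1) := greedyAcc_mono f T (by omega)
    exact lt_of_lt_of_le h h2
  have h3 : machineOf f T k ≤ j - 1 := Nat.sInf_le hmem
  omega

lemma greedyAcc_machineOf_le (f : ℕ → ℕ) (T k : ℕ) :
    greedyAcc f T (machineOf f T k) ≤ k := by
  by_contra hc
  push_neg at hc
  have h0 : machineOf f T k ≠ 0 := by
    intro h
    rw [h] at hc
    have : greedyAcc f T 0 = 0 := rfl
    omega
  have hmem : machineOf f T k - 1 ∈ {i | k < greedyAcc f T (i + 1)} := by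
    have : machineOf f T k - 1 + 1 = machineOf f T k := by omega
    rw [Set.mem_setOf_eq, this]
    exact hc
  have h1 : machineOf f T k ≤ machineOf f T k - 1 := Nat.sInf_le hmem
  omega

/-- ODDALGO is (2 − 1/(q+1))-robust for speed-robust scheduling with n unit-size jobs
when the average load n/m lies in [2q−1, 2q+1]: bags of sizes 2q−1 and 2q+1 with at
most one bag of size 2q suffice. -/
theorem oddalgo_robust (m q n : ℕ) (hm : 1 ≤ m) (hq : 1 ≤ q)
    (hn1 : (2 * q - 1) * m ≤ n) (hn2 : n ≤ (2 * q + 1) * m) :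
    ∃ x : Fin m → ℕ, (∑ k, x k) = n ∧
      (∀ k, x k = 2 * q - 1 ∨ x k = 2 * q ∨ x k = 2 * q + 1) ∧
      (Finset.univ.filter (fun k => x k = 2 * q)).card ≤ 1 ∧
      ∀ s : Fin m → ℕ, (∑ i, s i) = n →
        ∃ σ : Fin m → Fin m, ∀ i : Fin m,
          ∑ k ∈ Finset.univ.filter (fun k => σ k = i), (x k : ℝ) ≤
            (2 - 1 / ((q : ℝ) + 1)) * (s i : ℝ) := by
  classical
  obtain ⟨Q, rfl⟩ : ∃ Q, q = Q + 1 := ⟨q - 1, by omega⟩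
  simp only [show 2 * (Q + 1) = 2 * Q + 2 from by ring] at hn1 hn2 ⊢
  simp only [show 2 * Q + 2 - 1 = 2 * Q + 1 from by omega,
    show 2 * Q + 2 + 1 = 2 * Q + 3 from by omega] at hn1 hn2 ⊢
  -- hn1 : (2Q+1) * m ≤ n, hn2 : n ≤ (2Q+3) * m
  have hmul : (2 * Q + 3) * m = (2 * Q + 1) * m + 2 * m := by ring
  set d := n - (2 * Q + 1) * m with hd
  have hdn : n = (2 * Q + 1) * m + d := by omega
  have hdm : d ≤ 2 * m := by omega
  set B := d / 2 with hB
  set C := d % 2 with hC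
  have hBC : 2 * B + C = d := by omega
  have hC1 : C ≤ 1 := by omega
  have hBCm : B + C ≤ m := by omega
  clear_value d B C
  set f : ℕ → ℕ := fun k => if k < B then 2 * Q + 3 else if k < B + C then 2 * Q + 2 else 2 * Q + 1
    with hf
  refine ⟨fun k => f (k : ℕ), ?_, ?_, ?_, ?_⟩
  · -- sum = n
    show ∑ k : Fin m, f (k : ℕ) = n
    rw [Fin.sum_univ_eq_sum_range f m, range_eq_Ico,
      ← Finset.sum_Ico_consecutive _ (Nat.zero_le (B + C)) hBCm,
      ← Finset.sum_Ico_consecutive _ (Nat.zero_le B) (Nat.le_add_right B C)]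
    have e1 : ∑ k ∈ Finset.Ico 0 B, f k = B * (2 * Q + 3) := by
      rw [Finset.sum_congr rfl (g := fun _ => 2 * Q + 3) (fun k hk => by
        rw [Finset.mem_Ico] at hk; simp [hf, hk.2])]
      simp [Nat.card_Ico]
    have e2 : ∑ k ∈ Finset.Ico B (B + C), f k = C * (2 * Q + 2) := by
      rw [Finset.sum_congr rfl (g := fun _ => 2 * Q + 2) (fun k hk => by
        rw [Finset.mem_Ico] at hk
        simp only [hf]
        rw [if_neg (by omega), if_pos hk.2])]
      simp [Nat.card_Ico]
    have e3 : ∑ k ∈ Finset.Ico (B + C) m, f k = (m - (B + C)) * (2 * Q + 1) := by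
      rw [Finset.sum_congr rfl (g := fun _ => 2 * Q + 1) (fun k hk => by
        rw [Finset.mem_Ico] at hk
        simp only [hf]
        rw [if_neg (by omega), if_neg (by omega)])]
      simp [Nat.card_Ico]
    rw [e1, e2, e3]
    set A := m - (B + C) with hA
    have hmA : m = B + C + A := by omega
    rw [hdn, hmA, ← hBC]
    ring
  · -- values
    intro k
    show f (k : ℕ) = 2 * Q + 1 ∨ f (k : ℕ) = 2 * Q + 2 ∨ f (k : ℕ) = 2 * Q + 3
    simp only [hf]
    split_ifs <;> omega
  · -- at most one bag of size 2q
    rw [Finset.card_le_one]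
    intro a ha b hb
    simp only [Finset.mem_filter, Finset.mem_univ, true_and] at ha hb
    have hxa : (a : ℕ) = B := by
      simp only [hf] at ha
      split_ifs at ha with h1 h2 <;> omega
    have hxb : (b : ℕ) = B := by
      simp only [hf] at hb
      split_ifs at hb with h1 h2 <;> omega
    exact Fin.ext (by omega)
  · -- the assignment
    intro s hs
    set 𝔅 := B + C with h𝔅
    clear_value 𝔅
    set s' : ℕ → ℕ := fun i => if h : i < m then s ⟨i, h⟩ else 0 with hs'def
    have hs'eq : ∀ k : Fin m, s' (k : ℕ) = s k := fun k => by
      simp only [hs'def, k.isLt, dif_pos, Fin.eta]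
    have hs'sum : ∑ i ∈ Finset.range m, s' i = n := by
      rw [← Fin.sum_univ_eq_sum_range s' m, Finset.sum_congr rfl fun k _ => hs'eq k]
      exact hs
    set fB : ℕ → ℕ := fun i => s' i / (Q + 2) with hfB
    set g1 := greedyAcc fB 𝔅 with hg1def
    set aF : ℕ → ℕ := fun i => min (fB i) (𝔅 - g1 i) with haF
    have hg1succ : ∀ i, g1 (i + 1) = g1 i + aF i := fun i => rfl
    have hg1sum : ∀ j, g1 j = ∑ i ∈ Finset.range j, aF i := greedyAcc_eq_sum_min fB 𝔅
    -- Phase 1 saturates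
    have hg1m : g1 m = 𝔅 := by
      rcases eq_or_lt_of_le (greedyAcc_le fB 𝔅 m) with h | h
      · exact h
      exfalso
      have hsum1 := greedyAcc_eq_sum_of_lt fB 𝔅 h
      have hbound : ∀ i ∈ Finset.range m, s' i ≤ (Q + 2) * fB i + (Q + 1) := by
        intro i _
        have h1 := Nat.div_add_mod (s' i) (Q + 2)
        have h2 : s' i % (Q + 2) < Q + 2 := Nat.mod_lt _ (by omega)
        simp only [hfB]
        omega
      have hle : n ≤ (Q + 2) * g1 m + (Q + 1) * m := by
        calc n = ∑ i ∈ Finset.range m, s' i := hs'sum.symm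
          _ ≤ ∑ i ∈ Finset.range m, ((Q + 2) * fB i + (Q + 1)) := Finset.sum_le_sum hbound
          _ = (Q + 2) * (∑ i ∈ Finset.range m, fB i) + (Q + 1) * m := by
              rw [Finset.sum_add_distrib, Finset.mul_sum, Finset.sum_const, Finset.card_range]
              ring
          _ = (Q + 2) * g1 m + (Q + 1) * m := by rw [← hsum1, hg1def]
      have hkey : (Q + 2) * 𝔅 + (Q + 1) * m ≤ n + (Q + 1) := by
        have h1 : Q * 𝔅 ≤ Q * m := Nat.mul_le_mul_left Q hBCm
        linarith [hdn, hBC, hC1, h𝔅, h1]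
      have hg1le : g1 m + 1 ≤ 𝔅 := h
      have h2 : (Q + 2) * (g1 m + 1) ≤ (Q + 2) * 𝔅 := Nat.mul_le_mul_left _ hg1le
      linarith [hle, hkey, h2]
    have haFle : ∀ i, (Q + 2) * aF i ≤ s' i := by
      intro i
      have h1 : aF i ≤ fB i := min_le_left _ _
      have h2 : fB i * (Q + 2) ≤ s' i := Nat.div_mul_le_self _ _
      calc (Q + 2) * aF i ≤ (Q + 2) * fB i := Nat.mul_le_mul_left _ h1
        _ = fB i * (Q + 2) := Nat.mul_comm _ _
        _ ≤ s' i := h2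
    set rF : ℕ → ℕ := fun i => s' i - (Q + 2) * aF i with hrF
    set fS : ℕ → ℕ := fun i => rF i / (Q + 1) with hfS
    set 𝒜 := m - 𝔅 with h𝒜
    set g2 := greedyAcc fS 𝒜 with hg2def
    set bF : ℕ → ℕ := fun i => min (fS i) (𝒜 - g2 i) with hbF
    clear_value 𝒜
    have hg2succ : ∀ i, g2 (i + 1) = g2 i + bF i := fun i => rfl
    have haFsum : ∑ i ∈ Finset.range m, aF i = 𝔅 := by rw [← hg1sum m]; exact hg1m
    have hrFsum : ∑ i ∈ Finset.range m, rF i + (Q + 2) * 𝔅 = n := by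
      have hterm : ∀ i ∈ Finset.range m, rF i + (Q + 2) * aF i = s' i := by
        intro i _
        have := haFle i
        simp only [hrF]
        omega
      calc ∑ i ∈ Finset.range m, rF i + (Q + 2) * 𝔅
          = ∑ i ∈ Finset.range m, rF i + (Q + 2) * ∑ i ∈ Finset.range m, aF i := by rw [haFsum]
        _ = ∑ i ∈ Finset.range m, (rF i + (Q + 2) * aF i) := by
            rw [Finset.sum_add_distrib, Finset.mul_sum]
        _ = ∑ i ∈ Finset.range m, s' i := Finset.sum_congr rfl hterm
        _ = n := hs'sum
    -- Phase 2 saturates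
    have hg2m : g2 m = 𝒜 := by
      rcases eq_or_lt_of_le (greedyAcc_le fS 𝒜 m) with h | h
      · exact h
      exfalso
      have hsum2 := greedyAcc_eq_sum_of_lt fS 𝒜 h
      have hbound : ∀ i ∈ Finset.range m, rF i ≤ (Q + 1) * fS i + Q := by
        intro i _
        have h1 := Nat.div_add_mod (rF i) (Q + 1)
        have h2 : rF i % (Q + 1) < Q + 1 := Nat.mod_lt _ (by omega)
        simp only [hfS]
        omega
      have hle : ∑ i ∈ Finset.range m, rF i ≤ (Q + 1) * g2 m + Q * m := by
        calc ∑ i ∈ Finset.range m, rF i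
            ≤ ∑ i ∈ Finset.range m, ((Q + 1) * fS i + Q) := Finset.sum_le_sum hbound
          _ = (Q + 1) * (∑ i ∈ Finset.range m, fS i) + Q * m := by
              rw [Finset.sum_add_distrib, Finset.mul_sum, Finset.sum_const, Finset.card_range]
              ring
          _ = (Q + 1) * g2 m + Q * m := by rw [← hsum2, hg2def]
      have h1 : g2 m + 1 ≤ 𝒜 := h
      have h2 : (Q + 1) * (g2 m + 1) ≤ (Q + 1) * 𝒜 := Nat.mul_le_mul_left _ h1
      have h3 : (Q + 1) * 𝒜 + (Q + 1) * 𝔅 = (Q + 1) * m := by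
        rw [← Nat.mul_add]
        congr 1
        omega
      linarith [hrFsum, hdn, hBC, hle, h2, h3, hC1, h𝔅]
    have hcap : ∀ i, (Q + 2) * aF i + (Q + 1) * bF i ≤ s' i := by
      intro i
      have h1 := haFle i
      have h2 : bF i ≤ fS i := min_le_left _ _
      have h3 : fS i * (Q + 1) ≤ rF i := Nat.div_mul_le_self _ _
      have h4 : (Q + 1) * bF i ≤ rF i := by
        calc (Q + 1) * bF i ≤ (Q + 1) * fS i := Nat.mul_le_mul_left _ h2
          _ = fS i * (Q + 1) := Nat.mul_comm _ _
          _ ≤ rF i := h3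
      have h5 : rF i = s' i - (Q + 2) * aF i := rfl
      rw [h5] at h4
      have h6 := Nat.le_sub_iff_add_le h1 |>.mp h4
      linarith
    -- the assignment map
    have hσlt1 : ∀ k : Fin m, (k : ℕ) < 𝔅 → machineOf fB 𝔅 (k : ℕ) < m := by
      intro k hk
      have : (k : ℕ) < g1 m := by rw [hg1m]; exact hk
      exact machineOf_lt fB 𝔅 this
    have hσlt2 : ∀ k : Fin m, ¬ (k : ℕ) < 𝔅 → machineOf fS 𝒜 ((k : ℕ) - 𝔅) < m := by
      intro k hk
      have hk2 : (k : ℕ) - 𝔅 < g2 m := by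
        rw [hg2m]
        have := k.isLt
        omega
      exact machineOf_lt fS 𝒜 hk2
    set σ : Fin m → Fin m := fun k =>
      if hk : (k : ℕ) < 𝔅 then ⟨machineOf fB 𝔅 (k : ℕ), hσlt1 k hk⟩
      else ⟨machineOf fS 𝒜 ((k : ℕ) - 𝔅), hσlt2 k hk⟩ with hσdef
    refine ⟨σ, fun i => ?_⟩
    set F := Finset.univ.filter (fun k => σ k = i) with hF
    -- the natural-number load bound
    have hb1 : ∑ k ∈ F.filter (fun k : Fin m => (k : ℕ) < 𝔅), f (k : ℕ) ≤ (2 * Q + 3) * aF (i : ℕ) := by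
      have hcard1 : (F.filter (fun k : Fin m => (k : ℕ) < 𝔅)).card ≤ aF (i : ℕ) := by
        have hsub : ∀ k ∈ F.filter (fun k : Fin m => (k : ℕ) < 𝔅),
            (fun k : Fin m => (k : ℕ)) k ∈ Finset.Ico (g1 (i : ℕ)) (g1 ((i : ℕ) + 1)) := by
          intro k hk
          simp only [hF, Finset.mem_filter, Finset.mem_univ, true_and] at hk
          obtain ⟨hσk, hk𝔅⟩ := hk
          have h1 : (k : ℕ) < greedyAcc fB 𝔅 m := by rw [← hg1def, hg1m]; exact hk𝔅
          have hmo : machineOf fB 𝔅 (k : ℕ) = (i : ℕ) := by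
            have h2 := congrArg Fin.val hσk
            simp only [hσdef, dif_pos hk𝔅] at h2
            exact h2
          rw [Finset.mem_Ico, ← hmo]
          exact ⟨greedyAcc_machineOf_le fB 𝔅 _, machineOf_mem fB 𝔅 h1⟩
        have hinj : Set.InjOn (fun k : Fin m => (k : ℕ))
            ↑(F.filter (fun k : Fin m => (k : ℕ) < 𝔅)) := fun a _ b _ h => Fin.ext h
        have hcc := Finset.card_le_card_of_injOn _ hsub hinj
        rwa [Nat.card_Ico, hg1succ (i : ℕ), Nat.add_sub_cancel_left] at hcc
      calc ∑ k ∈ F.filter (fun k : Fin m => (k : ℕ) < 𝔅), f (k : ℕ)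
          ≤ ∑ _k ∈ F.filter (fun k : Fin m => (k : ℕ) < 𝔅), (2 * Q + 3) := by
            refine Finset.sum_le_sum fun k _ => ?_
            simp only [hf]
            split_ifs <;> omega
        _ = (F.filter (fun k : Fin m => (k : ℕ) < 𝔅)).card * (2 * Q + 3) := by
            rw [Finset.sum_const, smul_eq_mul]
        _ ≤ aF (i : ℕ) * (2 * Q + 3) := Nat.mul_le_mul_right _ hcard1
        _ = (2 * Q + 3) * aF (i : ℕ) := Nat.mul_comm _ _
    have hb2 : ∑ k ∈ F.filter (fun k : Fin m => ¬ (k : ℕ) < 𝔅), f (k : ℕ)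
        ≤ (2 * Q + 1) * bF (i : ℕ) := by
      have hcard2 : (F.filter (fun k : Fin m => ¬ (k : ℕ) < 𝔅)).card ≤ bF (i : ℕ) := by
        have hsub : ∀ k ∈ F.filter (fun k : Fin m => ¬ (k : ℕ) < 𝔅),
            (fun k : Fin m => (k : ℕ) - 𝔅) k ∈ Finset.Ico (g2 (i : ℕ)) (g2 ((i : ℕ) + 1)) := by
          intro k hk
          simp only [hF, Finset.mem_filter, Finset.mem_univ, true_and] at hk
          obtain ⟨hσk, hk𝔅⟩ := hk
          have h1 : (k : ℕ) - 𝔅 < greedyAcc fS 𝒜 m := by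
            rw [← hg2def, hg2m]
            have := k.isLt
            omega
          have hmo : machineOf fS 𝒜 ((k : ℕ) - 𝔅) = (i : ℕ) := by
            have h2 := congrArg Fin.val hσk
            simp only [hσdef, dif_neg hk𝔅] at h2
            exact h2
          rw [Finset.mem_Ico, ← hmo]
          exact ⟨greedyAcc_machineOf_le fS 𝒜 _, machineOf_mem fS 𝒜 h1⟩
        have hinj : Set.InjOn (fun k : Fin m => (k : ℕ) - 𝔅)
            ↑(F.filter (fun k : Fin m => ¬ (k : ℕ) < 𝔅)) := by
          intro a ha b hb hab
          simp only [Finset.coe_filter, Set.mem_setOf_eq] at ha hb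
          have ha2 := ha.2
          have hb2 := hb.2
          have hab' : (a : ℕ) - 𝔅 = (b : ℕ) - 𝔅 := hab
          exact Fin.ext (by omega)
        have hcc := Finset.card_le_card_of_injOn _ hsub hinj
        rwa [Nat.card_Ico, hg2succ (i : ℕ), Nat.add_sub_cancel_left] at hcc
      calc ∑ k ∈ F.filter (fun k : Fin m => ¬ (k : ℕ) < 𝔅), f (k : ℕ)
          ≤ ∑ _k ∈ F.filter (fun k : Fin m => ¬ (k : ℕ) < 𝔅), (2 * Q + 1) := by
            refine Finset.sum_le_sum fun k hk => ?_
            simp only [Finset.mem_filter] at hk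
            have := hk.2
            simp only [hf]
            rw [if_neg (by omega), if_neg (by omega)]
        _ = (F.filter (fun k : Fin m => ¬ (k : ℕ) < 𝔅)).card * (2 * Q + 1) := by
            rw [Finset.sum_const, smul_eq_mul]
        _ ≤ bF (i : ℕ) * (2 * Q + 1) := Nat.mul_le_mul_right _ hcard2
        _ = (2 * Q + 1) * bF (i : ℕ) := Nat.mul_comm _ _
    have hnat : ∑ k ∈ F, f (k : ℕ) ≤ (2 * Q + 3) * aF (i : ℕ) + (2 * Q + 1) * bF (i : ℕ) := by
      rw [← Finset.sum_filter_add_sum_filter_not F (fun k : Fin m => (k : ℕ) < 𝔅)]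
      exact Nat.add_le_add hb1 hb2
    have hcap_i : (Q + 2) * aF (i : ℕ) + (Q + 1) * bF (i : ℕ) ≤ s i := by
      rw [← hs'eq i]
      exact hcap (i : ℕ)
    -- cast to ℝ and finish
    show ∑ k ∈ F, (f (k : ℕ) : ℝ) ≤ (2 - 1 / (((Q + 1 : ℕ) : ℝ) + 1)) * (s i : ℝ)
    rw [show ((Q + 1 : ℕ) : ℝ) = (Q : ℝ) + 1 by push_cast; ring]
    have h1 : ∑ k ∈ F, (f (k : ℕ) : ℝ)
        ≤ (2 * (Q : ℝ) + 3) * (aF (i : ℕ) : ℝ) + (2 * (Q : ℝ) + 1) * (bF (i : ℕ) : ℝ) := by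
      exact_mod_cast hnat
    have h2 : ((Q : ℝ) + 2) * (aF (i : ℕ) : ℝ) + ((Q : ℝ) + 1) * (bF (i : ℕ) : ℝ) ≤ (s i : ℝ) := by
      exact_mod_cast hcap_i
    have hQ2 : (0 : ℝ) < (Q : ℝ) + 2 := by positivity
    have hrho : (2 : ℝ) - 1 / (((Q : ℝ) + 1) + 1) = (2 * (Q : ℝ) + 3) / ((Q : ℝ) + 2) := by
      field_simp
      ring
    rw [hrho, div_mul_eq_mul_div, le_div_iff₀ hQ2]
    have hbF0 : (0 : ℝ) ≤ (bF (i : ℕ) : ℝ) := Nat.cast_nonneg _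
    nlinarith [mul_le_mul_of_nonneg_left h2 (show (0 : ℝ) ≤ 2 * (Q : ℝ) + 3 by positivity)]
end

section
/- For all integers m ≥ 1 and n ≥ 1 there exists x : Fin m → ℕ with ∑_{k=1}^m x_k = n such that for every integer speed vector s : Fin m → ℕ with ∑_{i=1}^m s_i = n there exists an assignment σ : Fin m → Fin m with ∑_{k : σ(k)=i} x_k ≤ (9/5) · s_i for all machines i. (There is an algorithm for speed-robust scheduling with unit-size jobs with robustness factor at most 1.8 for every m.) -/
namespace UnitJobs



def cap (s : ℕ) : ℕ := 9 * s / 5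

lemma cap_ge (s : ℕ) : s ≤ cap s := by unfold cap; omega

lemma sum_fin_lt (m t : ℕ) (ht : t ≤ m) (f : ℕ → ℕ) :
    (∑ a ∈ Finset.univ.filter (fun a : Fin m => a.val < t), f a.val)
      = ∑ i ∈ Finset.range t, f i := by
  rw [Finset.sum_filter]
  rw [Fin.sum_univ_eq_sum_range (fun i => if i < t then f i else 0) m]
  rw [← Finset.sum_filter]
  congr 1
  ext i
  simp only [Finset.mem_filter, Finset.mem_range]
  omega

lemma sum_range_block (f : ℕ → ℕ) (a v : ℕ) :
    ∀ j, a ≤ j → (∀ i, a ≤ i → i < j → f i = v) →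
      ∑ i ∈ Finset.range j, f i = (∑ i ∈ Finset.range a, f i) + v * (j - a) := by
  intro j haj
  induction j, haj using Nat.le_induction with
  | base => intro _; simp
  | succ j hj ih =>
    intro hv
    rw [Finset.sum_range_succ, ih (fun i h1 h2 => hv i h1 (by omega)), hv j hj (by omega)]
    have : j + 1 - a = (j - a) + 1 := by omega
    rw [this]
    ring

lemma sum_line (m : ℕ) (s : Fin m → ℕ) (A D B v : ℕ)
    (hpt : ∀ t : ℕ, A * t ≤ D * (cap t + 1 - v) + B) :
    A * (∑ i, s i) ≤ D * (∑ i, (cap (s i) + 1 - v)) + B * m := by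
  calc A * (∑ i, s i) = ∑ i, A * s i := by rw [Finset.mul_sum]
    _ ≤ ∑ i, (D * (cap (s i) + 1 - v) + B) := Finset.sum_le_sum fun i _ => hpt (s i)
    _ = D * (∑ i, (cap (s i) + 1 - v)) + B * m := by
        rw [Finset.sum_add_distrib, ← Finset.mul_sum, Finset.sum_const, Finset.card_univ,
          Fintype.card_fin, smul_eq_mul, mul_comm m B]

lemma pack_exists {m : ℕ} (hm : 0 < m) (c x : Fin m → ℕ)
    (H : ∀ k : Fin m,
      (∑ a ∈ Finset.univ.filter (fun a : Fin m => a.val < k.val), x a) < ∑ i, (c i + 1 - x k)) :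
    ∃ σ : Fin m → Fin m, ∀ i,
      (∑ k ∈ Finset.univ.filter (fun k => σ k = i), x k) ≤ c i := by
  have key : ∀ t, t ≤ m → ∃ σ : Fin m → Fin m, ∀ i,
      (∑ k ∈ Finset.univ.filter (fun k => σ k = i ∧ k.val < t), x k) ≤ c i := by
    intro t
    induction t with
    | zero => exact fun _ => ⟨fun _ => ⟨0, hm⟩, fun i => by simp⟩
    | succ t ih =>
      intro ht
      obtain ⟨σ, hσ⟩ := ih (Nat.le_of_succ_le ht)
      have htm : t < m := ht
      have hex : ∃ i0, (∑ k ∈ Finset.univ.filter (fun k => σ k = i0 ∧ k.val < t), x k)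
          + x ⟨t, htm⟩ ≤ c i0 := by
        by_contra hno
        push_neg at hno
        have h1 : ∀ i ∈ (Finset.univ : Finset (Fin m)), (c i + 1 - x ⟨t, htm⟩) ≤
            ∑ k ∈ Finset.univ.filter (fun k => σ k = i ∧ k.val < t), x k := by
          intro i _
          have := hno i
          omega
        have h2 := Finset.sum_le_sum h1
        have h3 : ∑ i, ∑ k ∈ Finset.univ.filter (fun k => σ k = i ∧ k.val < t), x k
            = ∑ a ∈ Finset.univ.filter (fun a : Fin m => a.val < t), x a := by
          have h4 : ∀ i : Fin m, Finset.univ.filter (fun k : Fin m => σ k = i ∧ k.val < t)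
              = (Finset.univ.filter (fun k : Fin m => k.val < t)).filter (fun k => σ k = i) := by
            intro i
            rw [Finset.filter_filter]
            apply Finset.filter_congr
            intro k _
            simp [and_comm]
          calc ∑ i, ∑ k ∈ Finset.univ.filter (fun k => σ k = i ∧ k.val < t), x k
              = ∑ i, ∑ k ∈ (Finset.univ.filter (fun k : Fin m => k.val < t)).filter
                  (fun k => σ k = i), x k := Finset.sum_congr rfl fun i _ => by rw [h4]
            _ = _ := Finset.sum_fiberwise_of_maps_to (fun k _ => Finset.mem_univ (σ k)) x
        have h5 := H ⟨t, htm⟩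
        simp only [Fin.val_mk] at h5
        omega
      obtain ⟨i0, hi0⟩ := hex
      refine ⟨Function.update σ ⟨t, htm⟩ i0, fun i => ?_⟩
      have hdisj : (⟨t, htm⟩ : Fin m) ∉
          Finset.univ.filter (fun k : Fin m => σ k = i ∧ k.val < t) := by simp
      have hfil : Finset.univ.filter
            (fun k : Fin m => Function.update σ ⟨t, htm⟩ i0 k = i ∧ k.val < t + 1)
          = if i0 = i then insert ⟨t, htm⟩
              (Finset.univ.filter (fun k : Fin m => σ k = i ∧ k.val < t))
            else Finset.univ.filter (fun k : Fin m => σ k = i ∧ k.val < t) := by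
        ext k
        by_cases hk : k = (⟨t, htm⟩ : Fin m)
        · subst hk
          by_cases hi : i0 = i <;>
            simp [hi, Function.update_self]
        · have hkv : k.val ≠ t := fun h => hk (Fin.ext h)
          have hup : Function.update σ ⟨t, htm⟩ i0 k = σ k := Function.update_of_ne hk _ _
          by_cases hi : i0 = i <;>
            simp [hi, hup, hk] <;> omega
      rw [hfil]
      by_cases hi : i0 = i
      · rw [if_pos hi, Finset.sum_insert hdisj]
        subst hi
        omega
      · rw [if_neg hi]
        exact hσ i
  obtain ⟨σ, hσ⟩ := key m le_rfl
  refine ⟨σ, fun i => ?_⟩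
  have hfe : Finset.univ.filter (fun k : Fin m => σ k = i)
      = Finset.univ.filter (fun k : Fin m => σ k = i ∧ k.val < m) := by
    apply Finset.filter_congr
    intro k _
    simp [k.isLt]
  rw [hfe]
  exact hσ i



-- mod-5 helper for line lemmas
lemma line6 (s : ℕ) : 5*s ≤ 3*(cap s + 1 - 6) + 15 := by
  unfold cap
  have h : s % 5 = 0 ∨ s % 5 = 1 ∨ s % 5 = 2 ∨ s % 5 = 3 ∨ s % 5 = 4 := by omega
  rcases h with h|h|h|h|h <;> omega
lemma line4 (s : ℕ) : 7*s ≤ 4*(cap s + 1 - 4) + 14 := by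
  unfold cap
  have h : s % 5 = 0 ∨ s % 5 = 1 ∨ s % 5 = 2 ∨ s % 5 = 3 ∨ s % 5 = 4 := by omega
  rcases h with h|h|h|h|h <;> omega
lemma line3a (s : ℕ) : 7*s ≤ 4*(cap s + 1 - 3) + 10 := by
  unfold cap
  have h : s % 5 = 0 ∨ s % 5 = 1 ∨ s % 5 = 2 ∨ s % 5 = 3 ∨ s % 5 = 4 := by omega
  rcases h with h|h|h|h|h <;> omega
lemma line3b (s : ℕ) : 1*s ≤ 1*(cap s + 1 - 3) + 1 := by unfold cap; omega
lemma line2 (s : ℕ) : 9*s ≤ 5*(cap s + 1 - 2) + 9 := by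
  unfold cap
  have h : s % 5 = 0 ∨ s % 5 = 1 ∨ s % 5 = 2 ∨ s % 5 = 3 ∨ s % 5 = 4 := by omega
  rcases h with h|h|h|h|h <;> omega
lemma line_gen (v s : ℕ) (hv : 1 ≤ v) : 9*s + 1 ≤ 5*v + 5*(cap s + 1 - v) := by
  unfold cap; omega
lemma sum_cap_ge (m : ℕ) (s : Fin m → ℕ) : (∑ i, s i) ≤ ∑ i, cap (s i) :=
  Finset.sum_le_sum fun i _ => cap_ge (s i)

lemma robust_of_cond (m n : ℕ) (hm : 1 ≤ m) (f : ℕ → ℕ)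
    (hsum : (∑ i ∈ Finset.range m, f i) = n)
    (hcond : ∀ s : Fin m → ℕ, (∑ i, s i) = n → ∀ k, k < m →
      (∑ i ∈ Finset.range k, f i) < ∑ i : Fin m, (cap (s i) + 1 - f k)) :
    ∃ x : Fin m → ℕ, (∑ k, x k) = n ∧
      ∀ s : Fin m → ℕ, (∑ i, s i) = n →
        ∃ σ : Fin m → Fin m, ∀ i : Fin m,
          ∑ k ∈ Finset.univ.filter (fun k => σ k = i), (x k : ℝ) ≤
            (9 / 5) * (s i : ℝ) := by
  refine ⟨fun k => f k.val, ?_, ?_⟩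
  · rw [← hsum]
    exact Fin.sum_univ_eq_sum_range f m
  · intro s hs
    have H : ∀ k : Fin m,
        (∑ a ∈ Finset.univ.filter (fun a : Fin m => a.val < k.val), f a.val) <
          ∑ i, (cap (s i) + 1 - f k.val) := by
      intro k
      rw [sum_fin_lt m k.val (le_of_lt k.isLt) f]
      exact hcond s hs k.val k.isLt
    obtain ⟨σ, hσ⟩ := pack_exists (by omega) (fun i => cap (s i)) (fun k => f k.val) H
    refine ⟨σ, fun i => ?_⟩
    have h1 := hσ i
    have h2 : (∑ k ∈ Finset.univ.filter (fun k : Fin m => σ k = i), ((f k.val : ℝ))) =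
        ((∑ k ∈ Finset.univ.filter (fun k : Fin m => σ k = i), f k.val : ℕ) : ℝ) := by
      push_cast
      rfl
    rw [h2]
    have h3 : (5:ℝ) * (cap (s i) : ℝ) ≤ 9 * (s i : ℝ) := by
      have h4 : 5 * cap (s i) ≤ 9 * s i := by unfold cap; omega
      exact_mod_cast h4
    have h5 : ((∑ k ∈ Finset.univ.filter (fun k : Fin m => σ k = i), f k.val : ℕ) : ℝ)
        ≤ (cap (s i) : ℝ) := Nat.cast_le.2 h1
    linarith

-- trivial regime n ≤ m
lemma regime_triv (m n : ℕ) (hm : 1 ≤ m) (hn : n ≤ m) :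
    ∃ f : ℕ → ℕ, (∑ i ∈ Finset.range m, f i) = n ∧
      ∀ s : Fin m → ℕ, (∑ i, s i) = n → ∀ k, k < m →
        (∑ i ∈ Finset.range k, f i) < ∑ i : Fin m, (cap (s i) + 1 - f k) := by
  have hb1 : ∀ i, i < n → (if i < n then 1 else 0) = 1 := fun i hi => if_pos hi
  have hb0 : ∀ i, n ≤ i → (if i < n then 1 else 0) = 0 := fun i hi => if_neg (by omega)
  have hSn : ∑ i ∈ Finset.range n, (fun i => if i < n then 1 else 0) i = n := by
    rw [sum_range_block _ 0 1 n (by omega) (fun i _ h2 => hb1 i h2)]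
    simp
  refine ⟨fun i => if i < n then 1 else 0, ?_, ?_⟩
  · rw [sum_range_block _ n 0 m hn (fun i h1 _ => hb0 i h1), hSn]
    simp
  · intro s hs k hk
    have hcap := sum_cap_ge m s
    rw [hs] at hcap
    by_cases hkn : k < n
    · have hPk : ∑ i ∈ Finset.range k, (fun i => if i < n then 1 else 0) i = k := by
        rw [sum_range_block _ 0 1 k (by omega) (fun i _ h2 => hb1 i (by omega))]
        simp
      simp only [hPk, hb1 k hkn]
      have : ∑ i : Fin m, (cap (s i) + 1 - 1) = ∑ i : Fin m, cap (s i) := by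
        apply Finset.sum_congr rfl
        intro i _
        omega
      rw [this]
      omega
    · have hPk : ∑ i ∈ Finset.range k, (fun i => if i < n then 1 else 0) i = n := by
        rw [sum_range_block _ n 0 k (by omega) (fun i h1 _ => hb0 i h1), hSn]
        simp
      simp only [hPk, hb0 k (by omega)]
      have : ∑ i : Fin m, (cap (s i) + 1 - 0) = (∑ i : Fin m, cap (s i)) + m := by
        simp only [Nat.sub_zero]
        rw [Finset.sum_add_distrib, Finset.sum_const, Finset.card_univ, Fintype.card_fin,
          smul_eq_mul, mul_one]
      rw [this]
      omega

set_option maxHeartbeats 1000000 in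
lemma exists_ks (m n : ℕ) (h1 : m < n) (h2 : n ≤ 4*m) :
    ∃ k6 k4 k3 k2 : ℕ,
      (k6 = 0 ∨ 18*k6 + 15*m ≤ 5*n + 15) ∧ 6*k6 ≤ n ∧
      (k4 = 0 ∨ 24*k6 + 16*k4 + 14*m ≤ 7*n + 12) ∧ 6*k6 + 4*k4 ≤ n ∧
      (k3 = 0 ∨ 4*(6*k6+4*k4) + 12*k3 + 10*m ≤ 7*n + 8 ∨ (6*k6+4*k4) + 3*k3 + m ≤ n + 2) ∧
      6*k6 + 4*k4 + 3*k3 ≤ n ∧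
      (k2 = 0 ∨ 5*(6*k6+4*k4+3*k3) + 10*k2 + 9*m ≤ 9*n + 5) ∧
      6*k6+4*k4+3*k3+2*k2 ≤ n ∧
      k6+k4+k3+k2+(n - (6*k6+4*k4+3*k3+2*k2)) ≤ m := by
  obtain ⟨k6, hf1, hf2, hf3⟩ : ∃ k6, (k6 = 0 ∨ 18*k6 + 15*m ≤ 5*n + 15) ∧ 6*k6 ≤ n ∧
      (18*k6 + 15*m + 18 > 5*n + 15 ∨ 6*k6 + 6 > n) :=
    ⟨min ((5*n + 15 - 15*m) / 18) (n / 6), by omega, by omega, by omega⟩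
  obtain ⟨k4, hg1, hg2, hg3⟩ : ∃ k4, (k4 = 0 ∨ 24*k6 + 16*k4 + 14*m ≤ 7*n + 12) ∧
      6*k6 + 4*k4 ≤ n ∧ (24*k6 + 16*k4 + 16 + 14*m > 7*n + 12 ∨ 6*k6 + 4*k4 + 4 > n) :=
    ⟨min ((7*n + 12 - (14*m + 24*k6)) / 16) ((n - 6*k6)/4), by omega, by omega, by omega⟩
  obtain ⟨k3, he1, he2, he3⟩ : ∃ k3, (k3 = 0 ∨ 4*(6*k6+4*k4) + 12*k3 + 10*m ≤ 7*n + 8 ∨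
      (6*k6+4*k4) + 3*k3 + m ≤ n + 2) ∧ 6*k6 + 4*k4 + 3*k3 ≤ n ∧
      ((12*k3 + 12 + 10*m + 4*(6*k6+4*k4) > 7*n + 8 ∧ 3*k3 + 3 + m + (6*k6+4*k4) > n + 2)
        ∨ 6*k6+4*k4+3*k3+3 > n) :=
    ⟨min (max ((7*n + 8 - (10*m + 4*(6*k6+4*k4))) / 12) ((n + 2 - (m + (6*k6+4*k4))) / 3))
      ((n - (6*k6+4*k4))/3), by omega, by omega, by omega⟩
  obtain ⟨k2, hd1, hd2, hd3⟩ : ∃ k2, (k2 = 0 ∨ 5*(6*k6+4*k4+3*k3) + 10*k2 + 9*m ≤ 9*n + 5) ∧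
      6*k6+4*k4+3*k3+2*k2 ≤ n ∧
      (10*k2 + 10 + 9*m + 5*(6*k6+4*k4+3*k3) > 9*n + 5 ∨ 6*k6+4*k4+3*k3+2*k2+2 > n) :=
    ⟨min ((9*n + 5 - (9*m + 5*(6*k6+4*k4+3*k3))) / 10) ((n - (6*k6+4*k4+3*k3))/2),
      by omega, by omega, by omega⟩
  exact ⟨k6, k4, k3, k2, hf1, hf2, hg1, hg2, he1, he2, hd1, hd2, by omega⟩

set_option maxHeartbeats 1000000 in
lemma regimeB (m n : ℕ) (h1 : m < n) (h2 : n ≤ 4*m) :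
    ∃ f : ℕ → ℕ, (∑ i ∈ Finset.range m, f i) = n ∧
      ∀ s : Fin m → ℕ, (∑ i, s i) = n → ∀ k, k < m →
        (∑ i ∈ Finset.range k, f i) < ∑ i : Fin m, (cap (s i) + 1 - f k) := by
  obtain ⟨k6,k4,k3,k2,hf1,hf2,hg1,hg2,he1,he2,hd1,hd2,hcount⟩ := exists_ks m n h1 h2
  set k1 := n - (6*k6+4*k4+3*k3+2*k2) with hk1def
  set F : ℕ → ℕ := fun i => if i < k6 then 6 else if i < k6+k4 then 4
    else if i < k6+k4+k3 then 3 else if i < k6+k4+k3+k2 then 2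
    else if i < k6+k4+k3+k2+k1 then 1 else 0 with hF
  have hb6 : ∀ i, i < k6 → F i = 6 := by
    intro i hi; simp only [hF]; rw [if_pos hi]
  have hb4 : ∀ i, k6 ≤ i → i < k6+k4 → F i = 4 := by
    intro i hi1 hi2; simp only [hF]; rw [if_neg (by omega), if_pos hi2]
  have hb3 : ∀ i, k6+k4 ≤ i → i < k6+k4+k3 → F i = 3 := by
    intro i hi1 hi2; simp only [hF]; rw [if_neg (by omega), if_neg (by omega), if_pos hi2]
  have hb2 : ∀ i, k6+k4+k3 ≤ i → i < k6+k4+k3+k2 → F i = 2 := by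
    intro i hi1 hi2; simp only [hF]
    rw [if_neg (by omega), if_neg (by omega), if_neg (by omega), if_pos hi2]
  have hb1 : ∀ i, k6+k4+k3+k2 ≤ i → i < k6+k4+k3+k2+k1 → F i = 1 := by
    intro i hi1 hi2; simp only [hF]
    rw [if_neg (by omega), if_neg (by omega), if_neg (by omega), if_neg (by omega), if_pos hi2]
  have hb0 : ∀ i, k6+k4+k3+k2+k1 ≤ i → F i = 0 := by
    intro i hi1; simp only [hF]
    rw [if_neg (by omega), if_neg (by omega), if_neg (by omega), if_neg (by omega),
      if_neg (by omega)]
  have hS1 : ∑ i ∈ Finset.range k6, F i = 6*k6 := by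
    rw [sum_range_block F 0 6 k6 (by omega) (fun i _ h2 => hb6 i h2)]; simp
  have hS2 : ∑ i ∈ Finset.range (k6+k4), F i = 6*k6+4*k4 := by
    rw [sum_range_block F k6 4 (k6+k4) (by omega) hb4, hS1]; omega
  have hS3 : ∑ i ∈ Finset.range (k6+k4+k3), F i = 6*k6+4*k4+3*k3 := by
    rw [sum_range_block F (k6+k4) 3 (k6+k4+k3) (by omega) hb3, hS2]; omega
  have hS4 : ∑ i ∈ Finset.range (k6+k4+k3+k2), F i = 6*k6+4*k4+3*k3+2*k2 := by
    rw [sum_range_block F (k6+k4+k3) 2 (k6+k4+k3+k2) (by omega) hb2, hS3]; omega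
  have hS5 : ∑ i ∈ Finset.range (k6+k4+k3+k2+k1), F i = n := by
    rw [sum_range_block F (k6+k4+k3+k2) 1 (k6+k4+k3+k2+k1) (by omega) hb1, hS4]; omega
  refine ⟨F, ?_, ?_⟩
  · rw [sum_range_block F (k6+k4+k3+k2+k1) 0 m (by omega) (fun i hi _ => hb0 i hi)]
    rw [hS5]
    omega
  · intro s hs k hk
    have hcap : n ≤ ∑ i, cap (s i) := by rw [← hs]; exact sum_cap_ge m s
    have hL6 := sum_line m s 5 3 15 6 line6
    have hL4 := sum_line m s 7 4 14 4 line4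
    have hL3a := sum_line m s 7 4 10 3 line3a
    have hL3b := sum_line m s 1 1 1 3 line3b
    have hL2 := sum_line m s 9 5 9 2 line2
    rw [hs] at hL6 hL4 hL3a hL3b hL2
    by_cases hc6 : k < k6
    · rw [sum_range_block F 0 6 k (by omega) (fun i _ h2 => hb6 i (by omega))]
      simp only [hb6 k hc6]
      simp only [Finset.range_zero, Finset.sum_empty]
      omega
    · by_cases hc4 : k < k6+k4
      · rw [sum_range_block F k6 4 k (by omega) (fun i hi1 hi2 => hb4 i hi1 (by omega)), hS1]
        simp only [hb4 k (by omega) hc4]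
        omega
      · by_cases hc3 : k < k6+k4+k3
        · rw [sum_range_block F (k6+k4) 3 k (by omega)
            (fun i hi1 hi2 => hb3 i hi1 (by omega)), hS2]
          simp only [hb3 k (by omega) hc3]
          omega
        · by_cases hc2 : k < k6+k4+k3+k2
          · rw [sum_range_block F (k6+k4+k3) 2 k (by omega)
              (fun i hi1 hi2 => hb2 i hi1 (by omega)), hS3]
            simp only [hb2 k (by omega) hc2]
            omega
          · by_cases hc1 : k < k6+k4+k3+k2+k1
            · rw [sum_range_block F (k6+k4+k3+k2) 1 k (by omega)
                (fun i hi1 hi2 => hb1 i hi1 (by omega)), hS4]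
              simp only [hb1 k (by omega) hc1]
              have he : ∑ i : Fin m, (cap (s i) + 1 - 1) = ∑ i : Fin m, cap (s i) :=
                Finset.sum_congr rfl fun i _ => by omega
              rw [he]
              omega
            · rw [sum_range_block F (k6+k4+k3+k2+k1) 0 k (by omega)
                (fun i hi1 _ => hb0 i hi1), hS5]
              simp only [hb0 k (by omega)]
              have he : ∑ i : Fin m, (cap (s i) + 1 - 0) = (∑ i : Fin m, cap (s i)) + m := by
                simp only [Nat.sub_zero]
                rw [Finset.sum_add_distrib, Finset.sum_const, Finset.card_univ,
                  Fintype.card_fin, smul_eq_mul, mul_one]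
              rw [he]
              omega

def xA (m n p : ℕ) : ℕ := min ((9*n + m - 5 - 5*p) / (5*m)) (n - p)

def pA (m n : ℕ) : ℕ → ℕ
  | 0 => 0
  | k+1 => pA m n k + xA m n (pA m n k)

lemma pA_le (m n : ℕ) : ∀ k, pA m n k ≤ n := by
  intro k
  induction k with
  | zero => simp [pA]
  | succ k ih =>
    have h1 : xA m n (pA m n k) ≤ n - pA m n k := min_le_right _ _
    simp only [pA]
    omega

lemma pA_mono (m n : ℕ) {j k : ℕ} (h : j ≤ k) : pA m n j ≤ pA m n k := by
  induction k with
  | zero => simp_all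
  | succ k ih =>
    rcases Nat.lt_or_ge j (k+1) with h1 | h1
    · have := ih (by omega)
      simp only [pA]
      omega
    · have : j = k + 1 := by omega
      simp [this]

lemma sum_xA (m n : ℕ) : ∀ k, (∑ i ∈ Finset.range k, xA m n (pA m n i)) = pA m n k := by
  intro k
  induction k with
  | zero => simp [pA]
  | succ k ih => rw [Finset.sum_range_succ, ih]; rfl

lemma keyA (m n : ℕ) (hm : 2 ≤ m) (hn : 4*m < n) :
    (9*(n:ℤ) - 4*m - 5) * ((m:ℤ)-1)^m < (m:ℤ)^m * (4*(n:ℤ) - 4*m) := by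
  have hmR : (2:ℝ) ≤ (m:ℝ) := by exact_mod_cast hm
  have hnR : 4*(m:ℝ) + 1 ≤ (n:ℝ) := by exact_mod_cast hn
  have hmpos : (0:ℝ) < (m:ℝ) := by linarith
  have hA : (0:ℝ) ≤ 9*(n:ℝ) - 4*(m:ℝ) - 5 := by linarith
  have e1 : ((m:ℝ)-1)^m ≤ Real.exp (-1) * (m:ℝ)^m := by
    have h1 : (1 - 1/(m:ℝ)) ≤ Real.exp (-(1/(m:ℝ))) := by
      have := Real.add_one_le_exp (-(1/(m:ℝ)))
      linarith
    have h0 : (0:ℝ) ≤ 1 - 1/(m:ℝ) := by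
      rw [sub_nonneg, div_le_one hmpos]
      linarith
    have h2 : (1 - 1/(m:ℝ))^m ≤ (Real.exp (-(1/(m:ℝ))))^m := pow_le_pow_left₀ h0 h1 m
    have h3 : (Real.exp (-(1/(m:ℝ))))^m = Real.exp (-1) := by
      rw [← Real.exp_nat_mul]
      congr 1
      field_simp
    have h4 : ((m:ℝ)-1)^m = (m:ℝ)^m * (1 - 1/(m:ℝ))^m := by
      rw [← mul_pow]
      congr 1
      field_simp
    calc ((m:ℝ)-1)^m = (m:ℝ)^m * (1 - 1/(m:ℝ))^m := h4
      _ ≤ (m:ℝ)^m * Real.exp (-1) := by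
          apply mul_le_mul_of_nonneg_left _ (by positivity)
          rw [← h3]
          exact h2
      _ = Real.exp (-1) * (m:ℝ)^m := by ring
  have e2 : Real.exp (-1) * (9*(n:ℝ) - 4*m - 5) < 4*(n:ℝ) - 4*m := by
    have hexp : (2.7182818283:ℝ) < Real.exp 1 := Real.exp_one_gt_d9
    have hlt : 9*(n:ℝ) - 4*m - 5 < Real.exp 1 * (4*(n:ℝ) - 4*m) := by nlinarith
    have hepos : (0:ℝ) < Real.exp (-1) := Real.exp_pos _
    have h5 := mul_lt_mul_of_pos_left hlt hepos
    calc Real.exp (-1) * (9*(n:ℝ) - 4*m - 5) < Real.exp (-1) * (Real.exp 1 * (4*(n:ℝ) - 4*m)) := h5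
      _ = 4*(n:ℝ) - 4*m := by
          rw [← mul_assoc, Real.exp_neg, inv_mul_cancel₀ (Real.exp_ne_zero 1), one_mul]
  have hfinal : (9*(n:ℝ) - 4*m - 5) * ((m:ℝ)-1)^m < (m:ℝ)^m * (4*(n:ℝ) - 4*m) := by
    calc (9*(n:ℝ)-4*m-5) * ((m:ℝ)-1)^m ≤ (9*(n:ℝ)-4*m-5) * (Real.exp (-1) * (m:ℝ)^m) :=
        mul_le_mul_of_nonneg_left e1 hA
      _ = (Real.exp (-1) * (9*(n:ℝ)-4*m-5)) * (m:ℝ)^m := by ring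
      _ < (4*(n:ℝ)-4*m) * (m:ℝ)^m := by
          exact mul_lt_mul_of_pos_right e2 (by positivity)
      _ = (m:ℝ)^m * (4*(n:ℝ)-4*m) := by ring
  exact_mod_cast hfinal

lemma pA_eq (m n : ℕ) (hm : 1 ≤ m) (hn : 4*m < n) : pA m n m = n := by
  rcases Nat.eq_or_lt_of_le hm with hm1 | hm2
  · -- m = 1
    subst hm1
    have h1 : pA 1 n 1 = pA 1 n 0 + xA 1 n (pA 1 n 0) := rfl
    have h0 : pA 1 n 0 = 0 := rfl
    rw [h1, h0]
    unfold xA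
    omega
  · by_contra hne
    have hlt : pA m n m < n := lt_of_le_of_ne (pA_le m n m) hne
    set wZ : ℕ → ℤ := fun k => 9*(n:ℤ) + m - 5*m - 5 - 5*(pA m n k : ℤ) with hwZ
    have hstep : ∀ k, k < m → (m:ℤ) * wZ (k+1) ≤ ((m:ℤ)-1) * wZ k := by
      intro k hk
      have hple : pA m n k ≤ n := pA_le m n k
      have hk1 : pA m n (k+1) < n := lt_of_le_of_lt (pA_mono m n (by omega)) hlt
      set p := pA m n k with hp
      set z := 9*n + m - 5 - 5*p with hz
      set q := z / (5*m) with hq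
      have hdef : pA m n (k+1) = p + min q (n - p) := rfl
      have hminq : min q (n - p) = q := by omega
      have hzq := Nat.div_add_mod z (5*m)
      have hzr : z % (5*m) < 5*m := Nat.mod_lt _ (by omega)
      have hzq2 : 5*(m*q) + z % (5*m) = z := by rw [hq, ← mul_assoc]; exact hzq
      have hzc : 5*((m:ℤ)*(q:ℤ)) + ((z % (5*m) : ℕ):ℤ) = (z:ℤ) := by exact_mod_cast hzq2
      have hzZ : (z:ℤ) = 9*(n:ℤ) + m - 5 - 5*(p:ℤ) := by omega
      have hW : wZ k = (z:ℤ) - 5*m := by rw [hwZ, hzZ]; ring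
      have hW1 : wZ (k+1) = wZ k - 5*(q:ℤ) := by
        simp only [hwZ]
        rw [hdef, hminq]
        push_cast
        ring
      have hWq : wZ k + 1 ≤ 5*((m:ℤ)*(q:ℤ)) := by
        rw [hW, ← hzc]
        have : ((z % (5*m) : ℕ):ℤ) < 5*m := by exact_mod_cast hzr
        linarith
      have e1 : (m:ℤ) * (wZ k - 5*(q:ℤ)) = (m:ℤ)*(wZ k) - 5*((m:ℤ)*(q:ℤ)) := by ring
      have e2 : ((m:ℤ)-1) * wZ k = (m:ℤ)*(wZ k) - wZ k := by ring
      rw [hW1]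
      linarith
    have hpow : ∀ k, k ≤ m → (m:ℤ)^k * wZ k ≤ wZ 0 * ((m:ℤ)-1)^k := by
      intro k
      induction k with
      | zero => intro _; simp
      | succ k ih =>
        intro hk1
        have hmk : ((0:ℤ)) ≤ ((m:ℤ)-1) := by
          have : (1:ℤ) ≤ (m:ℤ) := by exact_mod_cast hm
          linarith
        calc (m:ℤ)^(k+1) * wZ (k+1) = (m:ℤ)^k * ((m:ℤ) * wZ (k+1)) := by ring
          _ ≤ (m:ℤ)^k * (((m:ℤ)-1) * wZ k) := by
              apply mul_le_mul_of_nonneg_left (hstep k (by omega))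
              positivity
          _ = ((m:ℤ)-1) * ((m:ℤ)^k * wZ k) := by ring
          _ ≤ ((m:ℤ)-1) * (wZ 0 * ((m:ℤ)-1)^k) := by
              apply mul_le_mul_of_nonneg_left (ih (by omega)) hmk
          _ = wZ 0 * ((m:ℤ)-1)^(k+1) := by ring
    have h5 := hpow m le_rfl
    have h7 : wZ 0 = 9*(n:ℤ) - 4*m - 5 := by
      simp only [hwZ, pA]
      push_cast
      ring
    have h4 : 4*(n:ℤ) - 4*m ≤ wZ m := by
      simp only [hwZ]
      have : (pA m n m : ℤ) < (n:ℤ) := by exact_mod_cast hlt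
      linarith
    have h6 : (m:ℤ)^m * (4*(n:ℤ) - 4*m) ≤ (m:ℤ)^m * wZ m :=
      mul_le_mul_of_nonneg_left h4 (by positivity)
    have h8 := keyA m n hm2 hn
    rw [h7] at h5
    linarith

lemma regimeA (m n : ℕ) (hm : 1 ≤ m) (hn : 4*m < n) :
    ∃ f : ℕ → ℕ, (∑ i ∈ Finset.range m, f i) = n ∧
      ∀ s : Fin m → ℕ, (∑ i, s i) = n → ∀ k, k < m →
        (∑ i ∈ Finset.range k, f i) < ∑ i : Fin m, (cap (s i) + 1 - f k) := by
  refine ⟨fun k => xA m n (pA m n k), ?_, ?_⟩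
  · rw [sum_xA m n m]
    exact pA_eq m n hm hn
  · intro s hs k hk
    show (∑ i ∈ Finset.range k, xA m n (pA m n i)) <
      ∑ i : Fin m, (cap (s i) + 1 - xA m n (pA m n k))
    rw [sum_xA m n k]
    set p := pA m n k with hp
    set v := xA m n p with hv
    have hple : p ≤ n := pA_le m n k
    by_cases hv0 : v = 0
    · have he : ∑ i : Fin m, (cap (s i) + 1 - v) = (∑ i : Fin m, cap (s i)) + m := by
        simp only [hv0, Nat.sub_zero]
        rw [Finset.sum_add_distrib, Finset.sum_const, Finset.card_univ, Fintype.card_fin,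
          smul_eq_mul, mul_one]
      rw [he]
      have hc : n ≤ ∑ i, cap (s i) := by rw [← hs]; exact sum_cap_ge m s
      omega
    · have hv1 : 1 ≤ v := by omega
      -- generic line sum
      have hGA : 9*n + m ≤ m*(5*v) + 5*(∑ i, (cap (s i) + 1 - v)) := by
        have hpt : ∀ i ∈ (Finset.univ : Finset (Fin m)),
            9 * s i + 1 ≤ 5*v + 5*(cap (s i) + 1 - v) := fun i _ => line_gen v (s i) hv1
        have h1 := Finset.sum_le_sum hpt
        have h2 : ∑ i : Fin m, (9 * s i + 1) = 9*n + m := by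
          rw [Finset.sum_add_distrib, ← Finset.mul_sum, hs, Finset.sum_const,
            Finset.card_univ, Fintype.card_fin, smul_eq_mul, mul_one]
        have h3 : ∑ i : Fin m, (5*v + 5*(cap (s i) + 1 - v))
            = m*(5*v) + 5*(∑ i, (cap (s i) + 1 - v)) := by
          rw [Finset.sum_add_distrib, Finset.sum_const, Finset.card_univ, Fintype.card_fin,
            smul_eq_mul, ← Finset.mul_sum]
        linarith [h1, h2, h3]
      have ht1 : v * (5*m) ≤ 9*n + m - 5 - 5*p := by
        have hq : v ≤ (9*n + m - 5 - 5*p) / (5*m) := min_le_left _ _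
        calc v * (5*m) ≤ ((9*n + m - 5 - 5*p) / (5*m)) * (5*m) :=
            Nat.mul_le_mul_right _ hq
          _ ≤ 9*n + m - 5 - 5*p := Nat.div_mul_le_self _ _
      obtain ⟨V, hV⟩ : ∃ V, V = v*(5*m) := ⟨_, rfl⟩
      have ht1' : V ≤ 9*n + m - 5 - 5*p := hV ▸ ht1
      have ht2 : V + 5*p + 5 ≤ 9*n + m := by omega
      have hVG : m*(5*v) = V := by rw [hV]; ring
      rw [hVG] at hGA
      clear_value p v
      clear hv hp hv0 hv1 ht1 ht1' hV hVG
      omega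


end UnitJobs

/-- There is an algorithm for speed-robust scheduling with unit-size jobs with
robustness factor at most 1.8 for every m. -/
theorem unit_jobs_nine_fifths_robust (m n : ℕ) (hm : 1 ≤ m) (hn : 1 ≤ n) :
    ∃ x : Fin m → ℕ, (∑ k, x k) = n ∧
      ∀ s : Fin m → ℕ, (∑ i, s i) = n →
        ∃ σ : Fin m → Fin m, ∀ i : Fin m,
          ∑ k ∈ Finset.univ.filter (fun k => σ k = i), (x k : ℝ) ≤
            (9 / 5) * (s i : ℝ) := by
  rcases le_or_gt n m with h | h
  · obtain ⟨f, h1, h2⟩ := UnitJobs.regime_triv m n hm h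
    exact UnitJobs.robust_of_cond m n hm f h1 h2
  · rcases le_or_gt n (4*m) with h4 | h4
    · obtain ⟨f, h1, h2⟩ := UnitJobs.regimeB m n h h4
      exact UnitJobs.robust_of_cond m n hm f h1 h2
    · obtain ⟨f, h1, h2⟩ := UnitJobs.regimeA m n hm h4
      exact UnitJobs.robust_of_cond m n hm f h1 h2
end

section
/- For every integer n ≥ 1 there exists x : Fin 2 → ℕ with x_1 + x_2 = n such that for every M : Fin 2 → ℕ with M_1 + M_2 = n there exists an assignment σ : Fin 2 → Fin 2 with ∑_{k : σ(k)=i} x_k ≤ (4/3) · M_i for both machines i. (There is a 4/3-robust algorithm for speed-robust scheduling of unit-size jobs on m = 2 machines, matching the lower bound ρ(2) = 4/3.) -/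
/-- There is a 4/3-robust algorithm for speed-robust scheduling of unit-size jobs on
m = 2 machines. -/
theorem two_machines_four_thirds (n : ℕ) (hn : 1 ≤ n) :
    ∃ x : Fin 2 → ℕ, x 0 + x 1 = n ∧
      ∀ M : Fin 2 → ℕ, M 0 + M 1 = n →
        ∃ σ : Fin 2 → Fin 2, ∀ i : Fin 2,
          ∑ k ∈ Finset.univ.filter (fun k => σ k = i), (x k : ℝ) ≤
            (4 / 3) * (M i : ℝ) := by
  have key : ∀ (L m : ℕ), 3 * L ≤ 4 * m → (L : ℝ) ≤ 4 / 3 * (m : ℝ) := by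
    intro L m h
    have h' : ((3 * L : ℕ) : ℝ) ≤ ((4 * m : ℕ) : ℝ) := by exact_mod_cast h
    push_cast at h'
    linarith
  obtain ⟨s, hA, hB, hC⟩ :
      ∃ s : ℕ, 4 * (n / 2) ≤ 3 * s + n ∧ 3 * s ≤ 4 * (n / 4) + 4 ∧ 2 * s ≤ n :=
    ⟨(2 * (n / 2) + 2) / 3, by omega, by omega, by omega⟩
  refine ⟨![s, n - s], by simp; omega, ?_⟩
  intro M hM
  rcases le_or_gt (3 * n) (4 * M 0) with h0 | h0
  · refine ⟨fun _ => 0, ?_⟩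
    intro i
    fin_cases i
    · simp only [Finset.sum_filter, Fin.sum_univ_two]
      have := key (s + (n - s)) (M 0) (by omega)
      push_cast at this ⊢
      simpa using this
    · simp only [Finset.sum_filter, Fin.sum_univ_two]
      have h1 : (0 : ℝ) ≤ 4 / 3 * (M 1 : ℝ) := by positivity
      simp [h1]
  rcases le_or_gt (3 * n) (4 * M 1) with h1 | h1
  · refine ⟨fun _ => 1, ?_⟩
    intro i
    fin_cases i
    · simp only [Finset.sum_filter, Fin.sum_univ_two]
      have h2 : (0 : ℝ) ≤ 4 / 3 * (M 0 : ℝ) := by positivity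
      simp [h2]
    · simp only [Finset.sum_filter, Fin.sum_univ_two]
      have := key (s + (n - s)) (M 1) (by omega)
      push_cast at this ⊢
      simpa using this
  rcases le_or_gt (M 0) (M 1) with hle | hle
  · have hca : M 0 ≤ n / 2 := by omega
    have hcb : n / 4 + 1 ≤ M 0 := by omega
    refine ⟨![0, 1], ?_⟩
    intro i
    fin_cases i
    · have := key s (M 0) (by omega)
      simp only [Finset.sum_filter, Fin.sum_univ_two]
      simpa using this
    · have := key (n - s) (M 1) (by omega)
      simp only [Finset.sum_filter, Fin.sum_univ_two]
      simpa using this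
  · have hca : M 1 ≤ n / 2 := by omega
    have hcb : n / 4 + 1 ≤ M 1 := by omega
    refine ⟨![1, 0], ?_⟩
    intro i
    fin_cases i
    · have := key (n - s) (M 0) (by omega)
      simp only [Finset.sum_filter, Fin.sum_univ_two]
      simpa using this
    · have := key s (M 1) (by omega)
      simp only [Finset.sum_filter, Fin.sum_univ_two]
      simpa using this
end

section
/- For every integer n > 3 there exists x : Fin 3 → ℕ with x_1 + x_2 + x_3 = n such that for every M : Fin 3 → ℕ with M_1 + M_2 + M_3 = n there exists an assignment σ : Fin 3 → Fin 3 with ∑_{k : σ(k)=i} x_k ≤ (3/2) · M_i for all machines i. (There is a 3/2-robust algorithm for speed-robust scheduling of unit-size jobs on m = 3 machines, matching the lower bound 3/2.) -/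
lemma sortedD (n a b c A B C : ℕ) (hn : 3 < n) (ha : a = (n+3)/6) (hb : b = (n+1)/3)
    (hc : c = n - a - b) (hM : A + B + C = n) (hAB : B ≤ A) (hBC : C ≤ B) :
    (2*(a+c) ≤ 3*A ∧ 2*b ≤ 3*B) ∨ (2*c ≤ 3*A ∧ 2*b ≤ 3*B ∧ 2*a ≤ 3*C) ∨
    (2*(a+b+c) ≤ 3*A) ∨ (2*(b+c) ≤ 3*A ∧ 2*a ≤ 3*B) := by
  omega

lemma exkey (n : ℕ) (hn : 3 < n) (M : Fin 3 → ℕ) (hM : M 0 + M 1 + M 2 = n) :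
    ∃ s : Fin 3 → Fin 3, ∀ i : Fin 3,
      2 * ((if s 0 = i then (n+3)/6 else 0) + (if s 1 = i then (n+1)/3 else 0) +
        (if s 2 = i then n - (n+3)/6 - (n+1)/3 else 0)) ≤ 3 * M i := by
  set a := (n+3)/6 with ha
  set b := (n+1)/3 with hb
  set c := n - (n+3)/6 - (n+1)/3 with hc
  have hcc : c = n - a - b := by omega
  rcases le_total (M 0) (M 1) with h01 | h01 <;>
    rcases le_total (M 0) (M 2) with h02 | h02 <;>
      rcases le_total (M 1) (M 2) with h12 | h12
  · have h := sortedD n a b c (M 2) (M 1) (M 0) hn ha hb hcc (by omega) (by omega) (by omega)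
    rcases h with ⟨h1,h2⟩|⟨h1,h2,h3⟩|h1|⟨h1,h2⟩
    · exact ⟨![2,1,2], by intro i; fin_cases i <;> simp <;> omega⟩
    · exact ⟨![0,1,2], by intro i; fin_cases i <;> simp <;> omega⟩
    · exact ⟨![2,2,2], by intro i; fin_cases i <;> simp <;> omega⟩
    · exact ⟨![1,2,2], by intro i; fin_cases i <;> simp <;> omega⟩
  · have h := sortedD n a b c (M 1) (M 2) (M 0) hn ha hb hcc (by omega) (by omega) (by omega)
    rcases h with ⟨h1,h2⟩|⟨h1,h2,h3⟩|h1|⟨h1,h2⟩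
    · exact ⟨![1,2,1], by intro i; fin_cases i <;> simp <;> omega⟩
    · exact ⟨![0,2,1], by intro i; fin_cases i <;> simp <;> omega⟩
    · exact ⟨![1,1,1], by intro i; fin_cases i <;> simp <;> omega⟩
    · exact ⟨![2,1,1], by intro i; fin_cases i <;> simp <;> omega⟩
  · have h := sortedD n a b c (M 1) (M 0) (M 2) hn ha hb hcc (by omega) (by omega) (by omega)
    rcases h with ⟨h1,h2⟩|⟨h1,h2,h3⟩|h1|⟨h1,h2⟩
    · exact ⟨![1,0,1], by intro i; fin_cases i <;> simp <;> omega⟩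
    · exact ⟨![2,0,1], by intro i; fin_cases i <;> simp <;> omega⟩
    · exact ⟨![1,1,1], by intro i; fin_cases i <;> simp <;> omega⟩
    · exact ⟨![0,1,1], by intro i; fin_cases i <;> simp <;> omega⟩
  · have h := sortedD n a b c (M 1) (M 0) (M 2) hn ha hb hcc (by omega) (by omega) (by omega)
    rcases h with ⟨h1,h2⟩|⟨h1,h2,h3⟩|h1|⟨h1,h2⟩
    · exact ⟨![1,0,1], by intro i; fin_cases i <;> simp <;> omega⟩
    · exact ⟨![2,0,1], by intro i; fin_cases i <;> simp <;> omega⟩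
    · exact ⟨![1,1,1], by intro i; fin_cases i <;> simp <;> omega⟩
    · exact ⟨![0,1,1], by intro i; fin_cases i <;> simp <;> omega⟩
  · have h := sortedD n a b c (M 2) (M 0) (M 1) hn ha hb hcc (by omega) (by omega) (by omega)
    rcases h with ⟨h1,h2⟩|⟨h1,h2,h3⟩|h1|⟨h1,h2⟩
    · exact ⟨![2,0,2], by intro i; fin_cases i <;> simp <;> omega⟩
    · exact ⟨![1,0,2], by intro i; fin_cases i <;> simp <;> omega⟩
    · exact ⟨![2,2,2], by intro i; fin_cases i <;> simp <;> omega⟩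
    · exact ⟨![0,2,2], by intro i; fin_cases i <;> simp <;> omega⟩
  · have h := sortedD n a b c (M 2) (M 0) (M 1) hn ha hb hcc (by omega) (by omega) (by omega)
    rcases h with ⟨h1,h2⟩|⟨h1,h2,h3⟩|h1|⟨h1,h2⟩
    · exact ⟨![2,0,2], by intro i; fin_cases i <;> simp <;> omega⟩
    · exact ⟨![1,0,2], by intro i; fin_cases i <;> simp <;> omega⟩
    · exact ⟨![2,2,2], by intro i; fin_cases i <;> simp <;> omega⟩
    · exact ⟨![0,2,2], by intro i; fin_cases i <;> simp <;> omega⟩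
  · have h := sortedD n a b c (M 0) (M 2) (M 1) hn ha hb hcc (by omega) (by omega) (by omega)
    rcases h with ⟨h1,h2⟩|⟨h1,h2,h3⟩|h1|⟨h1,h2⟩
    · exact ⟨![0,2,0], by intro i; fin_cases i <;> simp <;> omega⟩
    · exact ⟨![1,2,0], by intro i; fin_cases i <;> simp <;> omega⟩
    · exact ⟨![0,0,0], by intro i; fin_cases i <;> simp <;> omega⟩
    · exact ⟨![2,0,0], by intro i; fin_cases i <;> simp <;> omega⟩
  · have h := sortedD n a b c (M 0) (M 1) (M 2) hn ha hb hcc (by omega) (by omega) (by omega)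
    rcases h with ⟨h1,h2⟩|⟨h1,h2,h3⟩|h1|⟨h1,h2⟩
    · exact ⟨![0,1,0], by intro i; fin_cases i <;> simp <;> omega⟩
    · exact ⟨![2,1,0], by intro i; fin_cases i <;> simp <;> omega⟩
    · exact ⟨![0,0,0], by intro i; fin_cases i <;> simp <;> omega⟩
    · exact ⟨![1,0,0], by intro i; fin_cases i <;> simp <;> omega⟩

/-- There is a 3/2-robust algorithm for speed-robust scheduling of unit-size jobs on
m = 3 machines. -/
theorem three_machines_three_halves (n : ℕ) (hn : 3 < n) :
    ∃ x : Fin 3 → ℕ, x 0 + x 1 + x 2 = n ∧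
      ∀ M : Fin 3 → ℕ, M 0 + M 1 + M 2 = n →
        ∃ σ : Fin 3 → Fin 3, ∀ i : Fin 3,
          ∑ k ∈ Finset.univ.filter (fun k => σ k = i), (x k : ℝ) ≤
            (3 / 2) * (M i : ℝ) := by
  refine ⟨![(n+3)/6, (n+1)/3, n - (n+3)/6 - (n+1)/3], by simp; omega, ?_⟩
  intro M hM
  obtain ⟨s, hs⟩ := exkey n hn M hM
  refine ⟨s, fun i => ?_⟩
  have hnat : ∑ k ∈ Finset.univ.filter (fun k => s k = i),
      (![(n+3)/6, (n+1)/3, n - (n+3)/6 - (n+1)/3]) k =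
      (if s 0 = i then (n+3)/6 else 0) + (if s 1 = i then (n+1)/3 else 0) +
        (if s 2 = i then n - (n+3)/6 - (n+1)/3 else 0) := by
    rw [Finset.sum_filter, Fin.sum_univ_three]
    simp
  have h2 := hs i
  rw [← hnat] at h2
  have hcast : ∑ k ∈ Finset.univ.filter (fun k => s k = i),
      ((![(n+3)/6, (n+1)/3, n - (n+3)/6 - (n+1)/3]) k : ℝ) =
      ((∑ k ∈ Finset.univ.filter (fun k => s k = i),
        (![(n+3)/6, (n+1)/3, n - (n+3)/6 - (n+1)/3]) k : ℕ) : ℝ) := by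
    push_cast; rfl
  rw [hcast]
  have h3 := (Nat.cast_le (α := ℝ)).2 h2
  push_cast at h3
  linarith
end
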